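/- arXiv:2009.14183 — 7 statements merged into one kernel-verified Lean document; each statement's English description precedes it below -/
import Mathlib

section
/- Let k be a field of characteristic 5 and let f = z^2 + x^3 + y^5 in k[x,y,z]. Then the Tjurina algebra k[x,y,z]/(f, ∂f/∂x, ∂f/∂y, ∂f/∂z) is a k-vector space of dimension 10. -/
open MvPolynomial

namespace TjurinaE8Aux

/-- The exponents of the monomial generators `x^2, y^5, z`. -/
def S : Set (Fin 3 →₀ ℕ) :=
  {Finsupp.single 0 2, Finsupp.single 1 5, Finsupp.single 2 1}

/-- The exponents of the basis monomials `x^a y^b`. -/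
noncomputable def e (i : Fin 2 × Fin 5) : Fin 3 →₀ ℕ :=
  Finsupp.single 0 (i.1 : ℕ) + Finsupp.single 1 (i.2 : ℕ)

lemma e_apply0 (i : Fin 2 × Fin 5) : e i 0 = i.1 := by
  simp [e, Finsupp.single_apply]

lemma e_apply1 (i : Fin 2 × Fin 5) : e i 1 = i.2 := by
  simp [e, Finsupp.single_apply]

lemma e_apply2 (i : Fin 2 × Fin 5) : e i 2 = 0 := by
  simp [e, Finsupp.single_apply]

lemma e_inj : Function.Injective e := by
  intro i j h
  have h0 : (i.1 : ℕ) = j.1 := by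
    rw [← e_apply0 i, ← e_apply0 j, h]
  have h1 : (i.2 : ℕ) = j.2 := by
    rw [← e_apply1 i, ← e_apply1 j, h]
  exact Prod.ext (Fin.val_injective h0) (Fin.val_injective h1)

end TjurinaE8Aux

open TjurinaE8Aux in
/-- The Tjurina algebra of `z^2 + x^3 + y^5` in characteristic 5 has dimension 10
    (the rational double point `E_8^0`). Variables: `X 0 = x`, `X 1 = y`, `X 2 = z`. -/
theorem tjurina_E8_0_char5 (k : Type*) [Field k] [CharP k 5]
    (f : MvPolynomial (Fin 3) k)
    (hf : f = X 2 ^ 2 + X 0 ^ 3 + X 1 ^ 5) :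
    Module.finrank k
      (MvPolynomial (Fin 3) k ⧸
        (Ideal.span {f, pderiv 0 f, pderiv 1 f, pderiv 2 f} :
          Ideal (MvPolynomial (Fin 3) k))) = 10 := by
  classical
  have h3 : (3 : k) ≠ 0 := by
    intro h
    have := (CharP.cast_eq_zero_iff k 5 3).mp (by exact_mod_cast h)
    omega
  have h2 : (2 : k) ≠ 0 := by
    intro h
    have := (CharP.cast_eq_zero_iff k 5 2).mp (by exact_mod_cast h)
    omega
  have hC3 : (C (3:k) : MvPolynomial (Fin 3) k) = 3 := map_ofNat C 3
  have hC2 : (C (2:k) : MvPolynomial (Fin 3) k) = 2 := map_ofNat C 2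
  have hp0 : pderiv 0 f = C (3:k) * X 0 ^ 2 := by rw [hf, hC3]; simp
  have hp2 : pderiv 2 f = C (2:k) * X 2 := by rw [hf, hC2]; simp
  have hp1 : pderiv 1 f = 0 := by
    have h5 : (5 : MvPolynomial (Fin 3) k) = 0 := by
      exact_mod_cast CharP.cast_eq_zero (MvPolynomial (Fin 3) k) 5
    rw [hf]
    simp [h5]
  have hx2 : (monomial (Finsupp.single 0 2) (1:k) : MvPolynomial (Fin 3) k) = X 0 ^ 2 :=
    X_pow_eq_monomial.symm
  have hy5 : (monomial (Finsupp.single 1 5) (1:k) : MvPolynomial (Fin 3) k) = X 1 ^ 5 :=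
    X_pow_eq_monomial.symm
  have hz : (monomial (Finsupp.single 2 1) (1:k) : MvPolynomial (Fin 3) k) = X 2 := by
    rw [← X_pow_eq_monomial, pow_one]
  set J : Ideal (MvPolynomial (Fin 3) k) :=
    Ideal.span ((fun s => monomial s (1:k)) '' S) with hJ
  have himg : (fun s => monomial s (1:k)) '' S
      = ({X 0 ^ 2, X 1 ^ 5, X 2} : Set (MvPolynomial (Fin 3) k)) := by
    rw [S, Set.image_insert_eq, Set.image_insert_eq, Set.image_singleton, hx2, hy5, hz]
  have hx2J : X 0 ^ 2 ∈ J := by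
    rw [hJ, himg]; exact Ideal.subset_span (by simp)
  have hy5J : X 1 ^ 5 ∈ J := by
    rw [hJ, himg]; exact Ideal.subset_span (by simp)
  have hzJ : X 2 ∈ J := by
    rw [hJ, himg]; exact Ideal.subset_span (by simp)
  have hIJ : Ideal.span {f, pderiv 0 f, pderiv 1 f, pderiv 2 f} = J := by
    apply le_antisymm
    · rw [Ideal.span_le]
      rintro p hp
      simp only [Set.mem_insert_iff, Set.mem_singleton_iff] at hp
      rcases hp with rfl | rfl | rfl | rfl
      · rw [hf]
        refine add_mem (add_mem ?_ ?_) hy5J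
        · rw [pow_two]; exact Ideal.mul_mem_right _ _ hzJ
        · rw [pow_succ]; exact Ideal.mul_mem_right _ _ hx2J
      · rw [hp0]; exact Ideal.mul_mem_left _ _ hx2J
      · rw [hp1]; exact zero_mem _
      · rw [hp2]; exact Ideal.mul_mem_left _ _ hzJ
    · set I : Ideal (MvPolynomial (Fin 3) k) :=
        Ideal.span {f, pderiv 0 f, pderiv 1 f, pderiv 2 f} with hI
      have hfI : f ∈ I := Ideal.subset_span (by simp)
      have hp0I : pderiv 0 f ∈ I := Ideal.subset_span (by simp)
      have hp2I : pderiv 2 f ∈ I := Ideal.subset_span (by simp)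
      have hx2I : X 0 ^ 2 ∈ I := by
        have h := Ideal.mul_mem_left _ (C (3:k)⁻¹) hp0I
        rwa [hp0, ← mul_assoc, ← C_mul, inv_mul_cancel₀ h3, C_1, one_mul] at h
      have hzI : X 2 ∈ I := by
        have h := Ideal.mul_mem_left _ (C (2:k)⁻¹) hp2I
        rwa [hp2, ← mul_assoc, ← C_mul, inv_mul_cancel₀ h2, C_1, one_mul] at h
      have hy5I : X 1 ^ 5 ∈ I := by
        have h : X 1 ^ 5 = f - X 2 ^ 2 - X 0 ^ 3 := by rw [hf]; ring
        rw [h]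
        refine sub_mem (sub_mem hfI ?_) ?_
        · rw [pow_two]; exact Ideal.mul_mem_right _ _ hzI
        · rw [pow_succ]; exact Ideal.mul_mem_right _ _ hx2I
      rw [hJ, himg, Ideal.span_le]
      rintro p hp
      simp only [Set.mem_insert_iff, Set.mem_singleton_iff] at hp
      rcases hp with rfl | rfl | rfl <;> assumption
  rw [hIJ]
  -- now compute the rank of the quotient by the monomial ideal J
  set v : Fin 2 × Fin 5 → (MvPolynomial (Fin 3) k ⧸ J) :=
    fun i => Ideal.Quotient.mk J (monomial (e i) 1) with hv
  have hmk_smul : ∀ (c : k) (p : MvPolynomial (Fin 3) k),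
      Ideal.Quotient.mk J (c • p) = c • Ideal.Quotient.mk J p := by
    intro c p
    exact map_smul (Ideal.Quotient.mkₐ k J) c p
  have hind : LinearIndependent k v := by
    rw [linearIndependent_iff']
    intro t g hg i hi
    have hmem : (∑ j ∈ t, monomial (e j) (g j)) ∈ J := by
      have h0 : Ideal.Quotient.mk J (∑ j ∈ t, monomial (e j) (g j)) = 0 := by
        rw [map_sum, ← hg]
        refine Finset.sum_congr rfl fun j _ => ?_
        rw [show (monomial (e j) (g j) : MvPolynomial (Fin 3) k)
            = g j • monomial (e j) 1 by rw [smul_monomial, smul_eq_mul, mul_one], hmk_smul]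
      exact Ideal.Quotient.eq_zero_iff_mem.mp h0
    rw [hJ, mem_ideal_span_monomial_image] at hmem
    by_contra hgi
    have hsupp : e i ∈ (∑ j ∈ t, monomial (e j) (g j)).support := by
      rw [mem_support_iff, coeff_sum]
      have : ∑ j ∈ t, coeff (e i) (monomial (e j) (g j)) = g i := by
        rw [Finset.sum_eq_single i]
        · simp [coeff_monomial]
        · intro j hj hji
          rw [coeff_monomial, if_neg (fun h => hji (e_inj h))]
        · intro h; exact absurd hi h
      rw [this]; exact hgi
    obtain ⟨s, hs, hle⟩ := hmem _ hsupp
    rcases hs with rfl | rfl | rfl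
    · have := Finsupp.le_def.mp hle 0
      rw [Finsupp.single_eq_same, e_apply0] at this
      omega
    · have := Finsupp.le_def.mp hle 1
      rw [Finsupp.single_eq_same, e_apply1] at this
      omega
    · have := Finsupp.le_def.mp hle 2
      rw [Finsupp.single_eq_same, e_apply2] at this
      omega
  have hsp : ⊤ ≤ Submodule.span k (Set.range v) := by
    rintro x -
    obtain ⟨p, rfl⟩ := Ideal.Quotient.mk_surjective x
    rw [as_sum p, map_sum]
    refine Submodule.sum_mem _ fun d hd => ?_
    rw [show (monomial d (coeff d p) : MvPolynomial (Fin 3) k)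
        = coeff d p • monomial d 1 by rw [smul_monomial, smul_eq_mul, mul_one], hmk_smul]
    refine Submodule.smul_mem _ _ ?_
    by_cases hdom : ∃ s ∈ S, s ≤ d
    · have hmemJ : (monomial d (1:k) : MvPolynomial (Fin 3) k) ∈ J := by
        rw [hJ, mem_ideal_span_monomial_image]
        intro xi hxi
        rw [support_monomial, if_neg one_ne_zero, Finset.mem_singleton] at hxi
        subst hxi
        exact hdom
      rw [Ideal.Quotient.eq_zero_iff_mem.mpr hmemJ]
      exact Submodule.zero_mem _
    · push_neg at hdom
      have h0 : d 0 < 2 := by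
        by_contra h
        push_neg at h
        exact absurd (Finsupp.single_le_iff.mpr h)
          (hdom _ (by simp [S]))
      have h1 : d 1 < 5 := by
        by_contra h
        push_neg at h
        exact absurd (Finsupp.single_le_iff.mpr h)
          (hdom _ (by simp [S]))
      have h2' : d 2 = 0 := by
        by_contra h
        exact absurd (Finsupp.single_le_iff.mpr (Nat.one_le_iff_ne_zero.mpr h))
          (hdom _ (by simp [S]))
      have hd' : d = e (⟨d 0, h0⟩, ⟨d 1, h1⟩) := by
        ext j
        fin_cases j
        · exact (e_apply0 (⟨d 0, h0⟩, ⟨d 1, h1⟩)).symm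
        · exact (e_apply1 (⟨d 0, h0⟩, ⟨d 1, h1⟩)).symm
        · exact h2'.trans (e_apply2 _).symm
      rw [hd']
      exact Submodule.subset_span (Set.mem_range_self _)
  let b : Module.Basis (Fin 2 × Fin 5) k (MvPolynomial (Fin 3) k ⧸ J) := Module.Basis.mk hind hsp
  rw [Module.finrank_eq_card_basis b]
  simp
end

section
/- Let k be a field of characteristic 5 and let f = z^2 + x^3 + y^5 + x y^4 in k[x,y,z]. Then the Tjurina algebra k[x,y,z]/(f, ∂f/∂x, ∂f/∂y, ∂f/∂z) is a k-vector space of dimension 8. -/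
open MvPolynomial Finsupp

set_option linter.unusedSectionVars false

namespace TjE8

variable (k : Type*) [Field k] [CharP k 5]

local notation "Pk" => MvPolynomial (Fin 3) k

noncomputable def g1 : MvPolynomial (Fin 3) k := X 0 ^ 2 + 2 * X 1 ^ 4
noncomputable def g2 : MvPolynomial (Fin 3) k := X 0 * X 1 ^ 3
noncomputable def g3 : MvPolynomial (Fin 3) k := X 1 ^ 5

noncomputable def J : Ideal (MvPolynomial (Fin 3) k) :=
  Ideal.span {X 2, g1 k, g2 k, g3 k}

variable {k}

lemma hX2 : (X 2 : Pk) ∈ J k := Ideal.subset_span (by simp)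
lemma hg1 : g1 k ∈ J k := Ideal.subset_span (by simp)
lemma hg2 : g2 k ∈ J k := Ideal.subset_span (by simp)
lemma hg3 : g3 k ∈ J k := Ideal.subset_span (by simp)

lemma five_eq_zero : (5 : Pk) = 0 := by
  have := CharP.cast_eq_zero (MvPolynomial (Fin 3) k) 5
  simpa using this

lemma span_eq (f : MvPolynomial (Fin 3) k)
    (hf : f = X 2 ^ 2 + X 0 ^ 3 + X 1 ^ 5 + X 0 * X 1 ^ 4) :
    Ideal.span {f, pderiv 0 f, pderiv 1 f, pderiv 2 f} = J k := by
  have h5 : (5 : Pk) = 0 := five_eq_zero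
  have hd0 : pderiv 0 f = 3 * X 0 ^ 2 + X 1 ^ 4 := by
    subst hf; simp [pderiv_X, pderiv_pow, Pi.single_apply]
  have hd1 : pderiv 1 f = 4 * (X 0 * X 1 ^ 3) := by
    subst hf; simp [pderiv_X, pderiv_pow, Pi.single_apply]; ring_nf; simp [h5]
  have hd2 : pderiv 2 f = 2 * X 2 := by
    subst hf; simp [pderiv_X, pderiv_pow, Pi.single_apply]
  apply le_antisymm
  · rw [Ideal.span_le]
    refine Set.insert_subset_iff.mpr ⟨?_, Set.insert_subset_iff.mpr ⟨?_, 
      Set.insert_subset_iff.mpr ⟨?_, Set.singleton_subset_iff.mpr ?_⟩⟩⟩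
    · have : f = X 2 * X 2 + X 0 * g1 k - X 1 * g2 k + g3 k := by
        rw [hf]; unfold g1 g2 g3; ring
      rw [this]
      exact add_mem (sub_mem (add_mem (Ideal.mul_mem_left _ _ hX2)
        (Ideal.mul_mem_left _ _ hg1)) (Ideal.mul_mem_left _ _ hg2)) hg3
    · have : pderiv 0 f = 3 * g1 k := by
        rw [hd0]; unfold g1; linear_combination (-(X 1:Pk)^4) * h5
      rw [this]; exact Ideal.mul_mem_left _ _ hg1
    · have : pderiv 1 f = 4 * g2 k := by
        rw [hd1]; unfold g2; ring
      rw [this]; exact Ideal.mul_mem_left _ _ hg2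
    · have : pderiv 2 f = 2 * X 2 := hd2
      rw [this]; exact Ideal.mul_mem_left _ _ hX2
  · set I := Ideal.span {f, pderiv 0 f, pderiv 1 f, pderiv 2 f} with hI
    have hfI : f ∈ I := Ideal.subset_span (by simp)
    have hd0I : pderiv 0 f ∈ I := Ideal.subset_span (by simp)
    have hd1I : pderiv 1 f ∈ I := Ideal.subset_span (by simp)
    have hd2I : pderiv 2 f ∈ I := Ideal.subset_span (by simp)
    have hg1I : g1 k ∈ I := by
      have : g1 k = 2 * pderiv 0 f := by
        rw [hd0]; unfold g1; linear_combination (-(X 0:Pk)^2) * h5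
      rw [this]; exact Ideal.mul_mem_left _ _ hd0I
    have hg2I : g2 k ∈ I := by
      have : g2 k = 4 * pderiv 1 f := by
        rw [hd1]; unfold g2; linear_combination (-3*(X 0:Pk)*(X 1:Pk)^3) * h5
      rw [this]; exact Ideal.mul_mem_left _ _ hd1I
    have hX2I : (X 2 : Pk) ∈ I := by
      have : (X 2 : Pk) = 3 * pderiv 2 f := by
        rw [hd2]; linear_combination (-(X 2:Pk)) * h5
      rw [this]; exact Ideal.mul_mem_left _ _ hd2I
    have hg3I : g3 k ∈ I := by
      have : g3 k = f - (X 2 * X 2 + X 0 * g1 k - X 1 * g2 k) := by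
        rw [hf]; unfold g1 g2 g3; ring
      rw [this]
      exact sub_mem hfI (sub_mem (add_mem (Ideal.mul_mem_left _ _ hX2I)
        (Ideal.mul_mem_left _ _ hg1I)) (Ideal.mul_mem_left _ _ hg2I))
    rw [J, Ideal.span_le]
    refine Set.insert_subset_iff.mpr ⟨hX2I, Set.insert_subset_iff.mpr ⟨hg1I,
      Set.insert_subset_iff.mpr ⟨hg2I, Set.singleton_subset_iff.mpr hg3I⟩⟩⟩
noncomputable def E : Fin 8 → (Fin 3 →₀ ℕ)
  | 0 => 0
  | 1 => Finsupp.single 0 1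
  | 2 => Finsupp.single 1 1
  | 3 => Finsupp.single 0 1 + Finsupp.single 1 1
  | 4 => Finsupp.single 1 2
  | 5 => Finsupp.single 0 1 + Finsupp.single 1 2
  | 6 => Finsupp.single 1 3
  | 7 => Finsupp.single 1 4

lemma E0 : ∀ i, (E i) 0 ≤ 1 := by
  intro i; fin_cases i <;> simp [E, Finsupp.single_apply]
lemma E1 : ∀ i, (E i) 1 ≤ 4 := by
  intro i; fin_cases i <;> simp [E, Finsupp.single_apply]
lemma E2 : ∀ i, (E i) 2 = 0 := by
  intro i; fin_cases i <;> simp [E, Finsupp.single_apply]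

noncomputable def Phi (k : Type*) [Field k] : MvPolynomial (Fin 3) k →ₗ[k] (Fin 8 → k) where
  toFun p i := coeff (E i) p - (if i = 7 then 2 * coeff (Finsupp.single 0 2) p else 0)
  map_add' p q := by
    funext i; simp only [coeff_add, Pi.add_apply]; split <;> ring
  map_smul' a p := by
    funext i
    simp only [coeff_smul, smul_eq_mul, RingHom.id_apply, Pi.smul_apply]
    split <;> ring
-- merged

lemma E1' : ∀ i : Fin 8, i ≠ 7 → (E i) 1 ≤ 3 := by
  intro i hi; fin_cases i <;> simp_all [E, Finsupp.single_apply]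
lemma E01 : ∀ i : Fin 8, (E i) 0 = 0 ∨ (E i) 1 ≤ 2 := by
  intro i; fin_cases i <;> simp [E, Finsupp.single_apply]

lemma nle1 (i : Fin 8) : ¬ Finsupp.single 0 2 ≤ E i := by
  intro h
  have h0 := (Finsupp.le_def.mp h) 0
  have := E0 i
  simp [Finsupp.single_apply] at h0; omega
lemma nle2 (i : Fin 8) (hi : i ≠ 7) : ¬ Finsupp.single 1 4 ≤ E i := by
  intro h
  have h1 := (Finsupp.le_def.mp h) 1
  have := E1' i hi
  simp [Finsupp.single_apply] at h1; omega
lemma nle3 (i : Fin 8) : ¬ (Finsupp.single 0 1 + Finsupp.single 1 3) ≤ E i := by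
  intro h
  have h0 := (Finsupp.le_def.mp h) 0
  have h1 := (Finsupp.le_def.mp h) 1
  have := E01 i
  simp [Finsupp.single_apply] at h0 h1; omega
lemma nle4 (i : Fin 8) : ¬ Finsupp.single 1 5 ≤ E i := by
  intro h
  have h1 := (Finsupp.le_def.mp h) 1
  have := E1 i
  simp [Finsupp.single_apply] at h1; omega
lemma nle5 : ¬ Finsupp.single 1 4 ≤ (Finsupp.single 0 2 : Fin 3 →₀ ℕ) := by
  intro h
  have h1 := (Finsupp.le_def.mp h) 1
  simp [Finsupp.single_apply] at h1
lemma nle6 : ¬ (Finsupp.single 0 1 + Finsupp.single 1 3) ≤ (Finsupp.single 0 2 : Fin 3 →₀ ℕ) := by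
  intro h
  have h1 := (Finsupp.le_def.mp h) 1
  simp [Finsupp.single_apply] at h1
lemma nle7 : ¬ Finsupp.single 1 5 ≤ (Finsupp.single 0 2 : Fin 3 →₀ ℕ) := by
  intro h
  have h1 := (Finsupp.le_def.mp h) 1
  simp [Finsupp.single_apply] at h1
-- merged2

lemma phi_apply (p : Pk) (i : Fin 8) :
    Phi k p i = coeff (E i) p - (if i = 7 then 2 * coeff (Finsupp.single 0 2) p else 0) := rfl

lemma phi_mul_X2 (q : Pk) : Phi k (q * X 2) = 0 := by
  have h1 : ∀ i : Fin 8, ¬ (2:Fin 3) ∈ (E i).support := by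
    intro i; simp [Finsupp.mem_support_iff, E2 i]
  have h2 : ¬ (2:Fin 3) ∈ (Finsupp.single (0:Fin 3) 2).support := by
    simp [Finsupp.mem_support_iff, Finsupp.single_apply]
  funext i
  rw [phi_apply]
  rw [coeff_mul_X', coeff_mul_X', if_neg (h1 i), if_neg h2]
  simp

lemma mg2 : g2 k = monomial (Finsupp.single 0 1 + Finsupp.single 1 3) 1 := by
  rw [g2, show (X 0 : Pk) = monomial (Finsupp.single 0 1) 1 from rfl, X_pow_eq_monomial,
    monomial_mul, mul_one]

lemma mg3 : g3 k = monomial (Finsupp.single 1 5) 1 := by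
  rw [g3, X_pow_eq_monomial]

lemma phi_mul_g2 (q : Pk) : Phi k (q * g2 k) = 0 := by
  funext i
  rw [phi_apply, mg2, coeff_mul_monomial', coeff_mul_monomial',
    if_neg (nle3 i), if_neg nle6]
  simp

lemma phi_mul_g3 (q : Pk) : Phi k (q * g3 k) = 0 := by
  funext i
  rw [phi_apply, mg3, coeff_mul_monomial', coeff_mul_monomial',
    if_neg (nle4 i), if_neg nle7]
  simp

lemma mg1 : g1 k = monomial (Finsupp.single 0 2) 1 + monomial (Finsupp.single 1 4) 2 := by
  rw [g1, X_pow_eq_monomial, show (2:Pk) = C (2:k) from (map_ofNat C 2).symm,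
    X_pow_eq_monomial, C_mul_monomial, mul_one]

lemma phi_mul_g1 (q : Pk) : Phi k (q * g1 k) = 0 := by
  funext i
  rw [phi_apply, mg1, mul_add, coeff_add, coeff_add, coeff_mul_monomial', coeff_mul_monomial',
    coeff_mul_monomial', coeff_mul_monomial', if_neg (nle1 i), if_neg nle5,
    if_pos (le_refl _)]
  by_cases hi : i = 7
  · subst hi
    rw [show E 7 = Finsupp.single 1 4 from rfl, if_pos (le_refl (Finsupp.single 1 4)),
      if_pos rfl, tsub_self, tsub_self]
    simp
    ring
  · rw [if_neg (nle2 i hi), if_neg hi]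
    simp


lemma phi_J : ∀ x ∈ J k, Phi k x = 0 := by
  have key : ∀ x ∈ J k, ∀ q : Pk, Phi k (q * x) = 0 := by
    intro x hx
    refine Submodule.span_induction ?_ ?_ ?_ ?_ hx
    · intro y hy
      simp only [Set.mem_insert_iff, Set.mem_singleton_iff] at hy
      rcases hy with rfl | rfl | rfl | rfl
      · exact phi_mul_X2
      · exact phi_mul_g1
      · exact phi_mul_g2
      · exact phi_mul_g3
    · intro q; rw [mul_zero, map_zero]
    · intro a b _ _ ha hb q
      rw [mul_add, map_add, ha q, hb q, add_zero]
    · intro a b _ hb q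
      rw [smul_eq_mul, show q * (a * b) = (q * a) * b by ring, hb (q * a)]
  intro x hx
  have := key x hx 1
  rwa [one_mul] at this


noncomputable def mb (k : Type*) [Field k] : Fin 8 → MvPolynomial (Fin 3) k :=
  fun i => monomial (E i) 1

lemma Xmon (n : Fin 3) : (X n : Pk) = monomial (Finsupp.single n 1) 1 := rfl

lemma mb0 : mb k 0 = 1 := by rw [mb, show E 0 = 0 from rfl, monomial_zero', map_one]
lemma mb1 : mb k 1 = X 0 := rfl
lemma mb2 : mb k 2 = X 1 := rfl
lemma mb3 : mb k 3 = X 0 * X 1 := by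
  rw [mb, show E 3 = Finsupp.single 0 1 + Finsupp.single 1 1 from rfl, Xmon, Xmon,
    monomial_mul, mul_one]
lemma mb4 : mb k 4 = X 1 ^ 2 := by
  rw [mb, show E 4 = Finsupp.single 1 2 from rfl, X_pow_eq_monomial]
lemma mb5 : mb k 5 = X 0 * X 1 ^ 2 := by
  rw [mb, show E 5 = Finsupp.single 0 1 + Finsupp.single 1 2 from rfl, Xmon, X_pow_eq_monomial,
    monomial_mul, mul_one]
lemma mb6 : mb k 6 = X 1 ^ 3 := by
  rw [mb, show E 6 = Finsupp.single 1 3 from rfl, X_pow_eq_monomial]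
lemma mb7 : mb k 7 = X 1 ^ 4 := by
  rw [mb, show E 7 = Finsupp.single 1 4 from rfl, X_pow_eq_monomial]

lemma E_inj : ∀ i j : Fin 8, E i = E j → i = j := by
  intro i j h
  have h0 := DFunLike.congr_fun h 0
  have h1 := DFunLike.congr_fun h 1
  clear h
  fin_cases i <;> fin_cases j <;>
    simp [E, Finsupp.single_apply] at h0 h1 ⊢

lemma phi_mb (i j : Fin 8) : Phi k (mb k i) j = if i = j then 1 else 0 := by
  rw [phi_apply, mb, coeff_monomial]
  have hne : E i ≠ Finsupp.single 0 2 := by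
    intro h
    have h0 := DFunLike.congr_fun h 0
    have := E0 i
    simp [Finsupp.single_apply] at h0; omega
  rw [coeff_monomial, if_neg hne]
  by_cases h : i = j
  · subst h; rw [if_pos rfl, if_pos rfl]; split <;> ring
  · rw [if_neg h, if_neg (fun hh => h (E_inj i j hh))]; split <;> ring


noncomputable def S (k : Type*) [Field k] [CharP k 5] : Submodule k (MvPolynomial (Fin 3) k) :=
  (Submodule.span k (Set.range (mb k))) ⊔ (Submodule.restrictScalars k (J k))

lemma memB (j : Fin 8) : mb k j ∈ S k :=
  Submodule.mem_sup_left (Submodule.subset_span ⟨j, rfl⟩)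

lemma memJS {x : Pk} (hx : x ∈ J k) : x ∈ S k := Submodule.mem_sup_right hx

lemma hC2 : (C (-2 : k) : Pk) = -2 := by
  rw [map_neg, map_ofNat]

lemma step (i : Fin 8) (n : Fin 3) : mb k i * X n ∈ S k := by
  fin_cases n
  · -- times x
    fin_cases i
    · show mb k 0 * X 0 ∈ S k
      rw [mb0, one_mul, ← mb1]; exact memB 1
    · show mb k 1 * X 0 ∈ S k
      rw [mb1]
      have : (X 0 : Pk) * X 0 = g1 k + (-2 : k) • mb k 7 := by
        rw [g1, mb7, smul_eq_C_mul, hC2]; ring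
      rw [this]; exact add_mem (memJS hg1) (Submodule.smul_mem _ _ (memB 7))
    · show mb k 2 * X 0 ∈ S k
      rw [mb2, show (X 1 : Pk) * X 0 = X 0 * X 1 from mul_comm _ _, ← mb3]; exact memB 3
    · show mb k 3 * X 0 ∈ S k
      rw [mb3]
      have : ((X 0 : Pk) * X 1) * X 0 = X 1 * g1 k - 2 * g3 k := by
        rw [g1, g3]; ring
      rw [this]
      exact memJS (sub_mem (Ideal.mul_mem_left _ _ hg1) (Ideal.mul_mem_left _ _ hg3))
    · show mb k 4 * X 0 ∈ S k
      rw [mb4, show (X 1 : Pk) ^ 2 * X 0 = X 0 * X 1 ^ 2 by ring, ← mb5]; exact memB 5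
    · show mb k 5 * X 0 ∈ S k
      rw [mb5]
      have : ((X 0 : Pk) * X 1 ^ 2) * X 0 = X 1 ^ 2 * g1 k - 2 * X 1 * g3 k := by
        rw [g1, g3]; ring
      rw [this]
      exact memJS (sub_mem (Ideal.mul_mem_left _ _ hg1) (Ideal.mul_mem_left _ _ hg3))
    · show mb k 6 * X 0 ∈ S k
      rw [mb6, show (X 1 : Pk) ^ 3 * X 0 = g2 k by rw [g2]; ring]; exact memJS hg2
    · show mb k 7 * X 0 ∈ S k
      rw [mb7, show (X 1 : Pk) ^ 4 * X 0 = X 1 * g2 k by rw [g2]; ring]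
      exact memJS (Ideal.mul_mem_left _ _ hg2)
  · -- times y
    fin_cases i
    · show mb k 0 * X 1 ∈ S k
      rw [mb0, one_mul, ← mb2]; exact memB 2
    · show mb k 1 * X 1 ∈ S k
      rw [mb1, ← mb3]; exact memB 3
    · show mb k 2 * X 1 ∈ S k
      rw [mb2, show (X 1 : Pk) * X 1 = X 1 ^ 2 by ring, ← mb4]; exact memB 4
    · show mb k 3 * X 1 ∈ S k
      rw [mb3, show ((X 0 : Pk) * X 1) * X 1 = X 0 * X 1 ^ 2 by ring, ← mb5]; exact memB 5
    · show mb k 4 * X 1 ∈ S k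
      rw [mb4, show (X 1 : Pk) ^ 2 * X 1 = X 1 ^ 3 by ring, ← mb6]; exact memB 6
    · show mb k 5 * X 1 ∈ S k
      rw [mb5, show ((X 0 : Pk) * X 1 ^ 2) * X 1 = g2 k by rw [g2]; ring]; exact memJS hg2
    · show mb k 6 * X 1 ∈ S k
      rw [mb6, show (X 1 : Pk) ^ 3 * X 1 = X 1 ^ 4 by ring, ← mb7]; exact memB 7
    · show mb k 7 * X 1 ∈ S k
      rw [mb7, show (X 1 : Pk) ^ 4 * X 1 = g3 k by rw [g3]; ring]; exact memJS hg3
  · -- times z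
    exact memJS (Ideal.mul_mem_left _ _ hX2)

lemma S_top : S k = ⊤ := by
  rw [Submodule.eq_top_iff']
  intro p
  induction p using MvPolynomial.induction_on with
  | C a =>
    have : (C a : Pk) = a • mb k 0 := by
      rw [mb0, smul_eq_C_mul, mul_one]
    rw [this]
    exact Submodule.smul_mem _ _ (memB 0)
  | add p q hp hq => exact add_mem hp hq
  | mul_X p n hp =>
    obtain ⟨b, hb, j, hj, rfl⟩ := Submodule.mem_sup.mp hp
    rw [add_mul]
    refine add_mem ?_ (memJS (Ideal.mul_mem_right _ _ hj))
    refine Submodule.span_induction ?_ ?_ ?_ ?_ hb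
    · rintro y ⟨i, rfl⟩; exact step i n
    · rw [zero_mul]; exact zero_mem _
    · intro a b _ _ ha hb'; rw [add_mul]; exact add_mem ha hb'
    · intro a y _ hy; rw [smul_mul_assoc]; exact Submodule.smul_mem _ _ hy


variable (k)

noncomputable def v : Fin 8 → (MvPolynomial (Fin 3) k ⧸ J k) :=
  fun i => Ideal.Quotient.mkₐ k (J k) (mb k i)

lemma v_indep : LinearIndependent k (v k) := by
  rw [Fintype.linearIndependent_iff]
  intro g hg j
  have hq : (∑ i, g i • mb k i) ∈ J k := by
    rw [← Ideal.Quotient.eq_zero_iff_mem]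
    have : Ideal.Quotient.mk (J k) (∑ i, g i • mb k i)
        = ∑ i, g i • v k i := by
      show Ideal.Quotient.mkₐ k (J k) (∑ i, g i • mb k i) = _
      rw [map_sum]
      exact Finset.sum_congr rfl fun i _ => map_smul _ _ _
    rw [show Ideal.Quotient.mk (J k) (∑ i, g i • mb k i) = ∑ i, g i • v k i from this, hg]
  have hphi := phi_J _ hq
  have : Phi k (∑ i, g i • mb k i) j = g j := by
    rw [map_sum]
    rw [Finset.sum_apply]
    have : ∀ i, (g i • Phi k (mb k i)) j = g i * (if i = j then 1 else 0) := by
      intro i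
      rw [Pi.smul_apply, phi_mb, smul_eq_mul]
    calc (∑ i, (Phi k) (g i • mb k i)) j
        = ∑ i, ((Phi k) (g i • mb k i)) j := by rw [Finset.sum_apply]
      _ = ∑ i, g i * (if i = j then 1 else 0) := by
          refine Finset.sum_congr rfl fun i _ => ?_
          rw [map_smul]; exact this i
      _ = g j := by simp [mul_ite]
  rw [hphi] at this
  simpa using this.symm

lemma v_span : ⊤ ≤ Submodule.span k (Set.range (v k)) := by
  intro x _
  obtain ⟨p, rfl⟩ := Ideal.Quotient.mk_surjective x
  have hp : p ∈ S k := by rw [S_top]; trivial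
  obtain ⟨b, hb, j, hj, rfl⟩ := Submodule.mem_sup.mp hp
  have h1 : Ideal.Quotient.mk (J k) (b + j) = Ideal.Quotient.mk (J k) b := by
    rw [RingHom.map_add, Ideal.Quotient.eq_zero_iff_mem.mpr hj, add_zero]
  rw [h1]
  have := Submodule.mem_map_of_mem (f := (Ideal.Quotient.mkₐ k (J k)).toLinearMap) hb
  rw [Submodule.map_span] at this
  have heq : (Ideal.Quotient.mkₐ k (J k)).toLinearMap '' Set.range (mb k)
      = Set.range (v k) := by
    rw [← Set.range_comp]; rfl
  rw [heq] at this
  exact this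

noncomputable def qbasis : Module.Basis (Fin 8) k (MvPolynomial (Fin 3) k ⧸ J k) :=
  Module.Basis.mk (v_indep k) (v_span k)

lemma finrank_J : Module.finrank k (MvPolynomial (Fin 3) k ⧸ J k) = 8 := by
  rw [Module.finrank_eq_card_basis (qbasis k)]
  simp

end TjE8

/-- Tjurina algebra dimension. Variables: `X 0 = x`, `X 1 = y`, `X 2 = z`. -/
theorem tjurina_E8_1_char5 (k : Type*) [Field k] [CharP k 5]
    (f : MvPolynomial (Fin 3) k)
    (hf : f = X 2 ^ 2 + X 0 ^ 3 + X 1 ^ 5 + X 0 * X 1 ^ 4) :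
    Module.finrank k
      (MvPolynomial (Fin 3) k ⧸
        (Ideal.span {f, pderiv 0 f, pderiv 1 f, pderiv 2 f} :
          Ideal (MvPolynomial (Fin 3) k))) = 8 := by
  rw [TjE8.span_eq f hf]
  exact TjE8.finrank_J k
end

section
/- Let k be a field of characteristic 3 and let f = z^2 + x^3 + y^4 in k[x,y,z]. Then the Tjurina algebra k[x,y,z]/(f, ∂f/∂x, ∂f/∂y, ∂f/∂z) has k-dimension 9. -/
open MvPolynomial Polynomial

noncomputable abbrev TjA (k : Type*) [Field k] : Type _ :=
  AdjoinRoot (Polynomial.X ^ 3 : Polynomial k)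
noncomputable abbrev TjB (k : Type*) [Field k] : Type _ :=
  AdjoinRoot (Polynomial.X ^ 3 : Polynomial (TjA k))

section
variable (k : Type*) [Field k]
noncomputable def TjApb : PowerBasis k (TjA k) := AdjoinRoot.powerBasis' (monic_X_pow 3)
noncomputable def TjBpb : PowerBasis (TjA k) (TjB k) := AdjoinRoot.powerBasis' (monic_X_pow 3)

instance : Nontrivial (TjA k) := AdjoinRoot.nontrivial _ (by simp [Polynomial.degree_X_pow])

instance : Nontrivial (TjB k) := by
  constructor
  refine ⟨(TjBpb k).basis.repr.symm (Finsupp.single ⟨0, by simp [TjBpb, AdjoinRoot.powerBasis']⟩ 1),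
    (TjBpb k).basis.repr.symm 0, fun h => ?_⟩
  have := (TjBpb k).basis.repr.symm.injective h
  simp [Finsupp.single_eq_zero] at this

lemma Tj_finrank : Module.finrank k (TjB k) = 9 := by
  have h1 : Module.finrank k (TjA k) = 3 := by
    rw [(TjApb k).finrank]
    simp [TjApb, AdjoinRoot.powerBasis']
  have h2 : Module.finrank (TjA k) (TjB k) = 3 := by
    rw [(TjBpb k).finrank]
    simp [TjBpb, AdjoinRoot.powerBasis']
  have : Module.Free k (TjA k) := Module.Free.of_basis (TjApb k).basis
  have : Module.Free (TjA k) (TjB k) := Module.Free.of_basis (TjBpb k).basis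
  rw [← Module.finrank_mul_finrank k (TjA k) (TjB k), h1, h2]

end

noncomputable def TjI (k : Type*) [Field k] : Ideal (MvPolynomial (Fin 3) k) :=
  Ideal.span {X 0 ^ 3, X 1 ^ 3, X 2}

lemma TjA_root_pow (k : Type*) [Field k] :
    (AdjoinRoot.root (Polynomial.X ^ 3 : Polynomial k)) ^ 3 = 0 := by
  rw [← AdjoinRoot.mk_X, ← map_pow, AdjoinRoot.mk_self]

lemma TjB_root_pow (k : Type*) [Field k] :
    (AdjoinRoot.root (Polynomial.X ^ 3 : Polynomial (TjA k))) ^ 3 = 0 := by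
  rw [← AdjoinRoot.mk_X, ← map_pow, AdjoinRoot.mk_self]

lemma Tj_adjoin_top (k : Type*) [Field k] :
    Algebra.adjoin k
      ({algebraMap (TjA k) (TjB k) (AdjoinRoot.root _), AdjoinRoot.root _} : Set (TjB k)) = ⊤ := by
  have h : ({algebraMap (TjA k) (TjB k) (AdjoinRoot.root _), AdjoinRoot.root _} : Set (TjB k))
      = algebraMap (TjA k) (TjB k) ''
          {AdjoinRoot.root (Polynomial.X ^ 3 : Polynomial k)} ∪ {AdjoinRoot.root _} := by
    rw [Set.image_singleton, Set.singleton_union]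
  rw [h, Algebra.adjoin_algebraMap_image_union_eq_adjoin_adjoin,
    AdjoinRoot.adjoinRoot_eq_top, Algebra.adjoin_top, AdjoinRoot.adjoinRoot_eq_top,
    Subalgebra.restrictScalars_top, Subalgebra.restrictScalars_top]

lemma Tj_equiv (k : Type*) [Field k] :
    Nonempty ((MvPolynomial (Fin 3) k ⧸ TjI k) ≃ₐ[k] TjB k) := by
  classical
  set rA := AdjoinRoot.root (Polynomial.X ^ 3 : Polynomial k) with hrA
  set rB := AdjoinRoot.root (Polynomial.X ^ 3 : Polynomial (TjA k)) with hrB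
  set v : Fin 3 → TjB k := ![algebraMap (TjA k) (TjB k) rA, rB, 0] with hv
  set φ : MvPolynomial (Fin 3) k →ₐ[k] TjB k := aeval v with hφ
  have hm0 : (X 0 ^ 3 : MvPolynomial (Fin 3) k) ∈ TjI k := Ideal.subset_span (by simp)
  have hm1 : (X 1 ^ 3 : MvPolynomial (Fin 3) k) ∈ TjI k := Ideal.subset_span (by simp)
  have hm2 : (X 2 : MvPolynomial (Fin 3) k) ∈ TjI k := Ideal.subset_span (by simp)
  have hv0 : v 0 = algebraMap (TjA k) (TjB k) rA := rfl
  have hv1 : v 1 = rB := rfl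
  have hv2 : v 2 = 0 := rfl
  have hker : ∀ a ∈ TjI k, φ a = 0 := by
    intro a ha
    rw [← RingHom.mem_ker]
    revert a ha
    rw [← SetLike.le_def, TjI, Ideal.span_le]
    intro p hp
    simp only [Set.mem_insert_iff, Set.mem_singleton_iff] at hp
    rcases hp with rfl | rfl | rfl
    · rw [SetLike.mem_coe, RingHom.mem_ker]
      show MvPolynomial.aeval v (X 0 ^ 3) = 0
      rw [map_pow, MvPolynomial.aeval_X, hv0, ← map_pow, hrA, TjA_root_pow, map_zero]
    · rw [SetLike.mem_coe, RingHom.mem_ker]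
      show MvPolynomial.aeval v (X 1 ^ 3) = 0
      rw [map_pow, MvPolynomial.aeval_X, hv1, hrB, TjB_root_pow]
    · rw [SetLike.mem_coe, RingHom.mem_ker]
      show MvPolynomial.aeval v (X 2) = 0
      rw [MvPolynomial.aeval_X, hv2]
  set ψ : (MvPolynomial (Fin 3) k ⧸ TjI k) →ₐ[k] TjB k := Ideal.Quotient.liftₐ (TjI k) φ hker
    with hψ
  have hψmk : ∀ p, ψ (Ideal.Quotient.mk (TjI k) p) = φ p := fun p => by
    rw [hψ, Ideal.Quotient.liftₐ_apply]; rfl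
  set χ₀ : TjA k →ₐ[k] (MvPolynomial (Fin 3) k ⧸ TjI k) :=
    AdjoinRoot.liftAlgHom _ (Algebra.ofId _ _) (Ideal.Quotient.mk (TjI k) (X 0))
      (by show Polynomial.aeval _ _ = 0
          rw [map_pow, Polynomial.aeval_X, ← map_pow, Ideal.Quotient.eq_zero_iff_mem]
          exact hm0) with hχ₀
  letI : Algebra (TjA k) (MvPolynomial (Fin 3) k ⧸ TjI k) := χ₀.toAlgebra
  letI : IsScalarTower k (TjA k) (MvPolynomial (Fin 3) k ⧸ TjI k) :=
    IsScalarTower.of_algebraMap_eq' (χ₀.comp_algebraMap).symm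
  set χ₁ : TjB k →ₐ[TjA k] (MvPolynomial (Fin 3) k ⧸ TjI k) :=
    AdjoinRoot.liftAlgHom _ (Algebra.ofId _ _) (Ideal.Quotient.mk (TjI k) (X 1))
      (by show Polynomial.aeval _ _ = 0
          rw [map_pow, Polynomial.aeval_X, ← map_pow, Ideal.Quotient.eq_zero_iff_mem]
          exact hm1) with hχ₁
  set χ : TjB k →ₐ[k] (MvPolynomial (Fin 3) k ⧸ TjI k) := AlgHom.restrictScalars k χ₁ with hχ
  have hχA : ∀ a : TjA k, χ (algebraMap (TjA k) (TjB k) a) = χ₀ a := fun a => χ₁.commutes a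
  have hleft : χ.comp ψ = AlgHom.id k _ := by
    apply Ideal.Quotient.algHom_ext
    apply MvPolynomial.algHom_ext
    intro i
    fin_cases i
    · show χ (ψ (Ideal.Quotient.mk (TjI k) (X 0))) = Ideal.Quotient.mk (TjI k) (X 0)
      rw [hψmk]
      show χ (aeval v (X 0)) = _
      rw [MvPolynomial.aeval_X, hv0, hχA, hχ₀, AdjoinRoot.liftAlgHom_root]
    · show χ (ψ (Ideal.Quotient.mk (TjI k) (X 1))) = Ideal.Quotient.mk (TjI k) (X 1)
      rw [hψmk]
      show χ (aeval v (X 1)) = _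
      rw [MvPolynomial.aeval_X, hv1]
      show χ₁ rB = _
      rw [hχ₁, AdjoinRoot.liftAlgHom_root]
    · show χ (ψ (Ideal.Quotient.mk (TjI k) (X 2))) = Ideal.Quotient.mk (TjI k) (X 2)
      rw [hψmk]
      show χ (aeval v (X 2)) = _
      rw [MvPolynomial.aeval_X, hv2, map_zero, eq_comm, Ideal.Quotient.eq_zero_iff_mem]
      exact hm2
  have hinj : Function.Injective ψ := by
    intro a b hab
    have h1 : (χ.comp ψ) a = (χ.comp ψ) b := by simp [AlgHom.comp_apply, hab]
    rwa [hleft, AlgHom.id_apply, AlgHom.id_apply] at h1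
  have hsurj : Function.Surjective ψ := by
    rw [← AlgHom.range_eq_top]
    rw [eq_top_iff, ← Tj_adjoin_top k]
    apply Algebra.adjoin_le
    rintro x (rfl | rfl)
    · refine ⟨Ideal.Quotient.mk (TjI k) (X 0), ?_⟩
      show ψ (Ideal.Quotient.mk (TjI k) (X 0)) = _
      rw [hψmk]
      show MvPolynomial.aeval v (X 0) = _
      rw [MvPolynomial.aeval_X, hv0, hrA]
    · refine ⟨Ideal.Quotient.mk (TjI k) (X 1), ?_⟩
      show ψ (Ideal.Quotient.mk (TjI k) (X 1)) = _
      rw [hψmk]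
      show MvPolynomial.aeval v (X 1) = _
      rw [MvPolynomial.aeval_X, hv1, hrB]
  exact ⟨AlgEquiv.ofBijective ψ ⟨hinj, hsurj⟩⟩


lemma Tj_span_eq (k : Type*) [Field k] [CharP k 3]
    (f : MvPolynomial (Fin 3) k)
    (hf : f = X 2 ^ 2 + X 0 ^ 3 + X 1 ^ 4) :
    Ideal.span {f, pderiv 0 f, pderiv 1 f, pderiv 2 f} = TjI k := by
  rw [TjI]
  have h3 : (3 : MvPolynomial (Fin 3) k) = 0 := by
    exact_mod_cast CharP.cast_eq_zero (MvPolynomial (Fin 3) k) 3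
  have h4 : (4 : MvPolynomial (Fin 3) k) = 1 := by linear_combination h3
  have hp0 : pderiv 0 f = 0 := by
    subst hf; simp [pderiv_X, Pi.single_apply]; simp [h3]
  have hp1 : pderiv (1 : Fin 3) f = X 1 ^ 3 := by
    subst hf; simp [pderiv_X, Pi.single_apply]; simp [h4]
  have hp2 : pderiv (2 : Fin 3) f = 2 * X 2 := by
    subst hf; simp [pderiv_X, Pi.single_apply]
  rw [hp0, hp1, hp2]
  apply le_antisymm <;> rw [Ideal.span_le] <;> intro p hp <;>
    simp only [Set.mem_insert_iff, Set.mem_singleton_iff] at hp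
  · have m0 : X 0 ^ 3 ∈ Ideal.span ({X 0 ^ 3, X 1 ^ 3, X 2} : Set (MvPolynomial (Fin 3) k)) :=
      Ideal.subset_span (by simp)
    have m1 : X 1 ^ 3 ∈ Ideal.span ({X 0 ^ 3, X 1 ^ 3, X 2} : Set (MvPolynomial (Fin 3) k)) :=
      Ideal.subset_span (by simp)
    have m2 : X 2 ∈ Ideal.span ({X 0 ^ 3, X 1 ^ 3, X 2} : Set (MvPolynomial (Fin 3) k)) :=
      Ideal.subset_span (by simp)
    rcases hp with rfl | rfl | rfl | rfl
    · rw [hf]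
      have : (X 2 ^ 2 + X 0 ^ 3 + X 1 ^ 4 : MvPolynomial (Fin 3) k)
          = X 2 * X 2 + X 0 ^ 3 + X 1 * X 1 ^ 3 := by ring
      rw [this]
      exact add_mem (add_mem (Ideal.mul_mem_left _ _ m2) m0) (Ideal.mul_mem_left _ _ m1)
    · exact zero_mem _
    · exact m1
    · exact Ideal.mul_mem_left _ _ m2
  · set J := Ideal.span ({f, 0, X 1 ^ 3, 2 * X 2} : Set (MvPolynomial (Fin 3) k)) with hJ
    have mf : f ∈ J := Ideal.subset_span (by simp)
    have m1 : X 1 ^ 3 ∈ J := Ideal.subset_span (by simp)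
    have m2' : 2 * X 2 ∈ J := Ideal.subset_span (by simp)
    have m2 : X 2 ∈ J := by
      have hk2 : (2 : k) ≠ 0 := by
        have : ((2 : ℕ) : k) ≠ 0 := by
          rw [Ne, CharP.cast_eq_zero_iff k 3 2]
          omega
        simpa using this
      have h2 : (MvPolynomial.C (2 : k)⁻¹ : MvPolynomial (Fin 3) k) * (2 * X 2) = X 2 := by
        have h2' : (2 : MvPolynomial (Fin 3) k) = MvPolynomial.C (2 : k) := by
          rw [map_ofNat]
        rw [h2', ← mul_assoc, ← MvPolynomial.C_mul, inv_mul_cancel₀ hk2, MvPolynomial.C_1, one_mul]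
      rw [← h2]
      exact Ideal.mul_mem_left _ _ m2'
    rcases hp with rfl | rfl | rfl
    · have : X 0 ^ 3 = f - X 2 * X 2 - X 1 * X 1 ^ 3 := by rw [hf]; ring
      rw [this]
      exact sub_mem (sub_mem mf (Ideal.mul_mem_left _ _ m2)) (Ideal.mul_mem_left _ _ m1)
    · exact m1
    · exact m2


open MvPolynomial

/-- Tjurina algebra dimension. Variables: `X 0 = x`, `X 1 = y`, `X 2 = z`. -/
theorem tjurina_E6_0_char3 (k : Type*) [Field k] [CharP k 3]
    (f : MvPolynomial (Fin 3) k)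
    (hf : f = X 2 ^ 2 + X 0 ^ 3 + X 1 ^ 4) :
    Module.finrank k
      (MvPolynomial (Fin 3) k ⧸
        (Ideal.span {f, pderiv 0 f, pderiv 1 f, pderiv 2 f} :
          Ideal (MvPolynomial (Fin 3) k))) = 9 := by
  rw [Tj_span_eq k f hf]
  obtain ⟨e⟩ := Tj_equiv k
  rw [e.toLinearEquiv.finrank_eq]
  exact Tj_finrank k
end

section
/- Let k be a field of characteristic 3 and let f = z^2 + x^3 + y^4 + x^2 y^2 in k[x,y,z]. Then the Tjurina algebra k[x,y,z]/(f, ∂f/∂x, ∂f/∂y, ∂f/∂z) has k-dimension 7. -/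
open MvPolynomial Finsupp

noncomputable section TjurinaAux

variable {k : Type*} [Field k] [CharP k 3]

abbrev Rk (k : Type*) [Field k] := MvPolynomial (Fin 3) k

/-- exponent vectors as finsupps -/
def Evec (v : Fin 3 → ℕ) : Fin 3 →₀ ℕ := Finsupp.equivFunOnFinite.symm v

omit [CharP k 3] in
lemma Evec_apply (v : Fin 3 → ℕ) (j : Fin 3) : Evec v j = v j := rfl

lemma Evec_le (v w : Fin 3 → ℕ) : Evec v ≤ Evec w ↔ ∀ j, v j ≤ w j := by
  simp [Finsupp.le_def, Evec_apply]

lemma Evec_eq (v w : Fin 3 → ℕ) : Evec v = Evec w ↔ ∀ j, v j = w j := by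
  constructor
  · intro h j; rw [← Evec_apply v j, h, Evec_apply]
  · intro h; ext j; rw [Evec_apply, Evec_apply]; exact h j

lemma Evec_add (v w : Fin 3 → ℕ) : Evec v + Evec w = Evec (fun j => v j + w j) := by
  ext j; simp [Evec_apply, Finsupp.add_apply]

lemma single_eq_Evec0 (n : ℕ) : (single 0 n : Fin 3 →₀ ℕ) = Evec ![n,0,0] := by
  ext j; rw [Evec_apply]; fin_cases j <;> simp
lemma single_eq_Evec1 (n : ℕ) : (single 1 n : Fin 3 →₀ ℕ) = Evec ![0,n,0] := by
  ext j; rw [Evec_apply]; fin_cases j <;> simp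
lemma single_eq_Evec2 (n : ℕ) : (single 2 n : Fin 3 →₀ ℕ) = Evec ![0,0,n] := by
  ext j; rw [Evec_apply]; fin_cases j <;> simp

lemma mon_mul_mon (s t : Fin 3 → ℕ) (r r' : k) :
    monomial (Evec s) r * monomial (Evec t) r' = monomial (Evec fun j => s j + t j) (r*r') := by
  rw [monomial_mul, Evec_add]

variable (k)
def g1 : Rk k := X 0 ^ 3
def g2 : Rk k := X 0 * X 1 ^ 2
def g3 : Rk k := X 1 ^ 3 + 2 * (X 0 ^ 2 * X 1)
def g4 : Rk k := X 2
def Jk : Ideal (Rk k) := Ideal.span {g1 k, g2 k, g3 k, g4 k}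
variable {k}

lemma h3k : (3 : k) = 0 := by exact_mod_cast CharP.cast_eq_zero k 3

lemma h2k : (2 : k) = -1 := by linear_combination (h3k (k := k))

lemma h3R : (3 : Rk k) = 0 := by
  rw [← map_ofNat (C : k →+* Rk k) 3, h3k, map_zero]

lemma twoC : (2 : Rk k) = C 2 := (map_ofNat (C : k →+* Rk k) 2).symm

lemma g1_eq : g1 k = monomial (Evec ![3,0,0]) 1 := by
  rw [g1, X_pow_eq_monomial, single_eq_Evec0]

lemma vec120 : (fun j => ![1,0,0] j + ![0,2,0] j : Fin 3 → ℕ) = ![1,2,0] := by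
  funext j; fin_cases j <;> rfl

lemma vec210 : (fun j => ![2,0,0] j + ![0,1,0] j : Fin 3 → ℕ) = ![2,1,0] := by
  funext j; fin_cases j <;> rfl

lemma g2_eq : g2 k = monomial (Evec ![1,2,0]) 1 := by
  rw [g2, X, X_pow_eq_monomial, single_eq_Evec0, single_eq_Evec1, mon_mul_mon, vec120]
  norm_num

lemma g3_eq : g3 k = monomial (Evec ![0,3,0]) 1 - monomial (Evec ![2,1,0]) 1 := by
  have e1 : (X 1 ^ 3 : Rk k) = monomial (Evec ![0,3,0]) 1 := by
    rw [X_pow_eq_monomial, single_eq_Evec1]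
  have e2 : (X 0 ^ 2 * X 1 : Rk k) = monomial (Evec ![2,1,0]) 1 := by
    rw [X_pow_eq_monomial, X, single_eq_Evec0, single_eq_Evec1, mon_mul_mon, vec210]
    norm_num
  have e3 : (2 : Rk k) * monomial (Evec ![2,1,0]) (1:k) = - monomial (Evec ![2,1,0]) 1 := by
    rw [twoC, C_mul_monomial, show (2:k) * 1 = -1 from by rw [h2k (k := k)]; ring, map_neg]
  rw [g3, e1, e2, e3]; ring

lemma g4_eq : g4 k = monomial (Evec ![0,0,1]) 1 := by
  rw [g4, X, single_eq_Evec2]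

/-! the tracked monomial exponents -/
def Mv : Fin 7 → Fin 3 → ℕ := ![![0,0,0],![1,0,0],![2,0,0],![0,1,0],![1,1,0],![0,2,0],![2,1,0]]

def muv (i : Fin 7) : Fin 3 →₀ ℕ := Evec (Mv i)
def nuv : Fin 3 →₀ ℕ := Evec ![0,3,0]

variable (k)
def psi : Rk k →ₗ[k] (Fin 7 → k) where
  toFun p i := coeff (muv i) p + (if i = 6 then coeff nuv p else 0)
  map_add' p q := by funext i; simp only [coeff_add, Pi.add_apply]; split <;> ring
  map_smul' c p := by
    funext i
    simp only [coeff_smul, smul_eq_mul, RingHom.id_apply, Pi.smul_apply]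
    split <;> ring
variable {k}

lemma psi_apply (p : Rk k) (i : Fin 7) :
    psi k p i = coeff (muv i) p + (if i = 6 then coeff nuv p else 0) := rfl

lemma psi_mul_mon (a : Rk k) (s : Fin 3 → ℕ) (r : k)
    (h : ∀ i : Fin 7, ∃ j, ¬ s j ≤ Mv i j) (h' : ∃ j, ¬ s j ≤ ![0,3,0] j) :
    psi k (a * monomial (Evec s) r) = 0 := by
  funext i
  have hm : ¬ Evec s ≤ muv i := by
    rw [muv, Evec_le]; intro hh; obtain ⟨j, hj⟩ := h i; exact hj (hh j)
  have hn : ¬ Evec s ≤ nuv := by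
    rw [show nuv = Evec ![0,3,0] from rfl, Evec_le]
    intro hh; obtain ⟨j, hj⟩ := h'; exact hj (hh j)
  rw [psi_apply, coeff_mul_monomial', coeff_mul_monomial', if_neg hm, if_neg hn]
  simp

lemma psi_mul_g1 (a : Rk k) : psi k (a * g1 k) = 0 := by
  rw [g1_eq]; exact psi_mul_mon a ![3,0,0] 1 (by decide) (by decide)

lemma psi_mul_g2 (a : Rk k) : psi k (a * g2 k) = 0 := by
  rw [g2_eq]; exact psi_mul_mon a ![1,2,0] 1 (by decide) (by decide)

lemma psi_mul_g4 (a : Rk k) : psi k (a * g4 k) = 0 := by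
  rw [g4_eq]; exact psi_mul_mon a ![0,0,1] 1 (by decide) (by decide)

lemma psi_mul_g3 (a : Rk k) : psi k (a * g3 k) = 0 := by
  rw [g3_eq, mul_sub, map_sub]
  funext i
  simp only [Pi.sub_apply, psi_apply, Pi.zero_apply]
  rw [coeff_mul_monomial', coeff_mul_monomial', coeff_mul_monomial', coeff_mul_monomial']
  have h1 : ¬ Evec ![0,3,0] ≤ muv i := by
    rw [muv, Evec_le]; intro hh
    have hA : ∀ i : Fin 7, ∃ j, ¬ (![0,3,0] : Fin 3 → ℕ) j ≤ Mv i j := by decide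
    obtain ⟨j, hj⟩ := hA i; exact hj (hh j)
  have h2 : Evec ![0,3,0] ≤ nuv := le_refl nuv
  have h3 : ¬ Evec ![2,1,0] ≤ nuv := by
    rw [show nuv = Evec ![0,3,0] from rfl, Evec_le]; intro hh
    have hB : ∃ j, ¬ (![2,1,0] : Fin 3 → ℕ) j ≤ ![0,3,0] j := by decide
    obtain ⟨j, hj⟩ := hB; exact hj (hh j)
  rw [if_neg h1, if_pos h2, if_neg h3]
  by_cases hi : i = 6
  · subst hi
    have h4 : Evec ![2,1,0] ≤ muv 6 := le_refl (muv 6)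
    have h5 : nuv - Evec ![0,3,0] = 0 := tsub_self nuv
    have h6 : muv 6 - Evec ![2,1,0] = 0 := tsub_self (muv 6)
    rw [if_pos h4, h5, h6]
    simp
  · have h4 : ¬ Evec ![2,1,0] ≤ muv i := by
      rw [muv, Evec_le]; intro hh
      have hC : ∀ i : Fin 7, i ≠ 6 → ∃ j, ¬ (![2,1,0] : Fin 3 → ℕ) j ≤ Mv i j := by decide
      obtain ⟨j, hj⟩ := hC i hi; exact hj (hh j)
    rw [if_neg h4]
    simp [hi]

lemma psi_J {p : Rk k} (hp : p ∈ Jk k) : psi k p = 0 := by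
  rw [Jk] at hp
  rw [Ideal.mem_span_insert] at hp
  obtain ⟨a, z, hz, rfl⟩ := hp
  rw [Ideal.mem_span_insert] at hz
  obtain ⟨b, z2, hz2, rfl⟩ := hz
  rw [Ideal.mem_span_insert] at hz2
  obtain ⟨c, z3, hz3, rfl⟩ := hz2
  rw [Ideal.mem_span_singleton] at hz3
  obtain ⟨d, rfl⟩ := hz3
  simp only [smul_eq_mul, map_add]
  rw [psi_mul_g1, psi_mul_g2, psi_mul_g3, mul_comm (g4 k) d, psi_mul_g4]
  simp
lemma hd0 (f : Rk k) (hf : f = X 2 ^ 2 + X 0 ^ 3 + X 1 ^ 4 + X 0 ^ 2 * X 1 ^ 2) :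
    pderiv 0 f = 2 * g2 k := by
  subst hf; simp [g2, pderiv_X, Pi.single_apply]
  linear_combination (X 0^2 : Rk k) * (h3R (k := k))

lemma hd1 (f : Rk k) (hf : f = X 2 ^ 2 + X 0 ^ 3 + X 1 ^ 4 + X 0 ^ 2 * X 1 ^ 2) :
    pderiv 1 f = g3 k := by
  subst hf; simp [g3, pderiv_X, Pi.single_apply]
  linear_combination (X 1^3 : Rk k) * (h3R (k := k))

omit [CharP k 3] in lemma hd2 (f : Rk k) (hf : f = X 2 ^ 2 + X 0 ^ 3 + X 1 ^ 4 + X 0 ^ 2 * X 1 ^ 2) :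
    pderiv 2 f = 2 * g4 k := by
  subst hf; simp [g4, pderiv_X, Pi.single_apply]

lemma hfcomb (f : Rk k) (hf : f = X 2 ^ 2 + X 0 ^ 3 + X 1 ^ 4 + X 0 ^ 2 * X 1 ^ 2) :
    f = X 2 * g4 k + X 1 * g3 k + g1 k + 2 * X 0 * g2 k := by
  subst hf; unfold g1 g2 g3 g4
  linear_combination (-(X 0^2 * X 1^2) : Rk k) * (h3R (k := k))

lemma two_two (p : Rk k) : 2 * (2 * p) = p := by
  linear_combination p * (h3R (k := k))

lemma ideal_eq (f : Rk k) (hf : f = X 2 ^ 2 + X 0 ^ 3 + X 1 ^ 4 + X 0 ^ 2 * X 1 ^ 2) :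
    Ideal.span {f, pderiv 0 f, pderiv 1 f, pderiv 2 f} = Jk k := by
  have m1 : g1 k ∈ Jk k := Ideal.subset_span (by simp [Set.mem_insert_iff])
  have m2 : g2 k ∈ Jk k := Ideal.subset_span (by simp [Set.mem_insert_iff])
  have m3 : g3 k ∈ Jk k := Ideal.subset_span (by simp [Set.mem_insert_iff])
  have m4 : g4 k ∈ Jk k := Ideal.subset_span (by simp [Set.mem_insert_iff])
  set I := Ideal.span {f, pderiv 0 f, pderiv 1 f, pderiv 2 f} with hI
  have mf : f ∈ I := Ideal.subset_span (by simp [Set.mem_insert_iff])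
  have md0 : pderiv 0 f ∈ I := Ideal.subset_span (by simp [Set.mem_insert_iff])
  have md1 : pderiv 1 f ∈ I := Ideal.subset_span (by simp [Set.mem_insert_iff])
  have md2 : pderiv 2 f ∈ I := Ideal.subset_span (by simp [Set.mem_insert_iff])
  have hg2 : g2 k ∈ I := by
    have h : g2 k = 2 * pderiv 0 f := by rw [hd0 f hf, two_two]
    rw [h]; exact Ideal.mul_mem_left _ _ md0
  have hg3 : g3 k ∈ I := by rw [← hd1 f hf]; exact md1
  have hg4 : g4 k ∈ I := by
    have h : g4 k = 2 * pderiv 2 f := by rw [hd2 f hf, two_two]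
    rw [h]; exact Ideal.mul_mem_left _ _ md2
  have hg1 : g1 k ∈ I := by
    have h : g1 k = f - X 2 * g4 k - X 1 * g3 k - 2 * X 0 * g2 k := by
      rw [hfcomb f hf]; ring
    rw [h]
    exact sub_mem (sub_mem (sub_mem mf (Ideal.mul_mem_left _ _ hg4)) (Ideal.mul_mem_left _ _ hg3)) (Ideal.mul_mem_left _ _ hg2)
  apply le_antisymm
  · rw [hI, Ideal.span_le]
    simp only [Set.insert_subset_iff, Set.singleton_subset_iff, SetLike.mem_coe]
    refine ⟨?_, ?_, ?_, ?_⟩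
    · rw [hfcomb f hf]
      exact add_mem (add_mem (add_mem (Ideal.mul_mem_left _ _ m4) (Ideal.mul_mem_left _ _ m3)) m1) (Ideal.mul_mem_left _ _ m2)
    · rw [hd0 f hf]; exact Ideal.mul_mem_left _ _ m2
    · rw [hd1 f hf]; exact m3
    · rw [hd2 f hf]; exact Ideal.mul_mem_left _ _ m4
  · rw [Jk, Ideal.span_le]
    simp only [Set.insert_subset_iff, Set.singleton_subset_iff, SetLike.mem_coe]
    exact ⟨hg1, hg2, hg3, hg4⟩

-- === Part 3 (appended) ===
lemma psi_B (j : Fin 7) : psi k (monomial (muv j) (1:k)) = Pi.single j 1 := by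
  funext i
  rw [psi_apply, coeff_monomial, coeff_monomial]
  have hn : ¬ muv j = nuv := by
    rw [muv, show nuv = Evec ![0,3,0] from rfl, Evec_eq]
    intro hh
    have hA : ∀ j : Fin 7, ∃ l, Mv j l ≠ (![0,3,0] : Fin 3 → ℕ) l := by decide
    obtain ⟨l, hl⟩ := hA j; exact hl (hh l)
  rw [if_neg hn]
  by_cases h : i = j
  · subst h; rw [if_pos rfl]; simp [Pi.single_apply]
  · have hne : ¬ muv j = muv i := by
      rw [muv, muv, Evec_eq]
      intro hh
      have hinj : ∀ i j : Fin 7, ¬ i = j → ∃ l, Mv j l ≠ Mv i l := by decide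
      obtain ⟨l, hl⟩ := hinj i j h; exact hl (hh l)
    rw [if_neg hne]
    simp [Pi.single_eq_of_ne h]

lemma indep : LinearIndependent k
    (fun i : Fin 7 => Ideal.Quotient.mk (Jk k) (monomial (muv i) (1:k))) := by
  rw [Fintype.linearIndependent_iff]
  intro g hg i
  have hmem : (∑ j, g j • monomial (muv j) (1:k)) ∈ Jk k := by
    rw [← Ideal.Quotient.eq_zero_iff_mem]
    have hmk : Ideal.Quotient.mk (Jk k) (∑ j, g j • monomial (muv j) (1:k))
        = ∑ j, g j • Ideal.Quotient.mk (Jk k) (monomial (muv j) (1:k)) := by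
      rw [← Ideal.Quotient.mkₐ_eq_mk k, map_sum]
      simp only [map_smul]
    rw [hmk, hg]
  have h0 := psi_J hmem
  have h1 : psi k (∑ j, g j • monomial (muv j) (1:k)) i = g i := by
    rw [map_sum]
    rw [Finset.sum_congr rfl (fun j _ => by rw [map_smul, psi_B])]
    simp [Pi.single_apply]
  rw [h0] at h1
  simpa using h1.symm

/- vector addition helper lemmas -/
lemma vecg4v (a b c : ℕ) : (fun j => ![a,b,c] j + ![0,0,1] j : Fin 3 → ℕ) = ![a,b,c+1] := by
  funext j; fin_cases j <;> simp
lemma vecg1v (a b : ℕ) : (fun j => ![a,b,0] j + ![3,0,0] j : Fin 3 → ℕ) = ![a+3,b,0] := by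
  funext j; fin_cases j <;> simp
lemma vecg2v (a b : ℕ) : (fun j => ![a,b,0] j + ![1,2,0] j : Fin 3 → ℕ) = ![a+1,b+2,0] := by
  funext j; fin_cases j <;> simp
lemma vecg3av (b : ℕ) : (fun j => ![0,b+1,0] j + ![0,3,0] j : Fin 3 → ℕ) = ![0,b+4,0] := by
  funext j; fin_cases j <;> simp
lemma vecg3bv (b : ℕ) : (fun j => ![0,b+1,0] j + ![2,1,0] j : Fin 3 → ℕ) = ![2,b+2,0] := by
  funext j; fin_cases j <;> simp
lemma vecg2v' (b : ℕ) : (fun j => ![1,b,0] j + ![1,2,0] j : Fin 3 → ℕ) = ![2,b+2,0] := by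
  funext j; fin_cases j <;> simp

lemma id_g4 (a b c : ℕ) :
    monomial (Evec ![a,b,c+1]) (1:k) = monomial (Evec ![a,b,c]) 1 * g4 k := by
  rw [g4_eq, mon_mul_mon, vecg4v]; norm_num
lemma id_g1 (a b : ℕ) :
    monomial (Evec ![a+3,b,0]) (1:k) = monomial (Evec ![a,b,0]) 1 * g1 k := by
  rw [g1_eq, mon_mul_mon, vecg1v]; norm_num
lemma id_g2 (a b : ℕ) :
    monomial (Evec ![a+1,b+2,0]) (1:k) = monomial (Evec ![a,b,0]) 1 * g2 k := by
  rw [g2_eq, mon_mul_mon, vecg2v]; norm_num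
lemma id_y4 (b : ℕ) :
    monomial (Evec ![0,b+4,0]) (1:k)
      = monomial (Evec ![0,b+1,0]) 1 * g3 k + monomial (Evec ![1,b,0]) 1 * g2 k := by
  rw [g3_eq, g2_eq, mul_sub, mon_mul_mon, mon_mul_mon, mon_mul_mon, vecg3av, vecg3bv, vecg2v']
  simp

lemma m1J : g1 k ∈ Jk k := Ideal.subset_span (by simp [Set.mem_insert_iff])
lemma m2J : g2 k ∈ Jk k := Ideal.subset_span (by simp [Set.mem_insert_iff])
lemma m3J : g3 k ∈ Jk k := Ideal.subset_span (by simp [Set.mem_insert_iff])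
lemma m4J : g4 k ∈ Jk k := Ideal.subset_span (by simp [Set.mem_insert_iff])

lemma mem_span_abc (a b c : ℕ) :
    Ideal.Quotient.mk (Jk k) (monomial (Evec ![a,b,c]) 1) ∈
      Submodule.span k (Set.range fun i : Fin 7 =>
        Ideal.Quotient.mk (Jk k) (monomial (muv i) (1:k))) := by
  have hbasis : ∀ i : Fin 7, Ideal.Quotient.mk (Jk k) (monomial (muv i) (1:k)) ∈
      Submodule.span k (Set.range fun i : Fin 7 =>
        Ideal.Quotient.mk (Jk k) (monomial (muv i) (1:k))) :=
    fun i => Submodule.subset_span ⟨i, rfl⟩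
  have hzero : ∀ p : Rk k, p ∈ Jk k → Ideal.Quotient.mk (Jk k) p ∈
      Submodule.span k (Set.range fun i : Fin 7 =>
        Ideal.Quotient.mk (Jk k) (monomial (muv i) (1:k))) := fun p hp => by
    rw [Ideal.Quotient.eq_zero_iff_mem.mpr hp]; exact Submodule.zero_mem _
  rcases c with _|c
  · rcases a with _|(_|(_|a))
    · rcases b with _|(_|(_|(_|b)))
      · exact hbasis 0
      · exact hbasis 3
      · exact hbasis 5
      · -- y^3 ≡ x^2 y
        have he : Ideal.Quotient.mk (Jk k) (monomial (Evec ![0,3,0]) (1:k))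
            = Ideal.Quotient.mk (Jk k) (monomial (Evec ![2,1,0]) (1:k)) := by
          rw [Ideal.Quotient.eq, ← g3_eq]; exact m3J
        exact he ▸ hbasis 6
      · -- y^(b+4) ∈ J
        rw [id_y4 b]
        exact hzero _ (add_mem (Ideal.mul_mem_left _ _ m3J) (Ideal.mul_mem_left _ _ m2J))
    · rcases b with _|(_|b)
      · exact hbasis 1
      · exact hbasis 4
      · rw [id_g2 0 b]; exact hzero _ (Ideal.mul_mem_left _ _ m2J)
    · rcases b with _|(_|b)
      · exact hbasis 2
      · exact hbasis 6
      · rw [id_g2 1 b]; exact hzero _ (Ideal.mul_mem_left _ _ m2J)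
    · rw [id_g1 a b]; exact hzero _ (Ideal.mul_mem_left _ _ m1J)
  · rw [id_g4 a b c]; exact hzero _ (Ideal.mul_mem_left _ _ m4J)

lemma span_top : ⊤ ≤ Submodule.span k (Set.range fun i : Fin 7 =>
    Ideal.Quotient.mk (Jk k) (monomial (muv i) (1:k))) := by
  intro q _
  obtain ⟨p, rfl⟩ := Ideal.Quotient.mk_surjective (I := Jk k) q
  rw [MvPolynomial.as_sum p, ← Ideal.Quotient.mkₐ_eq_mk k, map_sum]
  apply Submodule.sum_mem
  intro e _
  have h1 : (monomial e) (coeff e p) = coeff e p • monomial e (1:k) := by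
    rw [smul_monomial, smul_eq_mul, mul_one]
  rw [h1, map_smul]
  apply Submodule.smul_mem
  have he : e = Evec ![e 0, e 1, e 2] := by
    ext j; rw [Evec_apply]; fin_cases j <;> rfl
  rw [Ideal.Quotient.mkₐ_eq_mk, he]
  exact mem_span_abc (e 0) (e 1) (e 2)

end TjurinaAux


open MvPolynomial

/-- Tjurina algebra dimension. Variables: `X 0 = x`, `X 1 = y`, `X 2 = z`. -/
theorem tjurina_E6_1_char3 (k : Type*) [Field k] [CharP k 3]
    (f : MvPolynomial (Fin 3) k)
    (hf : f = X 2 ^ 2 + X 0 ^ 3 + X 1 ^ 4 + X 0 ^ 2 * X 1 ^ 2) :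
    Module.finrank k
      (MvPolynomial (Fin 3) k ⧸
        (Ideal.span {f, pderiv 0 f, pderiv 1 f, pderiv 2 f} :
          Ideal (MvPolynomial (Fin 3) k))) = 7 := by
  rw [ideal_eq f hf]
  have b7 : Module.Basis (Fin 7) k (Rk k ⧸ Jk k) := Module.Basis.mk indep span_top
  rw [Module.finrank_eq_card_basis b7, Fintype.card_fin]
end

section
/- Let k be a field of characteristic 3 and let f = z^2 + x^3 + x y^3 + x^2 y^2 in k[x,y,z]. Then the Tjurina algebra k[x,y,z]/(f, ∂f/∂x, ∂f/∂y, ∂f/∂z) has k-dimension 7. -/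
set_option maxHeartbeats 1000000
set_option synthInstance.maxHeartbeats 400000

open MvPolynomial

section TjurinaAux

variable {k : Type*} [Field k]

/-- exponents of the 7 basis monomials 1, x, y, x², xy, y², xy² -/
noncomputable def tjDD : Fin 7 → (Fin 3 →₀ ℕ)
  | 0 => 0
  | 1 => Finsupp.single 0 1
  | 2 => Finsupp.single 1 1
  | 3 => Finsupp.single 0 2
  | 4 => Finsupp.single 0 1 + Finsupp.single 1 1
  | 5 => Finsupp.single 1 2
  | 6 => Finsupp.single 0 1 + Finsupp.single 1 2

/-- the 7 basis monomials -/
noncomputable def tjVV : Fin 7 → MvPolynomial (Fin 3) k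
  | 0 => 1
  | 1 => X 0
  | 2 => X 1
  | 3 => X 0 ^ 2
  | 4 => X 0 * X 1
  | 5 => X 1 ^ 2
  | 6 => X 0 * X 1 ^ 2

lemma tjVV_eq_monomial (j : Fin 7) : (tjVV j : MvPolynomial (Fin 3) k) = monomial (tjDD j) 1 := by
  fin_cases j <;>
    simp [tjVV, tjDD, X, monomial_mul, monomial_pow, Finsupp.smul_single]

lemma finsupp_le3 (s m : Fin 3 →₀ ℕ) : s ≤ m ↔ s 0 ≤ m 0 ∧ s 1 ≤ m 1 ∧ s 2 ≤ m 2 := by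
  constructor
  · intro h; exact ⟨h 0, h 1, h 2⟩
  · rintro ⟨h0, h1, h2⟩ a; fin_cases a <;> assumption

lemma finsupp_eq3 (s m : Fin 3 →₀ ℕ) : s = m ↔ s 0 = m 0 ∧ s 1 = m 1 ∧ s 2 = m 2 := by
  constructor
  · rintro rfl; exact ⟨rfl, rfl, rfl⟩
  · rintro ⟨h0, h1, h2⟩; ext a; fin_cases a <;> assumption

/-- normal form coefficient extraction -/
noncomputable def tjNN : MvPolynomial (Fin 3) k →ₗ[k] (Fin 7 → k) where
  toFun p i := coeff (tjDD i) p + if i = 6 then coeff (Finsupp.single 1 3) p else 0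
  map_add' p q := by
    funext i
    simp only [coeff_add, Pi.add_apply]
    split <;> ring
  map_smul' c p := by
    funext i
    simp only [coeff_smul, Pi.smul_apply, RingHom.id_apply, smul_eq_mul]
    split <;> ring

lemma tjNN_vv (j : Fin 7) : tjNN (tjVV j : MvPolynomial (Fin 3) k) = Pi.single j 1 := by
  funext i
  rw [tjVV_eq_monomial]
  fin_cases i <;> fin_cases j <;>
    simp [tjNN, tjDD, coeff_monomial, coeff_one, finsupp_eq3, Finsupp.single_apply,
      Pi.single_apply]

/-- The simplified ideal -/
noncomputable def tjJ : Ideal (MvPolynomial (Fin 3) k) :=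
  Ideal.span {X 0 ^ 3, X 1 ^ 3 - X 0 * X 1 ^ 2, X 0 ^ 2 * X 1, X 2}

lemma tjNN_mul_monomial (q : MvPolynomial (Fin 3) k) (s : Fin 3 →₀ ℕ) (i : Fin 7) :
    tjNN (q * monomial s 1) i =
      (if s ≤ tjDD i then coeff (tjDD i - s) q else 0) +
        if i = 6 then (if s ≤ Finsupp.single 1 3 then coeff (Finsupp.single 1 3 - s) q else 0)
          else 0 := by
  simp [tjNN, coeff_mul_monomial']

lemma tjNN_ker {g : MvPolynomial (Fin 3) k} (hg : g ∈ (tjJ : Ideal (MvPolynomial (Fin 3) k))) :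
    tjNN g = 0 := by
  have key : ∀ q : MvPolynomial (Fin 3) k, tjNN (q * g) = 0 := by
    refine Submodule.span_induction
      (p := fun x _ => ∀ q : MvPolynomial (Fin 3) k, tjNN (q * x) = 0) ?_ ?_ ?_ ?_ hg
    · intro x hx q
      simp only [Set.mem_insert_iff, Set.mem_singleton_iff] at hx
      rcases hx with rfl | rfl | rfl | rfl
      · -- x³
        rw [show (X 0 ^ 3 : MvPolynomial (Fin 3) k) = monomial (Finsupp.single 0 3) 1 from
          X_pow_eq_monomial]
        funext i
        fin_cases i <;>
          simp [tjNN_mul_monomial, finsupp_le3, tjDD, Finsupp.single_apply]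
      · -- y³ - xy²
        rw [mul_sub]
        rw [show (X 1 ^ 3 : MvPolynomial (Fin 3) k) = monomial (Finsupp.single 1 3) 1 from
          X_pow_eq_monomial,
          show (X 0 * X 1 ^ 2 : MvPolynomial (Fin 3) k) =
            monomial (Finsupp.single 0 1 + Finsupp.single 1 2) 1 from tjVV_eq_monomial 6]
        funext i
        rw [map_sub]
        fin_cases i <;>
          simp [tjNN_mul_monomial, finsupp_le3, tjDD, Finsupp.single_apply]
      · -- x²y
        rw [show (X 0 ^ 2 * X 1 : MvPolynomial (Fin 3) k) =
            monomial (Finsupp.single 0 2 + Finsupp.single 1 1) 1 by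
          rw [X_pow_eq_monomial, X, monomial_mul, mul_one]]
        funext i
        fin_cases i <;>
          simp [tjNN_mul_monomial, finsupp_le3, tjDD, Finsupp.single_apply]
      · -- z
        rw [show (X 2 : MvPolynomial (Fin 3) k) = monomial (Finsupp.single 2 1) 1 from rfl]
        funext i
        fin_cases i <;>
          simp [tjNN_mul_monomial, finsupp_le3, tjDD, Finsupp.single_apply]
    · intro q; rw [mul_zero, map_zero]
    · intro x y _ _ hx hy q; rw [mul_add, map_add, hx, hy, add_zero]
    · intro a x _ hx q
      rw [smul_eq_mul, show q * (a * x) = (q * a) * x by ring, hx]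
  simpa using key 1
end TjurinaAux

/-- Tjurina algebra dimension. Variables: `X 0 = x`, `X 1 = y`, `X 2 = z`. -/
theorem tjurina_E7_1_char3 (k : Type*) [Field k] [CharP k 3]
    (f : MvPolynomial (Fin 3) k)
    (hf : f = X 2 ^ 2 + X 0 ^ 3 + X 0 * X 1 ^ 3 + X 0 ^ 2 * X 1 ^ 2) :
    Module.finrank k
      (MvPolynomial (Fin 3) k ⧸
        (Ideal.span {f, pderiv 0 f, pderiv 1 f, pderiv 2 f} :
          Ideal (MvPolynomial (Fin 3) k))) = 7 := by
  have h3 : (3 : MvPolynomial (Fin 3) k) = 0 := CharP.cast_eq_zero _ 3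
  -- compute the partial derivatives
  have h0 : pderiv 0 f = X 1 ^ 3 - X 0 * X 1 ^ 2 := by
    rw [hf]
    simp only [pderiv_X, pderiv_mul, pderiv_pow, map_add, Pi.single_apply,
      show (2:Fin 3) ≠ 0 by decide, show (1:Fin 3) ≠ 0 by decide, show (0:Fin 3) = 0 from rfl,
      if_true, if_false, ite_true, ite_false]
    linear_combination (X 0 ^ 2 + X 0 * X 1 ^ 2) * h3
  have h1 : pderiv 1 f = -(X 0 ^ 2 * X 1) := by
    rw [hf]
    simp only [pderiv_X, pderiv_mul, pderiv_pow, map_add, Pi.single_apply,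
      show (2:Fin 3) ≠ 1 by decide, show (0:Fin 3) ≠ 1 by decide, show (1:Fin 3) = 1 from rfl,
      if_true, if_false, ite_true, ite_false]
    linear_combination (X 0 * X 1 ^ 2 + X 0 ^ 2 * X 1) * h3
  have h2 : pderiv 2 f = -(X 2) := by
    rw [hf]
    simp only [pderiv_X, pderiv_mul, pderiv_pow, map_add, Pi.single_apply,
      show (0:Fin 3) ≠ 2 by decide, show (1:Fin 3) ≠ 2 by decide, show (2:Fin 3) = 2 from rfl,
      if_true, if_false, ite_true, ite_false]
    linear_combination X 2 * h3
  -- the ideal equals tjJ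
  have hIJ : (Ideal.span {f, pderiv 0 f, pderiv 1 f, pderiv 2 f} :
      Ideal (MvPolynomial (Fin 3) k)) = tjJ := by
    have m1 : (X 0 ^ 3 : MvPolynomial (Fin 3) k) ∈ tjJ :=
      Ideal.subset_span (by simp)
    have m2 : (X 1 ^ 3 - X 0 * X 1 ^ 2 : MvPolynomial (Fin 3) k) ∈ tjJ :=
      Ideal.subset_span (by simp)
    have m3 : (X 0 ^ 2 * X 1 : MvPolynomial (Fin 3) k) ∈ tjJ :=
      Ideal.subset_span (by simp)
    have m4 : (X 2 : MvPolynomial (Fin 3) k) ∈ tjJ :=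
      Ideal.subset_span (by simp)
    apply le_antisymm
    · rw [Ideal.span_le]
      intro x hx
      simp only [Set.mem_insert_iff, Set.mem_singleton_iff] at hx
      rcases hx with rfl | rfl | rfl | rfl
      · rw [hf, show (X 2 ^ 2 + X 0 ^ 3 + X 0 * X 1 ^ 3 + X 0 ^ 2 * X 1 ^ 2 :
            MvPolynomial (Fin 3) k) =
          X 0 ^ 3 + X 2 * X 2 + X 0 * (X 1 ^ 3 - X 0 * X 1 ^ 2) + (2 * X 1) * (X 0 ^ 2 * X 1)
          by ring]
        exact add_mem (add_mem (add_mem m1 (Ideal.mul_mem_left _ _ m4))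
          (Ideal.mul_mem_left _ _ m2)) (Ideal.mul_mem_left _ _ m3)
      · rw [h0]; exact m2
      · rw [h1]; exact neg_mem m3
      · rw [h2]; exact neg_mem m4
    · rw [tjJ, Ideal.span_le]
      have n2 : (X 1 ^ 3 - X 0 * X 1 ^ 2 : MvPolynomial (Fin 3) k) ∈
          Ideal.span {f, pderiv 0 f, pderiv 1 f, pderiv 2 f} := by
        rw [← h0]; exact Ideal.subset_span (by simp)
      have n3 : (X 0 ^ 2 * X 1 : MvPolynomial (Fin 3) k) ∈
          Ideal.span {f, pderiv 0 f, pderiv 1 f, pderiv 2 f} := by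
        rw [show (X 0 ^ 2 * X 1 : MvPolynomial (Fin 3) k) = -(-(X 0 ^ 2 * X 1)) by ring, ← h1]
        exact neg_mem (Ideal.subset_span (by simp))
      have n4 : (X 2 : MvPolynomial (Fin 3) k) ∈
          Ideal.span {f, pderiv 0 f, pderiv 1 f, pderiv 2 f} := by
        rw [show (X 2 : MvPolynomial (Fin 3) k) = -(-(X 2)) by ring, ← h2]
        exact neg_mem (Ideal.subset_span (by simp))
      have n1 : (X 0 ^ 3 : MvPolynomial (Fin 3) k) ∈
          Ideal.span {f, pderiv 0 f, pderiv 1 f, pderiv 2 f} := by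
        rw [show (X 0 ^ 3 : MvPolynomial (Fin 3) k) =
          f - X 2 * X 2 - X 0 * (X 1 ^ 3 - X 0 * X 1 ^ 2) - (2 * X 1) * (X 0 ^ 2 * X 1) by
            rw [hf]; ring]
        exact sub_mem (sub_mem (sub_mem (Ideal.subset_span (by simp))
          (Ideal.mul_mem_left _ _ n4)) (Ideal.mul_mem_left _ _ n2)) (Ideal.mul_mem_left _ _ n3)
      intro x hx
      simp only [Set.mem_insert_iff, Set.mem_singleton_iff] at hx
      rcases hx with rfl | rfl | rfl | rfl
      exacts [n1, n2, n3, n4]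
  rw [hIJ]
  -- set up the basis
  set J : Ideal (MvPolynomial (Fin 3) k) := tjJ with hJ
  have m1 : (X 0 ^ 3 : MvPolynomial (Fin 3) k) ∈ J := Ideal.subset_span (by simp)
  have m2 : (X 1 ^ 3 - X 0 * X 1 ^ 2 : MvPolynomial (Fin 3) k) ∈ J := Ideal.subset_span (by simp)
  have m3 : (X 0 ^ 2 * X 1 : MvPolynomial (Fin 3) k) ∈ J := Ideal.subset_span (by simp)
  have m4 : (X 2 : MvPolynomial (Fin 3) k) ∈ J := Ideal.subset_span (by simp)
  set b : Fin 7 → (MvPolynomial (Fin 3) k ⧸ J) :=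
    fun i => Ideal.Quotient.mk J (tjVV i) with hb
  have hspan : ⊤ ≤ Submodule.span k (Set.range b) := by
    rintro x -
    obtain ⟨p, rfl⟩ := Ideal.Quotient.mk_surjective x
    induction p using MvPolynomial.induction_on with
    | C a =>
        rw [show ((Ideal.Quotient.mk J) (C a) : MvPolynomial (Fin 3) k ⧸ J) =
          a • Ideal.Quotient.mk J (tjVV 0) by
            rw [show (tjVV 0 : MvPolynomial (Fin 3) k) = 1 from rfl,
              (Ideal.Quotient.mk J).map_one, ← MvPolynomial.algebraMap_eq,
              Ideal.Quotient.mk_algebraMap, Algebra.algebraMap_eq_smul_one]]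
        exact Submodule.smul_mem _ _ (Submodule.subset_span ⟨0, rfl⟩)
    | add p q hp hq => rw [(Ideal.Quotient.mk J).map_add]; exact add_mem hp hq
    | mul_X p n hp =>
        rw [(Ideal.Quotient.mk J).map_mul]
        fin_cases n
        · -- multiplication by x
          show (Ideal.Quotient.mk J) p * (Ideal.Quotient.mk J) (X 0) ∈
            Submodule.span k (Set.range b)
          refine Submodule.span_induction
            (p := fun y _ => y * Ideal.Quotient.mk J (X 0) ∈ Submodule.span k (Set.range b))
            ?_ ?_ ?_ ?_ hp
          · rintro _ ⟨j, rfl⟩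
            fin_cases j
            · show (Ideal.Quotient.mk J) (tjVV 0) * (Ideal.Quotient.mk J) (X 0) ∈
                Submodule.span k (Set.range b)
              rw [← (Ideal.Quotient.mk J).map_mul,
                show (tjVV 0 * X 0 : MvPolynomial (Fin 3) k) = tjVV 1 by
                  simp only [tjVV]; try ring]
              exact Submodule.subset_span ⟨1, rfl⟩
            · show (Ideal.Quotient.mk J) (tjVV 1) * (Ideal.Quotient.mk J) (X 0) ∈
                Submodule.span k (Set.range b)
              rw [← (Ideal.Quotient.mk J).map_mul,
                show (tjVV 1 * X 0 : MvPolynomial (Fin 3) k) = tjVV 3 by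
                  simp only [tjVV]; try ring]
              exact Submodule.subset_span ⟨3, rfl⟩
            · show (Ideal.Quotient.mk J) (tjVV 2) * (Ideal.Quotient.mk J) (X 0) ∈
                Submodule.span k (Set.range b)
              rw [← (Ideal.Quotient.mk J).map_mul,
                show (tjVV 2 * X 0 : MvPolynomial (Fin 3) k) = tjVV 4 by
                  simp only [tjVV]; try ring]
              exact Submodule.subset_span ⟨4, rfl⟩
            · show (Ideal.Quotient.mk J) (tjVV 3) * (Ideal.Quotient.mk J) (X 0) ∈
                Submodule.span k (Set.range b)
              rw [← (Ideal.Quotient.mk J).map_mul,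
                show (tjVV 3 * X 0 : MvPolynomial (Fin 3) k) = X 0 ^ 3 by
                  simp only [tjVV]; try ring,
                Ideal.Quotient.eq_zero_iff_mem.mpr (m1)]
              exact zero_mem _
            · show (Ideal.Quotient.mk J) (tjVV 4) * (Ideal.Quotient.mk J) (X 0) ∈
                Submodule.span k (Set.range b)
              rw [← (Ideal.Quotient.mk J).map_mul,
                show (tjVV 4 * X 0 : MvPolynomial (Fin 3) k) = X 0 ^ 2 * X 1 by
                  simp only [tjVV]; try ring,
                Ideal.Quotient.eq_zero_iff_mem.mpr (m3)]
              exact zero_mem _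
            · show (Ideal.Quotient.mk J) (tjVV 5) * (Ideal.Quotient.mk J) (X 0) ∈
                Submodule.span k (Set.range b)
              rw [← (Ideal.Quotient.mk J).map_mul,
                show (tjVV 5 * X 0 : MvPolynomial (Fin 3) k) = tjVV 6 by
                  simp only [tjVV]; try ring]
              exact Submodule.subset_span ⟨6, rfl⟩
            · show (Ideal.Quotient.mk J) (tjVV 6) * (Ideal.Quotient.mk J) (X 0) ∈
                Submodule.span k (Set.range b)
              rw [← (Ideal.Quotient.mk J).map_mul,
                show (tjVV 6 * X 0 : MvPolynomial (Fin 3) k) = X 1 * (X 0 ^ 2 * X 1) by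
                  simp only [tjVV]; try ring,
                Ideal.Quotient.eq_zero_iff_mem.mpr (Ideal.mul_mem_left _ _ m3)]
              exact zero_mem _
          · show (0 : MvPolynomial (Fin 3) k ⧸ J) * Ideal.Quotient.mk J (X 0) ∈
              Submodule.span k (Set.range b)
            rw [zero_mul]; exact zero_mem _
          · intro y z _ _ hy hz
            show (y + z) * Ideal.Quotient.mk J (X 0) ∈ Submodule.span k (Set.range b)
            rw [add_mul]; exact add_mem hy hz
          · intro a y _ hy
            show (a • y) * Ideal.Quotient.mk J (X 0) ∈ Submodule.span k (Set.range b)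
            rw [smul_mul_assoc]; exact Submodule.smul_mem _ _ hy
        · -- multiplication by y
          show (Ideal.Quotient.mk J) p * (Ideal.Quotient.mk J) (X 1) ∈
            Submodule.span k (Set.range b)
          refine Submodule.span_induction
            (p := fun y _ => y * Ideal.Quotient.mk J (X 1) ∈ Submodule.span k (Set.range b))
            ?_ ?_ ?_ ?_ hp
          · rintro _ ⟨j, rfl⟩
            fin_cases j
            · show (Ideal.Quotient.mk J) (tjVV 0) * (Ideal.Quotient.mk J) (X 1) ∈
                Submodule.span k (Set.range b)
              rw [← (Ideal.Quotient.mk J).map_mul,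
                show (tjVV 0 * X 1 : MvPolynomial (Fin 3) k) = tjVV 2 by
                  simp only [tjVV]; try ring]
              exact Submodule.subset_span ⟨2, rfl⟩
            · show (Ideal.Quotient.mk J) (tjVV 1) * (Ideal.Quotient.mk J) (X 1) ∈
                Submodule.span k (Set.range b)
              rw [← (Ideal.Quotient.mk J).map_mul,
                show (tjVV 1 * X 1 : MvPolynomial (Fin 3) k) = tjVV 4 by
                  simp only [tjVV]; try ring]
              exact Submodule.subset_span ⟨4, rfl⟩
            · show (Ideal.Quotient.mk J) (tjVV 2) * (Ideal.Quotient.mk J) (X 1) ∈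
                Submodule.span k (Set.range b)
              rw [← (Ideal.Quotient.mk J).map_mul,
                show (tjVV 2 * X 1 : MvPolynomial (Fin 3) k) = tjVV 5 by
                  simp only [tjVV]; try ring]
              exact Submodule.subset_span ⟨5, rfl⟩
            · show (Ideal.Quotient.mk J) (tjVV 3) * (Ideal.Quotient.mk J) (X 1) ∈
                Submodule.span k (Set.range b)
              rw [← (Ideal.Quotient.mk J).map_mul,
                show (tjVV 3 * X 1 : MvPolynomial (Fin 3) k) = X 0 ^ 2 * X 1 by
                  simp only [tjVV]; try ring,
                Ideal.Quotient.eq_zero_iff_mem.mpr (m3)]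
              exact zero_mem _
            · show (Ideal.Quotient.mk J) (tjVV 4) * (Ideal.Quotient.mk J) (X 1) ∈
                Submodule.span k (Set.range b)
              rw [← (Ideal.Quotient.mk J).map_mul,
                show (tjVV 4 * X 1 : MvPolynomial (Fin 3) k) = tjVV 6 by
                  simp only [tjVV]; try ring]
              exact Submodule.subset_span ⟨6, rfl⟩
            · -- y² · y = y³ ≡ xy²
              show (Ideal.Quotient.mk J) (tjVV 5) * (Ideal.Quotient.mk J) (X 1) ∈
                Submodule.span k (Set.range b)
              rw [← (Ideal.Quotient.mk J).map_mul,
                show ((Ideal.Quotient.mk J) (tjVV 5 * X 1) : MvPolynomial (Fin 3) k ⧸ J) =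
                  (Ideal.Quotient.mk J) (tjVV 6) from Ideal.Quotient.eq.mpr (by
                    rw [show (tjVV 5 * X 1 - tjVV 6 : MvPolynomial (Fin 3) k) =
                      X 1 ^ 3 - X 0 * X 1 ^ 2 by simp only [tjVV]; try ring]
                    exact m2)]
              exact Submodule.subset_span ⟨6, rfl⟩
            · show (Ideal.Quotient.mk J) (tjVV 6) * (Ideal.Quotient.mk J) (X 1) ∈
                Submodule.span k (Set.range b)
              rw [← (Ideal.Quotient.mk J).map_mul,
                show (tjVV 6 * X 1 : MvPolynomial (Fin 3) k) = X 0 * (X 1 ^ 3 - X 0 * X 1 ^ 2) + X 1 * (X 0 ^ 2 * X 1) by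
                  simp only [tjVV]; try ring,
                Ideal.Quotient.eq_zero_iff_mem.mpr (add_mem (Ideal.mul_mem_left _ _ m2) (Ideal.mul_mem_left _ _ m3))]
              exact zero_mem _
          · show (0 : MvPolynomial (Fin 3) k ⧸ J) * Ideal.Quotient.mk J (X 1) ∈
              Submodule.span k (Set.range b)
            rw [zero_mul]; exact zero_mem _
          · intro y z _ _ hy hz
            show (y + z) * Ideal.Quotient.mk J (X 1) ∈ Submodule.span k (Set.range b)
            rw [add_mul]; exact add_mem hy hz
          · intro a y _ hy
            show (a • y) * Ideal.Quotient.mk J (X 1) ∈ Submodule.span k (Set.range b)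
            rw [smul_mul_assoc]; exact Submodule.smul_mem _ _ hy
        · -- multiplication by z
          show (Ideal.Quotient.mk J) p * (Ideal.Quotient.mk J) (X 2) ∈
            Submodule.span k (Set.range b)
          rw [show ((Ideal.Quotient.mk J) (X 2) : MvPolynomial (Fin 3) k ⧸ J) = 0 from
            Ideal.Quotient.eq_zero_iff_mem.mpr m4, mul_zero]
          exact zero_mem _
  have hli : LinearIndependent k b := by
    rw [Fintype.linearIndependent_iff]
    intro g hg i
    have hmem : (∑ j : Fin 7, g j • tjVV j : MvPolynomial (Fin 3) k) ∈ J := by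
      rw [← Ideal.Quotient.eq_zero_iff_mem (I := J)]
      calc (Ideal.Quotient.mk J) (∑ j : Fin 7, g j • tjVV j)
          = (Ideal.Quotient.mkₐ k J).toLinearMap (∑ j : Fin 7, g j • tjVV j) := rfl
        _ = ∑ j : Fin 7, g j • (Ideal.Quotient.mkₐ k J).toLinearMap (tjVV j) := by
            rw [map_sum]; simp only [map_smul]
        _ = ∑ j : Fin 7, g j • b j := rfl
        _ = 0 := hg
    have := tjNN_ker hmem
    rw [map_sum] at this
    have h' := congrFun this i
    simp only [map_smul, tjNN_vv, Finset.sum_apply, Pi.smul_apply, Pi.single_apply,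
      smul_eq_mul, mul_ite, mul_one, mul_zero, Pi.zero_apply, Finset.sum_ite_eq,
      Finset.sum_ite_eq', Finset.mem_univ, if_true] at h'
    exact h' 
  have B := Module.Basis.mk hli hspan
  rw [Module.finrank_eq_card_basis B, Fintype.card_fin]
end

section
/- Let k be a field of characteristic 2 and let f = z^2 + x^3 + y^2 z + x y z in k[x,y,z]. Then the Tjurina algebra k[x,y,z]/(f, ∂f/∂x, ∂f/∂y, ∂f/∂z) has k-dimension 6. -/
set_option synthInstance.maxHeartbeats 400000

open MvPolynomial Matrix

namespace TjE6
variable (k : Type*) [Field k] [CharP k 2]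

set_option linter.unusedSectionVars false

noncomputable def E (i j : Fin 6) : Matrix (Fin 6) (Fin 6) k := Matrix.single i j 1

lemma hE (a b c d : Fin 6) : E k a b * E k c d = if b = c then E k a d else 0 := by
  split
  · subst ‹b = c›; simp [E]
  · exact Matrix.single_mul_single_of_ne (h := ‹b ≠ c›) ..

noncomputable def Mx : Matrix (Fin 6) (Fin 6) k := E k 1 0 + E k 5 1 + E k 4 2
noncomputable def My : Matrix (Fin 6) (Fin 6) k := E k 2 0 + E k 4 1 + E k 4 2 + E k 5 3
noncomputable def Mz : Matrix (Fin 6) (Fin 6) k := E k 3 0 + E k 5 2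

lemma h11 : (1:k) + 1 = 0 := by
  rw [one_add_one_eq_two]; exact CharP.cast_eq_zero k 2

lemma hE2 (a b : Fin 6) : E k a b + E k a b = 0 := by
  rw [E, ← Matrix.single_add, h11, Matrix.single_zero]

lemma hxy : Mx k * My k = My k * Mx k := by simp [Mx, My, add_mul, mul_add, hE]
lemma hxz : Mx k * Mz k = Mz k * Mx k := by simp [Mx, Mz, add_mul, mul_add, hE]
lemma hyz : My k * Mz k = Mz k * My k := by simp [My, Mz, add_mul, mul_add, hE]

lemma hg1 : Mx k * Mx k + My k * Mz k = 0 := by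
  simp [Mx, My, Mz, add_mul, mul_add, hE, hE2]
lemma hg2 : Mx k * Mz k = 0 := by simp [Mx, Mz, add_mul, mul_add, hE]
lemma hg3 : My k * My k + Mx k * My k = 0 := by
  simp [Mx, My, add_mul, mul_add, hE, hE2]
lemma hgf : Mz k * Mz k + Mx k * Mx k * Mx k + My k * My k * Mz k + Mx k * My k * Mz k = 0 := by
  simp [Mx, My, Mz, add_mul, mul_add, hE, hE2]

lemma hMxMy : Mx k * My k = E k 4 0 := by simp [Mx, My, add_mul, mul_add, hE]
lemma hMyMz : My k * Mz k = E k 5 0 := by simp [My, Mz, add_mul, mul_add, hE]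

noncomputable def s : Set (Matrix (Fin 6) (Fin 6) k) := {Mx k, My k, Mz k}

lemma hcomm : ∀ a ∈ s k, ∀ b ∈ s k, a * b = b * a := by
  intro a ha b hb
  rcases ha with rfl | rfl | rfl <;> rcases hb with rfl | rfl | rfl <;>
    first | rfl | rw [hxy] | rw [hxz] | rw [hyz]

noncomputable instance : CommRing (Algebra.adjoin k (s k)) :=
  Algebra.adjoinCommRingOfComm k (hcomm k)

noncomputable def xA : Algebra.adjoin k (s k) :=
  ⟨Mx k, Algebra.subset_adjoin (by simp [s])⟩
noncomputable def yA : Algebra.adjoin k (s k) :=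
  ⟨My k, Algebra.subset_adjoin (by simp [s])⟩
noncomputable def zA : Algebra.adjoin k (s k) :=
  ⟨Mz k, Algebra.subset_adjoin (by simp [s])⟩

noncomputable def φ : MvPolynomial (Fin 3) k →ₐ[k] Algebra.adjoin k (s k) :=
  aeval ![xA k, yA k, zA k]

lemma φ_X0 : φ k (X 0) = xA k := by simp [φ]
lemma φ_X1 : φ k (X 1) = yA k := by simp [φ]
lemma φ_X2 : φ k (X 2) = zA k := by simp [φ]

lemma coe_xA : ((xA k : Matrix (Fin 6) (Fin 6) k)) = Mx k := rfl
lemma coe_yA : ((yA k : Matrix (Fin 6) (Fin 6) k)) = My k := rfl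
lemma coe_zA : ((zA k : Matrix (Fin 6) (Fin 6) k)) = Mz k := rfl

lemma hAgx : xA k * xA k + yA k * zA k = 0 := by
  apply Subtype.ext; push_cast [coe_xA, coe_yA, coe_zA]; exact hg1 k

lemma hAgy : xA k * zA k = 0 := by
  apply Subtype.ext; push_cast [coe_xA, coe_zA]; exact hg2 k

lemma hAgz : yA k * yA k + xA k * yA k = 0 := by
  apply Subtype.ext; push_cast [coe_xA, coe_yA]; exact hg3 k

lemma hAf : zA k * zA k + xA k * xA k * xA k + yA k * yA k * zA k + xA k * yA k * zA k = 0 := by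
  apply Subtype.ext; push_cast [coe_xA, coe_yA, coe_zA]; exact hgf k

end TjE6

set_option maxHeartbeats 1000000 in
open TjE6 in
/-- Tjurina algebra dimension. Variables: `X 0 = x`, `X 1 = y`, `X 2 = z`. -/
theorem tjurina_E6_1_char2 (k : Type*) [Field k] [CharP k 2]
    (f : MvPolynomial (Fin 3) k)
    (hf : f = X 2 ^ 2 + X 0 ^ 3 + X 1 ^ 2 * X 2 + X 0 * X 1 * X 2) :
    Module.finrank k
      (MvPolynomial (Fin 3) k ⧸
        (Ideal.span {f, pderiv 0 f, pderiv 1 f, pderiv 2 f} :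
          Ideal (MvPolynomial (Fin 3) k))) = 6 := by
  subst hf
  set P := MvPolynomial (Fin 3) k
  have h2 : (2 : P) = 0 := CharP.cast_eq_zero _ 2
  set f : P := X 2 ^ 2 + X 0 ^ 3 + X 1 ^ 2 * X 2 + X 0 * X 1 * X 2 with hf
  set gx : P := X 0 ^ 2 + X 1 * X 2 with hgx
  set gy : P := X 0 * X 2 with hgy
  set gz : P := X 1 ^ 2 + X 0 * X 1 with hgz
  have hd0 : pderiv 0 f = gx := by
    rw [hf, hgx]; simp [pderiv_X, Pi.single_apply]
    linear_combination (X 0 : P) ^ 2 * h2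
  have hd1 : pderiv 1 f = gy := by
    rw [hf, hgy]; simp [pderiv_X, Pi.single_apply]
    linear_combination (X 1 * X 2 : P) * h2
  have hd2 : pderiv 2 f = gz := by
    rw [hf, hgz]; simp [pderiv_X, Pi.single_apply]
    linear_combination h2
  rw [hd0, hd1, hd2]
  set I : Ideal P := Ideal.span {f, gx, gy, gz} with hI
  have hmem : ∀ (p c1 c2 c3 c4 : P), p = c1 * f + c2 * gx + c3 * gy + c4 * gz → p ∈ I := by
    intro p c1 c2 c3 c4 hp
    rw [hp]
    have hfm : f ∈ I := Ideal.subset_span (by simp)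
    have hxm : gx ∈ I := Ideal.subset_span (by simp)
    have hym : gy ∈ I := Ideal.subset_span (by simp)
    have hzm : gz ∈ I := Ideal.subset_span (by simp)
    exact add_mem (add_mem (add_mem (I.mul_mem_left _ hfm) (I.mul_mem_left _ hxm))
      (I.mul_mem_left _ hym)) (I.mul_mem_left _ hzm)
  set Q := P ⧸ I
  let q : P → Q := Ideal.Quotient.mk I
  let m : Fin 6 → P := ![1, X 0, X 1, X 2, X 0 * X 1, X 1 * X 2]
  let v : Fin 6 → Q := fun i => q (m i)
  have key : ∀ (a b : P), a - b ∈ I → q a = q b := fun a b h => Ideal.Quotient.eq.mpr h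
  have zkey : ∀ a : P, a ∈ I → q a = 0 := fun a h => Ideal.Quotient.eq_zero_iff_mem.mpr h
  have e_xx : q (X 0 * X 0) = q (X 1 * X 2) := key _ _ <| hmem _ 0 1 0 0 (by
    rw [hgx]; linear_combination (-(X 1 * X 2) : P) * h2)
  have e_yy : q (X 1 * X 1) = q (X 0 * X 1) := key _ _ <| hmem _ 0 0 0 1 (by
    rw [hgz]; linear_combination (-(X 0 * X 1) : P) * h2)
  have e_xz : q (X 0 * X 2) = 0 := zkey _ <| hmem _ 0 0 1 0 (by rw [hgy]; ring)
  have e_zz : q (X 2 * X 2) = 0 := zkey _ <| hmem _ 1 (X 0) (X 1) (X 2) (by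
    rw [hf, hgx, hgy, hgz]
    linear_combination (-(X 0 ^ 3 + X 1 ^ 2 * X 2 + 2 * (X 0 * X 1 * X 2)) : P) * h2)
  have e_xxy : q (X 0 * X 1 * X 0) = 0 := zkey _ <| hmem _ 0 (X 1) (X 1) (X 2) (by
    rw [hgx, hgy, hgz]
    linear_combination (-(X 1 ^ 2 * X 2 + X 0 * X 1 * X 2) : P) * h2)
  have e_xyy : q (X 0 * X 1 * X 1) = 0 := zkey _ <| hmem _ 0 (X 1) (X 1) (X 0 + X 2) (by
    rw [hgx, hgy, hgz]
    linear_combination (-(X 0 ^ 2 * X 1 + X 1 ^ 2 * X 2 + X 0 * X 1 * X 2) : P) * h2)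
  have e_xyz : q (X 0 * X 1 * X 2) = 0 := zkey _ <| hmem _ 0 0 (X 1) 0 (by rw [hgy]; ring)
  have e_yzx : q (X 1 * X 2 * X 0) = 0 := by
    rw [show (X 1 : P) * X 2 * X 0 = X 0 * X 1 * X 2 by ring]; exact e_xyz
  have e_yzy : q (X 1 * X 2 * X 1) = 0 := zkey _ <| hmem _ 0 0 (X 1) (X 2) (by
    rw [hgy, hgz]
    linear_combination (-(X 0 * X 1 * X 2) : P) * h2)
  have e_yzz : q (X 1 * X 2 * X 2) = 0 := zkey _ <|
    hmem _ (X 1) (X 1 * X 0) (X 1 * X 1) (X 1 * X 2) (by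
      rw [hf, hgx, hgy, hgz]
      linear_combination (-(X 1 * (X 0 ^ 3 + X 1 ^ 2 * X 2 + 2 * (X 0 * X 1 * X 2))) : P) * h2)
  -- spanning
  let S : Submodule k Q := Submodule.span k (Set.range v)
  have hv : ∀ i, v i ∈ S := fun i => Submodule.subset_span ⟨i, rfl⟩
  have hb0 : q 1 ∈ S := hv 0
  have hb1 : q (X 0) ∈ S := hv 1
  have hb2 : q (X 1) ∈ S := hv 2
  have hb3 : q (X 2) ∈ S := hv 3
  have hb4 : q (X 0 * X 1) ∈ S := hv 4
  have hb5 : q (X 1 * X 2) ∈ S := hv 5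
  have hq_mul : ∀ a b : P, q (a * b) = q a * q b := fun a b => map_mul _ a b
  have hmulX : ∀ (n : Fin 3) (x : Q), x ∈ S → x * q (X n) ∈ S := by
    intro n x hx
    induction hx using Submodule.span_induction with
    | mem x hx =>
      obtain ⟨j, rfl⟩ := hx
      fin_cases j <;> fin_cases n
      · show q 1 * q (X 0) ∈ S; rw [← hq_mul, one_mul]; exact hb1
      · show q 1 * q (X 1) ∈ S; rw [← hq_mul, one_mul]; exact hb2
      · show q 1 * q (X 2) ∈ S; rw [← hq_mul, one_mul]; exact hb3
      · show q (X 0) * q (X 0) ∈ S; rw [← hq_mul, e_xx]; exact hb5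
      · show q (X 0) * q (X 1) ∈ S; rw [← hq_mul]; exact hb4
      · show q (X 0) * q (X 2) ∈ S; rw [← hq_mul, e_xz]; exact S.zero_mem
      · show q (X 1) * q (X 0) ∈ S
        rw [← hq_mul, show (X 1 : P) * X 0 = X 0 * X 1 by ring]; exact hb4
      · show q (X 1) * q (X 1) ∈ S; rw [← hq_mul, e_yy]; exact hb4
      · show q (X 1) * q (X 2) ∈ S; rw [← hq_mul]; exact hb5
      · show q (X 2) * q (X 0) ∈ S
        rw [← hq_mul, show (X 2 : P) * X 0 = X 0 * X 2 by ring, e_xz]; exact S.zero_mem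
      · show q (X 2) * q (X 1) ∈ S
        rw [← hq_mul, show (X 2 : P) * X 1 = X 1 * X 2 by ring]; exact hb5
      · show q (X 2) * q (X 2) ∈ S; rw [← hq_mul, e_zz]; exact S.zero_mem
      · show q (X 0 * X 1) * q (X 0) ∈ S; rw [← hq_mul, e_xxy]; exact S.zero_mem
      · show q (X 0 * X 1) * q (X 1) ∈ S; rw [← hq_mul, e_xyy]; exact S.zero_mem
      · show q (X 0 * X 1) * q (X 2) ∈ S; rw [← hq_mul, e_xyz]; exact S.zero_mem
      · show q (X 1 * X 2) * q (X 0) ∈ S; rw [← hq_mul, e_yzx]; exact S.zero_mem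
      · show q (X 1 * X 2) * q (X 1) ∈ S; rw [← hq_mul, e_yzy]; exact S.zero_mem
      · show q (X 1 * X 2) * q (X 2) ∈ S; rw [← hq_mul, e_yzz]; exact S.zero_mem
    | zero => rw [zero_mul]; exact S.zero_mem
    | add a b _ _ ha hb => rw [add_mul]; exact S.add_mem ha hb
    | smul c a _ ha => rw [smul_mul_assoc]; exact S.smul_mem c ha
  have hone : (1 : Q) ∈ S := by simpa [q] using hb0
  have hspan : ∀ p : P, q p ∈ S := by
    intro p
    induction p using MvPolynomial.induction_on with
    | C a =>
      have hCa : (C a : P) = a • (1 : P) := by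
        rw [MvPolynomial.smul_eq_C_mul, mul_one]
      have : q (C a) = a • (1 : Q) := by
        rw [hCa]; exact Submodule.Quotient.mk_smul I a (1 : P)
      rw [this]
      exact S.smul_mem a hone
    | add p r hp hr => rw [show q (p + r) = q p + q r from map_add _ _ _]; exact S.add_mem hp hr
    | mul_X p n hp => rw [hq_mul]; exact hmulX n _ hp
  have hsp : ⊤ ≤ S := by
    intro x _
    obtain ⟨p, rfl⟩ := Ideal.Quotient.mk_surjective x
    exact hspan p
  -- linear independence via the matrix representation
  have hφf : φ k f = 0 := by
    rw [hf]
    simp only [map_add, _root_.map_mul, map_pow, φ_X0, φ_X1, φ_X2]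
    linear_combination hAf k
  have hφgx : φ k gx = 0 := by
    rw [hgx]
    simp only [map_add, _root_.map_mul, map_pow, φ_X0, φ_X1, φ_X2]
    linear_combination hAgx k
  have hφgy : φ k gy = 0 := by
    rw [hgy]
    simp only [_root_.map_mul, φ_X0, φ_X2]
    linear_combination hAgy k
  have hφgz : φ k gz = 0 := by
    rw [hgz]
    simp only [map_add, _root_.map_mul, map_pow, φ_X0, φ_X1]
    linear_combination hAgz k
  have hφI : ∀ a ∈ I, φ k a = 0 := by
    intro a ha
    have hker : I ≤ RingHom.ker (φ k) := by
      rw [hI, Ideal.span_le]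
      intro p hp
      simp only [Set.mem_insert_iff, Set.mem_singleton_iff] at hp
      rcases hp with rfl | rfl | rfl | rfl <;>
        simp [RingHom.mem_ker, hφf, hφgx, hφgy, hφgz]
    exact hker ha
  let ψ : Q →ₐ[k] Algebra.adjoin k (s k) := Ideal.Quotient.liftₐ I (φ k) hφI
  let col0 : Matrix (Fin 6) (Fin 6) k →ₗ[k] (Fin 6 → k) :=
    { toFun := fun M i => M i 0
      map_add' := fun M N => rfl
      map_smul' := fun c M => rfl }
  let L : Q →ₗ[k] (Fin 6 → k) :=
    col0 ∘ₗ (Subalgebra.val _).toLinearMap ∘ₗ ψ.toLinearMap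
  have hψv : ∀ p : P, ψ (q p) = φ k p := by
    intro p; rfl
  have hLq : ∀ p : P, L (q p) = fun r => ((φ k p : Matrix (Fin 6) (Fin 6) k) r 0) := by
    intro p; simp [L, col0, hψv]; rfl
  have hLv : ∀ i, L (v i) = Pi.single i 1 := by
    intro i
    fin_cases i
    · show L (q 1) = Pi.single (0 : Fin 6) 1
      rw [hLq, _root_.map_one (φ k)]
      funext r; fin_cases r <;>
        simp [Matrix.one_apply, Pi.single_apply]
    · show L (q (X 0)) = Pi.single (1 : Fin 6) 1
      rw [hLq]
      funext r
      rw [φ_X0]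
      show (Mx k) r 0 = _
      fin_cases r <;> simp [Mx, E, Matrix.single, Pi.single_apply]
    · show L (q (X 1)) = Pi.single (2 : Fin 6) 1
      rw [hLq]
      funext r
      rw [φ_X1]
      show (My k) r 0 = _
      fin_cases r <;> simp [My, E, Matrix.single, Pi.single_apply]
    · show L (q (X 2)) = Pi.single (3 : Fin 6) 1
      rw [hLq]
      funext r
      rw [φ_X2]
      show (Mz k) r 0 = _
      fin_cases r <;> simp [Mz, E, Matrix.single, Pi.single_apply]
    · show L (q (X 0 * X 1)) = Pi.single (4 : Fin 6) 1
      rw [hLq]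
      funext r
      rw [_root_.map_mul (φ k), φ_X0, φ_X1]
      show (Mx k * My k) r 0 = _
      rw [hMxMy]
      fin_cases r <;> simp [E, Matrix.single, Pi.single_apply]
    · show L (q (X 1 * X 2)) = Pi.single (5 : Fin 6) 1
      rw [hLq]
      funext r
      rw [_root_.map_mul (φ k), φ_X1, φ_X2]
      show (My k * Mz k) r 0 = _
      rw [hMyMz]
      fin_cases r <;> simp [E, Matrix.single, Pi.single_apply]
  have hli : LinearIndependent k v := by
    apply LinearIndependent.of_comp L
    have heq : (⇑L ∘ v) = fun i => (Pi.single i 1 : Fin 6 → k) := funext fun i => hLv i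
    rw [heq]
    have hbi := (Pi.basisFun k (Fin 6)).linearIndependent
    have hfn : (fun i => (Pi.single i 1 : Fin 6 → k)) = ⇑(Pi.basisFun k (Fin 6)) :=
      funext fun i => (Pi.basisFun_apply k (Fin 6) i).symm
    rw [hfn]
    exact hbi
  let B : Module.Basis (Fin 6) k Q := Module.Basis.mk hli hsp
  rw [Module.finrank_eq_card_basis B, Fintype.card_fin]
end

section
/- Let k be a field of characteristic 2. The Tjurina algebras of z^2+x^3+y^5, z^2+x^3+y^5+xy^3z, z^2+x^3+y^5+xy^2z, z^2+x^3+y^5+y^3z, and z^2+x^3+y^5+xyz over k have k-dimensions 16, 14, 12, 10, and 8 respectively. -/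
open MvPolynomial Module

noncomputable section

variable {k : Type*} [Field k]

abbrev TIdx (a b c : ℕ) := Fin a × Fin b × Fin c

def tf {a b c : ℕ} (i : TIdx a b c) : Fin 3 →₀ ℕ :=
  Finsupp.single 0 (i.1 : ℕ) + Finsupp.single 1 (i.2.1 : ℕ) + Finsupp.single 2 (i.2.2 : ℕ)

lemma tf_apply0 {a b c} (i : TIdx a b c) : tf i 0 = (i.1 : ℕ) := by
  simp [tf, Finsupp.single_apply]
lemma tf_apply1 {a b c} (i : TIdx a b c) : tf i 1 = (i.2.1 : ℕ) := by
  simp [tf, Finsupp.single_apply]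
lemma tf_apply2 {a b c} (i : TIdx a b c) : tf i 2 = (i.2.2 : ℕ) := by
  simp [tf, Finsupp.single_apply]

lemma fin3_finsupp_ext {u v : Fin 3 →₀ ℕ} (h0 : u 0 = v 0) (h1 : u 1 = v 1)
    (h2 : u 2 = v 2) : u = v := by
  ext j
  fin_cases j <;> assumption

lemma tf_inj {a b c} : Function.Injective (tf (a := a) (b := b) (c := c)) := by
  intro i j h
  have h0 := DFunLike.congr_fun h 0
  have h1 := DFunLike.congr_fun h 1
  have h2 := DFunLike.congr_fun h 2
  simp only [tf_apply0, tf_apply1, tf_apply2] at h0 h1 h2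
  exact Prod.ext (Fin.val_injective h0) (Prod.ext (Fin.val_injective h1) (Fin.val_injective h2))

def Tphi (k : Type*) [Field k] (a b c : ℕ) :
    MvPolynomial (Fin 3) k →ₗ[k] (TIdx a b c → k) where
  toFun p := fun i => coeff (tf i) p
  map_add' p q := by funext i; simp [coeff_add]
  map_smul' r p := by funext i; simp [coeff_smul]

lemma Tphi_apply (a b c : ℕ) (p : MvPolynomial (Fin 3) k) (i : TIdx a b c) :
    Tphi k a b c p i = coeff (tf i) p := rfl

def rr (k : Type*) [Field k] [CharP k 2] : ZMod 2 →+* k := ZMod.castHom dvd_rfl k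

def rhat (k : Type*) [Field k] [CharP k 2] {a b c : ℕ} (v : TIdx a b c → ZMod 2) :
    TIdx a b c → k := fun i => rr k (v i)

def E2 (a b c : ℕ) (p : ℕ × ℕ × ℕ) : TIdx a b c → ZMod 2 :=
  fun i => if ((i.1 : ℕ), (i.2.1 : ℕ), (i.2.2 : ℕ)) = p then 1 else 0

variable [CharP k 2]

lemma rhat_add {a b c : ℕ} (v w : TIdx a b c → ZMod 2) :
    rhat k v + rhat k w = rhat k (v + w) := by
  funext i; simp [rhat]

lemma Tphi_monomial_one (a b c : ℕ) (u : Fin 3 →₀ ℕ) :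
    Tphi k a b c (monomial u 1) = rhat k (E2 a b c (u 0, u 1, u 2)) := by
  funext i
  rw [Tphi_apply, coeff_monomial]
  show _ = rr k (if ((i.1 : ℕ), (i.2.1 : ℕ), (i.2.2 : ℕ)) = (u 0, u 1, u 2) then 1 else 0)
  by_cases h : u = tf i
  · rw [if_pos h, if_pos, map_one]
    subst h
    exact Prod.ext (tf_apply0 i).symm (Prod.ext (tf_apply1 i).symm (tf_apply2 i).symm)
  · rw [if_neg h, if_neg, map_zero]
    intro hco
    rw [Prod.mk.injEq, Prod.mk.injEq] at hco
    exact h (fin3_finsupp_ext (by rw [tf_apply0, hco.1]) (by rw [tf_apply1, hco.2.1])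
      (by rw [tf_apply2, hco.2.2])).symm

/-- The truncation/section map: sends a coordinate vector to the corresponding
sum of staircase monomials. -/
def Tsig (k : Type*) [Field k] (a b c : ℕ) :
    (TIdx a b c → k) →ₗ[k] MvPolynomial (Fin 3) k :=
  ∑ i : TIdx a b c, (monomial (tf i)).comp (LinearMap.proj i)

lemma Tsig_apply (a b c : ℕ) (v : TIdx a b c → k) :
    Tsig k a b c v = ∑ i : TIdx a b c, monomial (tf i) (v i) := by
  simp [Tsig]

lemma Tphi_Tsig (a b c : ℕ) (v : TIdx a b c → k) :
    Tphi k a b c (Tsig k a b c v) = v := by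
  funext j
  rw [Tphi_apply, Tsig_apply]
  rw [MvPolynomial.coeff_sum]
  rw [Finset.sum_eq_single j]
  · simp [coeff_monomial]
  · intro i _ hij
    rw [coeff_monomial, if_neg (fun h => hij (tf_inj h))]
  · intro h; exact absurd (Finset.mem_univ j) h

theorem tjurina_main (a b c : ℕ) (ha : 0 < a) (hb : 0 < b) (hc : 0 < c)
    (g : Fin 4 → MvPolynomial (Fin 3) k)
    (hxa : X 0 ^ a ∈ Ideal.span (Set.range g))
    (hyb : X 1 ^ b ∈ Ideal.span (Set.range g))
    (hzc : X 2 ^ c ∈ Ideal.span (Set.range g)) :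
    finrank k (MvPolynomial (Fin 3) k ⧸ Ideal.span (Set.range g))
      + finrank k (Submodule.span k (Set.range fun x : TIdx a b c × Fin 4 =>
          Tphi k a b c (monomial (tf x.1) 1 * g x.2))) = a * b * c := by
  set I : Ideal (MvPolynomial (Fin 3) k) := Ideal.span (Set.range g) with hI
  set N : Submodule k (TIdx a b c → k) := Submodule.span k (Set.range fun x : TIdx a b c × Fin 4 =>
          Tphi k a b c (monomial (tf x.1) 1 * g x.2)) with hN
  -- membership of monomials out of the staircase
  have hmemJ : ∀ (m : Fin 3 →₀ ℕ) (r : k), (a ≤ m 0 ∨ b ≤ m 1 ∨ c ≤ m 2) →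
      (monomial m r : MvPolynomial (Fin 3) k) ∈ I := by
    rintro m r (h | h | h)
    · have hle : Finsupp.single (0 : Fin 3) a ≤ m := Finsupp.single_le_iff.2 h
      have : (monomial m r : MvPolynomial (Fin 3) k) = X 0 ^ a * monomial (m - Finsupp.single 0 a) r := by
        rw [X_pow_eq_monomial, monomial_mul, one_mul, add_tsub_cancel_of_le hle]
      rw [this]
      exact Ideal.mul_mem_right _ _ hxa
    · have hle : Finsupp.single (1 : Fin 3) b ≤ m := Finsupp.single_le_iff.2 h
      have : (monomial m r : MvPolynomial (Fin 3) k) = X 1 ^ b * monomial (m - Finsupp.single 1 b) r := by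
        rw [X_pow_eq_monomial, monomial_mul, one_mul, add_tsub_cancel_of_le hle]
      rw [this]
      exact Ideal.mul_mem_right _ _ hyb
    · have hle : Finsupp.single (2 : Fin 3) c ≤ m := Finsupp.single_le_iff.2 h
      have : (monomial m r : MvPolynomial (Fin 3) k) = X 2 ^ c * monomial (m - Finsupp.single 2 c) r := by
        rw [X_pow_eq_monomial, monomial_mul, one_mul, add_tsub_cancel_of_le hle]
      rw [this]
      exact Ideal.mul_mem_right _ _ hzc
  -- the truncation lemma
  have htrunc : ∀ p : MvPolynomial (Fin 3) k, p - Tsig k a b c (Tphi k a b c p) ∈ I := by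
    intro p
    induction p using MvPolynomial.induction_on' with
    | add p q hp hq =>
        have : (p + q) - Tsig k a b c (Tphi k a b c (p + q))
            = (p - Tsig k a b c (Tphi k a b c p)) + (q - Tsig k a b c (Tphi k a b c q)) := by
          rw [map_add, map_add]; ring
        rw [this]; exact add_mem hp hq
    | monomial u r =>
        by_cases hu : u 0 < a ∧ u 1 < b ∧ u 2 < c
        · obtain ⟨i₀, hi₀⟩ : ∃ i : TIdx a b c, tf i = u :=
            ⟨(⟨u 0, hu.1⟩, ⟨u 1, hu.2.1⟩, ⟨u 2, hu.2.2⟩), by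
              apply fin3_finsupp_ext <;> simp [tf_apply0, tf_apply1, tf_apply2]⟩
          have : Tsig k a b c (Tphi k a b c (monomial u r)) = monomial u r := by
            rw [Tsig_apply]
            rw [Finset.sum_eq_single i₀]
            · rw [Tphi_apply, coeff_monomial, if_pos hi₀.symm, hi₀]
            · intro i _ hii
              rw [Tphi_apply, coeff_monomial,
                if_neg (fun h => hii (tf_inj (hi₀ ▸ h.symm))), map_zero]
            · intro h; exact absurd (Finset.mem_univ i₀) h
          rw [this, sub_self]; exact zero_mem I
        · push_neg at hu
          have hout : a ≤ u 0 ∨ b ≤ u 1 ∨ c ≤ u 2 := by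
            by_cases h0 : u 0 < a
            · by_cases h1 : u 1 < b
              · exact Or.inr (Or.inr (hu h0 h1))
              · exact Or.inr (Or.inl (le_of_not_gt h1))
            · exact Or.inl (le_of_not_gt h0)
          have hz : Tphi k a b c (monomial u r) = 0 := by
            funext i
            rw [Tphi_apply, coeff_monomial, if_neg, Pi.zero_apply]
            intro h
            rcases hout with h' | h' | h'
            · rw [h, tf_apply0] at h'; exact absurd h' (not_le.2 i.1.isLt)
            · rw [h, tf_apply1] at h'; exact absurd h' (not_le.2 i.2.1.isLt)
            · rw [h, tf_apply2] at h'; exact absurd h' (not_le.2 i.2.2.isLt)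
          rw [hz, map_zero, sub_zero]
          exact hmemJ u r hout
  -- Phi kills products with out-of-staircase monomials
  have hPhi0 : ∀ (m : Fin 3 →₀ ℕ) (q : MvPolynomial (Fin 3) k), (a ≤ m 0 ∨ b ≤ m 1 ∨ c ≤ m 2) →
      Tphi k a b c (monomial m 1 * q) = 0 := by
    intro m q hout
    funext i
    rw [Tphi_apply, coeff_monomial_mul', if_neg, Pi.zero_apply]
    intro hle
    rcases hout with h' | h' | h'
    · exact absurd (le_trans h' ((Finsupp.le_def.1 hle) 0)) (by rw [tf_apply0]; exact not_le.2 i.1.isLt)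
    · exact absurd (le_trans h' ((Finsupp.le_def.1 hle) 1)) (by rw [tf_apply1]; exact not_le.2 i.2.1.isLt)
    · exact absurd (le_trans h' ((Finsupp.le_def.1 hle) 2)) (by rw [tf_apply2]; exact not_le.2 i.2.2.isLt)
  -- Phi of the ideal lands in N
  have claimB : ∀ (q : MvPolynomial (Fin 3) k) (j : Fin 4), Tphi k a b c (q * g j) ∈ N := by
    intro q j
    induction q using MvPolynomial.induction_on' with
    | add p q hp hq => rw [add_mul, map_add]; exact add_mem hp hq
    | monomial u r =>
        have : (monomial u r : MvPolynomial (Fin 3) k) = r • monomial u 1 := by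
          rw [smul_monomial, smul_eq_mul, mul_one]
        rw [this, smul_mul_assoc, map_smul]
        apply Submodule.smul_mem
        by_cases hu : u 0 < a ∧ u 1 < b ∧ u 2 < c
        · obtain ⟨i₀, hi₀⟩ : ∃ i : TIdx a b c, tf i = u :=
            ⟨(⟨u 0, hu.1⟩, ⟨u 1, hu.2.1⟩, ⟨u 2, hu.2.2⟩), by
              apply fin3_finsupp_ext <;> simp [tf_apply0, tf_apply1, tf_apply2]⟩
          exact Submodule.subset_span ⟨(i₀, j), by
            show Tphi k a b c (monomial (tf i₀) 1 * g j) = _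
            rw [hi₀]⟩
        · push_neg at hu
          have hout : a ≤ u 0 ∨ b ≤ u 1 ∨ c ≤ u 2 := by
            by_cases h0 : u 0 < a
            · by_cases h1 : u 1 < b
              · exact Or.inr (Or.inr (hu h0 h1))
              · exact Or.inr (Or.inl (le_of_not_gt h1))
            · exact Or.inl (le_of_not_gt h0)
          rw [hPhi0 u (g j) hout]
          exact zero_mem N
  have claimA : ∀ p ∈ I, Tphi k a b c p ∈ N := by
    intro p hp
    rw [hI, Ideal.span] at hp
    rw [Submodule.mem_span_range_iff_exists_fun] at hp
    obtain ⟨cf, rfl⟩ := hp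
    rw [map_sum]
    exact Submodule.sum_mem N fun j _ => by
      rw [smul_eq_mul]; exact claimB (cf j) j
  -- the quotient map composed with Tsig
  set sig : (TIdx a b c → k) →ₗ[k] (MvPolynomial (Fin 3) k ⧸ I) :=
    (Ideal.Quotient.mkₐ k I).toLinearMap.comp (Tsig k a b c) with hsig
  have hsig_apply : ∀ v, sig v = Ideal.Quotient.mk I (Tsig k a b c v) := fun v => rfl
  have hsurj : Function.Surjective sig := by
    intro x
    obtain ⟨p, rfl⟩ := Ideal.Quotient.mk_surjective x
    refine ⟨Tphi k a b c p, ?_⟩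
    rw [hsig_apply, Ideal.Quotient.mk_eq_mk_iff_sub_mem]
    have := htrunc p
    have h2 : Tsig k a b c (Tphi k a b c p) - p = -(p - Tsig k a b c (Tphi k a b c p)) := by ring
    rw [h2]
    exact neg_mem this
  have hker : LinearMap.ker sig = N := by
    ext v
    rw [LinearMap.mem_ker, hsig_apply, Ideal.Quotient.eq_zero_iff_mem]
    constructor
    · intro hv
      have := claimA _ hv
      rwa [Tphi_Tsig] at this
    · intro hv
      have hle : N ≤ (I.restrictScalars k).comap (Tsig k a b c) := by
        rw [hN]
        apply Submodule.span_le.2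
        rintro _ ⟨x, rfl⟩
        have hq : (monomial (tf x.1) 1 : MvPolynomial (Fin 3) k) * g x.2 ∈ I := by
          exact Ideal.mul_mem_left I _ (Ideal.subset_span ⟨x.2, rfl⟩)
        have := htrunc ((monomial (tf x.1) 1 : MvPolynomial (Fin 3) k) * g x.2)
        have h3 : Tsig k a b c (Tphi k a b c ((monomial (tf x.1) 1) * g x.2))
            = (monomial (tf x.1) 1) * g x.2
              - ((monomial (tf x.1) 1) * g x.2
                - Tsig k a b c (Tphi k a b c ((monomial (tf x.1) 1) * g x.2))) := by ring
        show Tsig k a b c (Tphi k a b c ((monomial (tf x.1) 1) * g x.2)) ∈ I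
        rw [h3]
        exact sub_mem hq this
      exact hle hv
  have e := LinearMap.quotKerEquivOfSurjective sig hsurj
  rw [hker] at e
  have h1 : finrank k (MvPolynomial (Fin 3) k ⧸ I) = finrank k ((TIdx a b c → k) ⧸ N) :=
    e.symm.finrank_eq
  rw [h1, Submodule.finrank_quotient_add_finrank N, finrank_pi k]
  simp [Fintype.card_prod, mul_assoc]

lemma rhat_add' {a b c : ℕ} (v w : TIdx a b c → ZMod 2) :
    rhat k (v + w) = rhat k v + rhat k w := (rhat_add v w).symm

lemma rhat_zero {a b c : ℕ} : rhat (a := a) (b := b) (c := c) k 0 = 0 := by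
  funext i; simp [rhat]

lemma rhat_list_sum {a b c : ℕ} (l : List (TIdx a b c → ZMod 2)) :
    rhat k l.sum = (l.map (rhat k)).sum := by
  induction l with
  | nil => exact rhat_zero
  | cons hd tl ih => rw [List.sum_cons, rhat_add', ih, List.map_cons, List.sum_cons]

theorem rank_span_rhat {a b c r : ℕ} {α : Type*} [Fintype α]
    (v : α → TIdx a b c → ZMod 2) (w : Fin r → TIdx a b c → ZMod 2)
    (piv : Fin r → TIdx a b c)
    (hpiv : ∀ j j' : Fin r, w j (piv j') = if j = j' then 1 else 0)
    (h1 : ∀ x, v x = (((List.finRange r).filter fun j => v x (piv j) = 1).map w).sum)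
    (h2 : ∀ j, ∃ l : List α, w j = (l.map v).sum) :
    finrank k (Submodule.span k (Set.range fun x => rhat k (v x))) = r := by
  have hspan : Submodule.span k (Set.range fun x => rhat k (v x))
      = Submodule.span k (Set.range fun j => rhat k (w j)) := by
    apply le_antisymm
    · apply Submodule.span_le.2
      rintro _ ⟨x, rfl⟩
      show rhat k (v x) ∈ _
      rw [h1 x, rhat_list_sum, List.map_map]
      apply list_sum_mem
      intro y hy
      rw [List.mem_map] at hy
      obtain ⟨j, _, rfl⟩ := hy
      exact Submodule.subset_span ⟨j, rfl⟩
    · apply Submodule.span_le.2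
      rintro _ ⟨j, rfl⟩
      obtain ⟨l, hl⟩ := h2 j
      show rhat k (w j) ∈ _
      rw [hl, rhat_list_sum, List.map_map]
      apply list_sum_mem
      intro y hy
      rw [List.mem_map] at hy
      obtain ⟨x, _, rfl⟩ := hy
      exact Submodule.subset_span ⟨x, rfl⟩
  have hindep : LinearIndependent k (fun j => rhat k (w j)) := by
    rw [Fintype.linearIndependent_iff]
    intro gc hsum j
    have hev := congrFun hsum (piv j)
    rw [Finset.sum_apply] at hev
    have hterm : ∀ j' : Fin r, (gc j' • rhat k (w j')) (piv j)
        = gc j' * (if j' = j then 1 else 0) := by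
      intro j'
      rw [Pi.smul_apply, smul_eq_mul, rhat, hpiv j' j]
      rw [apply_ite (rr k), map_one, map_zero]
    rw [Finset.sum_congr rfl (fun j' _ => hterm j')] at hev
    simpa [Finset.sum_ite_eq'] using hev
  rw [hspan, finrank_span_eq_card hindep, Fintype.card_fin]

theorem tjurina_case (a b c r : ℕ) (ha : 0 < a) (hb : 0 < b) (hc : 0 < c)
    (g : Fin 4 → MvPolynomial (Fin 3) k)
    (hxa : X 0 ^ a ∈ Ideal.span (Set.range g))
    (hyb : X 1 ^ b ∈ Ideal.span (Set.range g))
    (hzc : X 2 ^ c ∈ Ideal.span (Set.range g))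
    (v : TIdx a b c × Fin 4 → TIdx a b c → ZMod 2)
    (hv : ∀ x : TIdx a b c × Fin 4,
      Tphi k a b c (monomial (tf x.1) 1 * g x.2) = rhat k (v x))
    (w : Fin r → TIdx a b c → ZMod 2) (piv : Fin r → TIdx a b c)
    (hpiv : ∀ j j' : Fin r, w j (piv j') = if j = j' then 1 else 0)
    (h1 : ∀ x, v x = (((List.finRange r).filter fun j => v x (piv j) = 1).map w).sum)
    (h2 : ∀ j, ∃ l : List (TIdx a b c × Fin 4), w j = (l.map v).sum) :
    finrank k (MvPolynomial (Fin 3) k ⧸ Ideal.span (Set.range g)) = a * b * c - r := by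
  have hm := tjurina_main a b c ha hb hc g hxa hyb hzc
  have hfun : (fun x : TIdx a b c × Fin 4 => Tphi k a b c (monomial (tf x.1) 1 * g x.2))
      = fun x => rhat k (v x) := funext hv
  rw [hfun] at hm
  have hr := rank_span_rhat (k := k) v w piv hpiv h1 h2
  omega

def sh (p q r : ℕ) : Fin 3 →₀ ℕ :=
  Finsupp.single 0 p + Finsupp.single 1 q + Finsupp.single 2 r

lemma sh_apply0 (p q r : ℕ) : sh p q r 0 = p := by simp [sh, Finsupp.single_apply]
lemma sh_apply1 (p q r : ℕ) : sh p q r 1 = q := by simp [sh, Finsupp.single_apply]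
lemma sh_apply2 (p q r : ℕ) : sh p q r 2 = r := by simp [sh, Finsupp.single_apply]

lemma X_prod_eq (p q r : ℕ) :
    (X 0 ^ p * X 1 ^ q * X 2 ^ r : MvPolynomial (Fin 3) k) = monomial (sh p q r) 1 := by
  rw [X_pow_eq_monomial, X_pow_eq_monomial, X_pow_eq_monomial, monomial_mul, monomial_mul]
  simp [sh]

lemma Tphi_shift (a b c : ℕ) (t : TIdx a b c) (p q r : ℕ) :
    Tphi k a b c (monomial (tf t) 1 * monomial (sh p q r) 1)
      = rhat k (E2 a b c ((t.1 : ℕ) + p, (t.2.1 : ℕ) + q, (t.2.2 : ℕ) + r)) := by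
  rw [monomial_mul, one_mul, Tphi_monomial_one]
  have h0 : (tf t + sh p q r) 0 = (t.1 : ℕ) + p := by
    rw [Finsupp.add_apply, tf_apply0, sh_apply0]
  have h1 : (tf t + sh p q r) 1 = (t.2.1 : ℕ) + q := by
    rw [Finsupp.add_apply, tf_apply1, sh_apply1]
  have h2 : (tf t + sh p q r) 2 = (t.2.2 : ℕ) + r := by
    rw [Finsupp.add_apply, tf_apply2, sh_apply2]
  rw [h0, h1, h2]

lemma range_fin4 {α : Type*} (a b c d : α) : Set.range ![a, b, c, d] = {a, b, c, d} := by
  ext x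
  constructor
  · rintro ⟨i, rfl⟩
    fin_cases i <;> simp
  · intro hx
    rcases hx with rfl | rfl | rfl | rfl
    · exact ⟨0, rfl⟩
    · exact ⟨1, rfl⟩
    · exact ⟨2, rfl⟩
    · exact ⟨3, rfl⟩

def encI {a b c : ℕ} (i : TIdx a b c) : ℕ :=
  (i.1 : ℕ) + a * ((i.2.1 : ℕ) + b * (i.2.2 : ℕ))

def vec {a b c : ℕ} (n : ℕ) : TIdx a b c → ZMod 2 :=
  fun i => if Nat.testBit n (encI i) then 1 else 0

lemma vec_add {a b c : ℕ} (m n : ℕ) :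
    (vec m + vec n : TIdx a b c → ZMod 2) = vec (m ^^^ n) := by
  funext i
  simp only [Pi.add_apply, vec, Nat.testBit_xor]
  cases hm : m.testBit (encI i) <;> cases hn : n.testBit (encI i) <;> simp [hm, hn] <;> decide

lemma vec_zero {a b c : ℕ} : (vec 0 : TIdx a b c → ZMod 2) = 0 := by
  funext i; simp [vec]

lemma vec_list_sum {a b c : ℕ} (l : List ℕ) :
    (l.map (vec (a := a) (b := b) (c := c))).sum = vec (l.foldr Nat.xor 0) := by
  induction l with
  | nil => exact vec_zero.symm
  | cons hd tl ih =>
      rw [List.map_cons, List.sum_cons, ih, List.foldr_cons, vec_add]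
      rfl

lemma vec_comp_sum {a b c : ℕ} {α : Type*} (f : α → ℕ) (l : List α) :
    (l.map (fun x => vec (a := a) (b := b) (c := c) (f x))).sum
      = vec ((l.map f).foldr Nat.xor 0) := by
  rw [← vec_list_sum, List.map_map]
  rfl

theorem tjurina_case' (a b c r : ℕ) (ha : 0 < a) (hb : 0 < b) (hc : 0 < c)
    (g : Fin 4 → MvPolynomial (Fin 3) k)
    (hxa : X 0 ^ a ∈ Ideal.span (Set.range g))
    (hyb : X 1 ^ b ∈ Ideal.span (Set.range g))
    (hzc : X 2 ^ c ∈ Ideal.span (Set.range g))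
    (v : TIdx a b c × Fin 4 → TIdx a b c → ZMod 2)
    (hv : ∀ x : TIdx a b c × Fin 4,
      Tphi k a b c (monomial (tf x.1) 1 * g x.2) = rhat k (v x))
    (Vm : TIdx a b c × Fin 4 → ℕ) (Wm : Fin r → ℕ) (piv : Fin r → TIdx a b c)
    (combo : Fin r → List (TIdx a b c × Fin 4))
    (hbridge : ∀ x, v x = vec (Vm x))
    (hpiv : ∀ j j' : Fin r, vec (a := a) (b := b) (c := c) (Wm j) (piv j')
      = if j = j' then 1 else 0)
    (hbig : ∀ x, Vm x = (((List.finRange r).filter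
        fun j => Nat.testBit (Vm x) (encI (piv j))).map Wm).foldr Nat.xor 0)
    (hbig2 : ∀ j, Wm j = ((combo j).map Vm).foldr Nat.xor 0) :
    finrank k (MvPolynomial (Fin 3) k ⧸ Ideal.span (Set.range g)) = a * b * c - r := by
  apply tjurina_case a b c r ha hb hc g hxa hyb hzc v hv (fun j => vec (Wm j)) piv hpiv
  · intro x
    calc v x = vec (Vm x) := hbridge x
    _ = vec ((((List.finRange r).filter
          fun j => Nat.testBit (Vm x) (encI (piv j))).map Wm).foldr Nat.xor 0) :=
        congrArg vec (hbig x)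
    _ = (((List.finRange r).filter
          fun j => Nat.testBit (Vm x) (encI (piv j))).map (fun j => vec (Wm j))).sum :=
        (vec_comp_sum Wm _).symm
    _ = (((List.finRange r).filter fun j => v x (piv j) = 1).map (fun j => vec (Wm j))).sum := by
        congr 1
        apply congrArg
        apply List.filter_congr
        intro j _
        rw [hbridge x]
        show Nat.testBit (Vm x) (encI (piv j)) = decide (vec (Vm x) (piv j) = 1)
        unfold vec
        cases h : Nat.testBit (Vm x) (encI (piv j)) <;> simp [h]
  · intro j
    refine ⟨combo j, ?_⟩
    have hmap : (combo j).map v = (combo j).map (fun x => vec (Vm x)) :=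
      List.map_congr_left (fun x _ => hbridge x)
    rw [hmap, vec_comp_sum Vm, ← hbig2 j]

def E2m (a b c : ℕ) (p : ℕ × ℕ × ℕ) : ℕ :=
  if p.1 < a ∧ p.2.1 < b ∧ p.2.2 < c then 2 ^ (p.1 + a * (p.2.1 + b * p.2.2)) else 0

lemma enc_inj {a b : ℕ} {x1 y1 z1 x2 y2 z2 : ℕ} (hx1 : x1 < a) (hy1 : y1 < b)
    (hx2 : x2 < a) (hy2 : y2 < b)
    (h : x1 + a * (y1 + b * z1) = x2 + a * (y2 + b * z2)) :
    x1 = x2 ∧ y1 = y2 ∧ z1 = z2 := by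
  have ha : 0 < a := lt_of_le_of_lt (Nat.zero_le x1) hx1
  have hxx : x1 = x2 := by
    have h1 : (x1 + a * (y1 + b * z1)) % a = x1 % a := by
      rw [Nat.add_mul_mod_self_left]
    have h2 : (x2 + a * (y2 + b * z2)) % a = x2 % a := by
      rw [Nat.add_mul_mod_self_left]
    rw [h, h2] at h1
    rw [Nat.mod_eq_of_lt hx2, Nat.mod_eq_of_lt hx1] at h1
    exact h1.symm
  subst hxx
  have h' : y1 + b * z1 = y2 + b * z2 := by
    have := Nat.add_left_cancel h
    exact Nat.eq_of_mul_eq_mul_left ha this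
  have hyy : y1 = y2 := by
    have h1 : (y1 + b * z1) % b = y1 % b := by rw [Nat.add_mul_mod_self_left]
    have h2 : (y2 + b * z2) % b = y2 % b := by rw [Nat.add_mul_mod_self_left]
    rw [h', h2] at h1
    rw [Nat.mod_eq_of_lt hy2, Nat.mod_eq_of_lt hy1] at h1
    exact h1.symm
  subst hyy
  have hb : 0 < b := lt_of_le_of_lt (Nat.zero_le y1) hy1
  have := Nat.add_left_cancel h'
  exact ⟨rfl, rfl, Nat.eq_of_mul_eq_mul_left hb this⟩

lemma E2_eq_vec (a b c : ℕ) (p : ℕ × ℕ × ℕ) :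
    E2 a b c p = vec (E2m a b c p) := by
  funext i
  rw [E2, vec, E2m]
  by_cases h : p.1 < a ∧ p.2.1 < b ∧ p.2.2 < c
  · rw [if_pos h, Nat.testBit_two_pow]
    by_cases he : ((i.1 : ℕ), (i.2.1 : ℕ), (i.2.2 : ℕ)) = p
    · rw [if_pos he, if_pos]
      rw [← he]
      simp [encI]
    · rw [if_neg he, if_neg]
      intro henc
      apply he
      have := enc_inj (a := a) (b := b) (z1 := p.2.2) (z2 := (i.2.2 : ℕ)) h.1 h.2.1 i.1.isLt i.2.1.isLt
        (by have h' := of_decide_eq_true henc; simpa [encI] using h')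
      obtain ⟨h1, h2, h3⟩ := this
      exact Prod.ext h1.symm (Prod.ext h2.symm h3.symm)
  · simp only [if_neg h, Nat.zero_testBit, Bool.false_eq_true, if_false]
    rw [if_neg]
    intro he
    apply h
    rw [← he]
    exact ⟨i.1.isLt, i.2.1.isLt, i.2.2.isLt⟩
def tv0 : TIdx 2 4 2 × Fin 4 → TIdx 2 4 2 → ZMod 2 := fun x =>
  ![    E2 2 4 2 ((x.1.1 : ℕ) + 0, (x.1.2.1 : ℕ) + 0, (x.1.2.2 : ℕ) + 2)
      + E2 2 4 2 ((x.1.1 : ℕ) + 3, (x.1.2.1 : ℕ) + 0, (x.1.2.2 : ℕ) + 0)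
      + E2 2 4 2 ((x.1.1 : ℕ) + 0, (x.1.2.1 : ℕ) + 5, (x.1.2.2 : ℕ) + 0),
    E2 2 4 2 ((x.1.1 : ℕ) + 2, (x.1.2.1 : ℕ) + 0, (x.1.2.2 : ℕ) + 0),
    E2 2 4 2 ((x.1.1 : ℕ) + 0, (x.1.2.1 : ℕ) + 4, (x.1.2.2 : ℕ) + 0),
    (0 : TIdx 2 4 2 → ZMod 2)] x.2
def tVm0 : TIdx 2 4 2 × Fin 4 → ℕ := fun x =>
  ![    E2m 2 4 2 ((x.1.1 : ℕ) + 0, (x.1.2.1 : ℕ) + 0, (x.1.2.2 : ℕ) + 2) ^^^ E2m 2 4 2 ((x.1.1 : ℕ) + 3, (x.1.2.1 : ℕ) + 0, (x.1.2.2 : ℕ) + 0) ^^^ E2m 2 4 2 ((x.1.1 : ℕ) + 0, (x.1.2.1 : ℕ) + 5, (x.1.2.2 : ℕ) + 0),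
    E2m 2 4 2 ((x.1.1 : ℕ) + 2, (x.1.2.1 : ℕ) + 0, (x.1.2.2 : ℕ) + 0),
    E2m 2 4 2 ((x.1.1 : ℕ) + 0, (x.1.2.1 : ℕ) + 4, (x.1.2.2 : ℕ) + 0),
    (0 : ℕ)] x.2
def twtab0 : List ℕ := []
def tWm0 : Fin 0 → ℕ := fun j => twtab0.getD (j : ℕ) 0
def tpiv0 : Fin 0 → TIdx 2 4 2 := ![]
def tcombo0 : Fin 0 → List (TIdx 2 4 2 × Fin 4) := ![]
lemma thb0 : ∀ x, tv0 x = vec (tVm0 x) := by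
  rintro ⟨t, j⟩
  fin_cases j
  · show E2 2 4 2 (((t.1 : ℕ)) + 0, ((t.2.1 : ℕ)) + 0, ((t.2.2 : ℕ)) + 2)
      + E2 2 4 2 (((t.1 : ℕ)) + 3, ((t.2.1 : ℕ)) + 0, ((t.2.2 : ℕ)) + 0)
      + E2 2 4 2 (((t.1 : ℕ)) + 0, ((t.2.1 : ℕ)) + 5, ((t.2.2 : ℕ)) + 0) = _
    rw [E2_eq_vec, E2_eq_vec, E2_eq_vec, vec_add, vec_add]
    rfl
  · show E2 2 4 2 (((t.1 : ℕ)) + 2, ((t.2.1 : ℕ)) + 0, ((t.2.2 : ℕ)) + 0) = _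
    rw [E2_eq_vec]
    rfl
  · show E2 2 4 2 (((t.1 : ℕ)) + 0, ((t.2.1 : ℕ)) + 4, ((t.2.2 : ℕ)) + 0) = _
    rw [E2_eq_vec]
    rfl
  · show (0 : TIdx 2 4 2 → ZMod 2) = _
    rw [← vec_zero]
    rfl
noncomputable def tgv0 (k : Type*) [Field k] : Fin 4 → MvPolynomial (Fin 3) k :=
  ![X 2^2 + X 0^3 + X 1^5, X 0^2, X 1^4, 0]
lemma thv0 {k : Type*} [Field k] [CharP k 2] :
    ∀ x : TIdx 2 4 2 × Fin 4, Tphi k 2 4 2 (monomial (tf x.1) 1 * tgv0 k x.2) = rhat k (tv0 x) := by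
  rintro ⟨t, j⟩
  fin_cases j
  · show Tphi k 2 4 2 (monomial (tf t) 1 * (X 2^2 + X 0^3 + X 1^5 : MvPolynomial (Fin 3) k)) = rhat k (tv0 (t, 0))
    have hg : (X 2^2 + X 0^3 + X 1^5 : MvPolynomial (Fin 3) k) = monomial (sh 0 0 2) 1 + monomial (sh 3 0 0) 1 + monomial (sh 0 5 0) 1 := by
      rw [← X_prod_eq (k := k) 0 0 2, ← X_prod_eq (k := k) 3 0 0, ← X_prod_eq (k := k) 0 5 0]
      ring
    rw [hg, mul_add, mul_add, map_add, map_add, Tphi_shift, Tphi_shift, Tphi_shift, rhat_add, rhat_add]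
    rfl
  · show Tphi k 2 4 2 (monomial (tf t) 1 * (X 0^2 : MvPolynomial (Fin 3) k)) = rhat k (tv0 (t, 1))
    have hg : (X 0^2 : MvPolynomial (Fin 3) k) = monomial (sh 2 0 0) 1 := by
      rw [← X_prod_eq (k := k) 2 0 0]
      ring
    rw [hg, Tphi_shift]
    rfl
  · show Tphi k 2 4 2 (monomial (tf t) 1 * (X 1^4 : MvPolynomial (Fin 3) k)) = rhat k (tv0 (t, 2))
    have hg : (X 1^4 : MvPolynomial (Fin 3) k) = monomial (sh 0 4 0) 1 := by
      rw [← X_prod_eq (k := k) 0 4 0]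
      ring
    rw [hg, Tphi_shift]
    rfl
  · show Tphi k 2 4 2 (monomial (tf t) 1 * (0 : MvPolynomial (Fin 3) k)) = rhat k (tv0 (t, 3))
    rw [mul_zero, map_zero]
    exact rhat_zero.symm
def tv1 : TIdx 3 5 2 × Fin 4 → TIdx 3 5 2 → ZMod 2 := fun x =>
  ![    E2 3 5 2 ((x.1.1 : ℕ) + 0, (x.1.2.1 : ℕ) + 0, (x.1.2.2 : ℕ) + 2)
      + E2 3 5 2 ((x.1.1 : ℕ) + 3, (x.1.2.1 : ℕ) + 0, (x.1.2.2 : ℕ) + 0)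
      + E2 3 5 2 ((x.1.1 : ℕ) + 0, (x.1.2.1 : ℕ) + 5, (x.1.2.2 : ℕ) + 0)
      + E2 3 5 2 ((x.1.1 : ℕ) + 1, (x.1.2.1 : ℕ) + 3, (x.1.2.2 : ℕ) + 1),
    E2 3 5 2 ((x.1.1 : ℕ) + 2, (x.1.2.1 : ℕ) + 0, (x.1.2.2 : ℕ) + 0)
      + E2 3 5 2 ((x.1.1 : ℕ) + 0, (x.1.2.1 : ℕ) + 3, (x.1.2.2 : ℕ) + 1),
    E2 3 5 2 ((x.1.1 : ℕ) + 0, (x.1.2.1 : ℕ) + 4, (x.1.2.2 : ℕ) + 0)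
      + E2 3 5 2 ((x.1.1 : ℕ) + 1, (x.1.2.1 : ℕ) + 2, (x.1.2.2 : ℕ) + 1),
    E2 3 5 2 ((x.1.1 : ℕ) + 1, (x.1.2.1 : ℕ) + 3, (x.1.2.2 : ℕ) + 0)] x.2
def tVm1 : TIdx 3 5 2 × Fin 4 → ℕ := fun x =>
  ![    E2m 3 5 2 ((x.1.1 : ℕ) + 0, (x.1.2.1 : ℕ) + 0, (x.1.2.2 : ℕ) + 2) ^^^ E2m 3 5 2 ((x.1.1 : ℕ) + 3, (x.1.2.1 : ℕ) + 0, (x.1.2.2 : ℕ) + 0) ^^^ E2m 3 5 2 ((x.1.1 : ℕ) + 0, (x.1.2.1 : ℕ) + 5, (x.1.2.2 : ℕ) + 0) ^^^ E2m 3 5 2 ((x.1.1 : ℕ) + 1, (x.1.2.1 : ℕ) + 3, (x.1.2.2 : ℕ) + 1),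
    E2m 3 5 2 ((x.1.1 : ℕ) + 2, (x.1.2.1 : ℕ) + 0, (x.1.2.2 : ℕ) + 0) ^^^ E2m 3 5 2 ((x.1.1 : ℕ) + 0, (x.1.2.1 : ℕ) + 3, (x.1.2.2 : ℕ) + 1),
    E2m 3 5 2 ((x.1.1 : ℕ) + 0, (x.1.2.1 : ℕ) + 4, (x.1.2.2 : ℕ) + 0) ^^^ E2m 3 5 2 ((x.1.1 : ℕ) + 1, (x.1.2.1 : ℕ) + 2, (x.1.2.2 : ℕ) + 1),
    E2m 3 5 2 ((x.1.1 : ℕ) + 1, (x.1.2.1 : ℕ) + 3, (x.1.2.2 : ℕ) + 0)] x.2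
def twtab1 : List ℕ := [16777220, 32, 256, 1024, 2048, 4198400, 8192, 16384, 131072, 1048576, 8388608, 33554432, 67108864, 134217728, 268435456, 536870912]
def tWm1 : Fin 16 → ℕ := fun j => twtab1.getD (j : ℕ) 0
def tpiv1 : Fin 16 → TIdx 3 5 2 :=
  ![(2, 0, 0), (2, 1, 0), (2, 2, 0), (1, 3, 0), (2, 3, 0), (0, 4, 0), (1, 4, 0), (2, 4, 0), (2, 0, 1), (2, 1, 1), (2, 2, 1), (1, 3, 1), (2, 3, 1), (0, 4, 1), (1, 4, 1), (2, 4, 1)]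
def tcombo1 : Fin 16 → List (TIdx 3 5 2 × Fin 4) :=
  ![[(((0, 0, 0), 1))],
    [(((0, 1, 0), 1)), (((0, 0, 1), 2))],
    [(((0, 2, 0), 1))],
    [(((0, 0, 0), 3))],
    [(((1, 0, 0), 3))],
    [(((0, 0, 0), 2))],
    [(((0, 1, 0), 3))],
    [(((2, 0, 0), 2))],
    [(((0, 0, 1), 1))],
    [(((0, 1, 1), 1))],
    [(((1, 0, 0), 2)), (((0, 1, 0), 3))],
    [(((0, 0, 0), 0))],
    [(((1, 0, 0), 0))],
    [(((0, 0, 1), 2))],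
    [(((0, 1, 0), 0))],
    [(((1, 1, 0), 0))]]
lemma thb1 : ∀ x, tv1 x = vec (tVm1 x) := by
  rintro ⟨t, j⟩
  fin_cases j
  · show E2 3 5 2 (((t.1 : ℕ)) + 0, ((t.2.1 : ℕ)) + 0, ((t.2.2 : ℕ)) + 2)
      + E2 3 5 2 (((t.1 : ℕ)) + 3, ((t.2.1 : ℕ)) + 0, ((t.2.2 : ℕ)) + 0)
      + E2 3 5 2 (((t.1 : ℕ)) + 0, ((t.2.1 : ℕ)) + 5, ((t.2.2 : ℕ)) + 0)
      + E2 3 5 2 (((t.1 : ℕ)) + 1, ((t.2.1 : ℕ)) + 3, ((t.2.2 : ℕ)) + 1) = _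
    rw [E2_eq_vec, E2_eq_vec, E2_eq_vec, E2_eq_vec, vec_add, vec_add, vec_add]
    rfl
  · show E2 3 5 2 (((t.1 : ℕ)) + 2, ((t.2.1 : ℕ)) + 0, ((t.2.2 : ℕ)) + 0)
      + E2 3 5 2 (((t.1 : ℕ)) + 0, ((t.2.1 : ℕ)) + 3, ((t.2.2 : ℕ)) + 1) = _
    rw [E2_eq_vec, E2_eq_vec, vec_add]
    rfl
  · show E2 3 5 2 (((t.1 : ℕ)) + 0, ((t.2.1 : ℕ)) + 4, ((t.2.2 : ℕ)) + 0)
      + E2 3 5 2 (((t.1 : ℕ)) + 1, ((t.2.1 : ℕ)) + 2, ((t.2.2 : ℕ)) + 1) = _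
    rw [E2_eq_vec, E2_eq_vec, vec_add]
    rfl
  · show E2 3 5 2 (((t.1 : ℕ)) + 1, ((t.2.1 : ℕ)) + 3, ((t.2.2 : ℕ)) + 0) = _
    rw [E2_eq_vec]
    rfl
noncomputable def tgv1 (k : Type*) [Field k] : Fin 4 → MvPolynomial (Fin 3) k :=
  ![X 2^2 + X 0^3 + X 1^5 + X 0*X 1^3*X 2, X 0^2 + X 1^3*X 2, X 1^4 + X 0*X 1^2*X 2, X 0*X 1^3]
lemma thv1 {k : Type*} [Field k] [CharP k 2] :
    ∀ x : TIdx 3 5 2 × Fin 4, Tphi k 3 5 2 (monomial (tf x.1) 1 * tgv1 k x.2) = rhat k (tv1 x) := by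
  rintro ⟨t, j⟩
  fin_cases j
  · show Tphi k 3 5 2 (monomial (tf t) 1 * (X 2^2 + X 0^3 + X 1^5 + X 0*X 1^3*X 2 : MvPolynomial (Fin 3) k)) = rhat k (tv1 (t, 0))
    have hg : (X 2^2 + X 0^3 + X 1^5 + X 0*X 1^3*X 2 : MvPolynomial (Fin 3) k) = monomial (sh 0 0 2) 1 + monomial (sh 3 0 0) 1 + monomial (sh 0 5 0) 1 + monomial (sh 1 3 1) 1 := by
      rw [← X_prod_eq (k := k) 0 0 2, ← X_prod_eq (k := k) 3 0 0, ← X_prod_eq (k := k) 0 5 0, ← X_prod_eq (k := k) 1 3 1]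
      ring
    rw [hg, mul_add, mul_add, mul_add, map_add, map_add, map_add, Tphi_shift, Tphi_shift, Tphi_shift, Tphi_shift, rhat_add, rhat_add, rhat_add]
    rfl
  · show Tphi k 3 5 2 (monomial (tf t) 1 * (X 0^2 + X 1^3*X 2 : MvPolynomial (Fin 3) k)) = rhat k (tv1 (t, 1))
    have hg : (X 0^2 + X 1^3*X 2 : MvPolynomial (Fin 3) k) = monomial (sh 2 0 0) 1 + monomial (sh 0 3 1) 1 := by
      rw [← X_prod_eq (k := k) 2 0 0, ← X_prod_eq (k := k) 0 3 1]
      ring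
    rw [hg, mul_add, map_add, Tphi_shift, Tphi_shift, rhat_add]
    rfl
  · show Tphi k 3 5 2 (monomial (tf t) 1 * (X 1^4 + X 0*X 1^2*X 2 : MvPolynomial (Fin 3) k)) = rhat k (tv1 (t, 2))
    have hg : (X 1^4 + X 0*X 1^2*X 2 : MvPolynomial (Fin 3) k) = monomial (sh 0 4 0) 1 + monomial (sh 1 2 1) 1 := by
      rw [← X_prod_eq (k := k) 0 4 0, ← X_prod_eq (k := k) 1 2 1]
      ring
    rw [hg, mul_add, map_add, Tphi_shift, Tphi_shift, rhat_add]
    rfl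
  · show Tphi k 3 5 2 (monomial (tf t) 1 * (X 0*X 1^3 : MvPolynomial (Fin 3) k)) = rhat k (tv1 (t, 3))
    have hg : (X 0*X 1^3 : MvPolynomial (Fin 3) k) = monomial (sh 1 3 0) 1 := by
      rw [← X_prod_eq (k := k) 1 3 0]
      ring
    rw [hg, Tphi_shift]
    rfl
def tv2 : TIdx 3 4 2 × Fin 4 → TIdx 3 4 2 → ZMod 2 := fun x =>
  ![    E2 3 4 2 ((x.1.1 : ℕ) + 0, (x.1.2.1 : ℕ) + 0, (x.1.2.2 : ℕ) + 2)
      + E2 3 4 2 ((x.1.1 : ℕ) + 3, (x.1.2.1 : ℕ) + 0, (x.1.2.2 : ℕ) + 0)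
      + E2 3 4 2 ((x.1.1 : ℕ) + 0, (x.1.2.1 : ℕ) + 5, (x.1.2.2 : ℕ) + 0)
      + E2 3 4 2 ((x.1.1 : ℕ) + 1, (x.1.2.1 : ℕ) + 2, (x.1.2.2 : ℕ) + 1),
    E2 3 4 2 ((x.1.1 : ℕ) + 2, (x.1.2.1 : ℕ) + 0, (x.1.2.2 : ℕ) + 0)
      + E2 3 4 2 ((x.1.1 : ℕ) + 0, (x.1.2.1 : ℕ) + 2, (x.1.2.2 : ℕ) + 1),
    E2 3 4 2 ((x.1.1 : ℕ) + 0, (x.1.2.1 : ℕ) + 4, (x.1.2.2 : ℕ) + 0),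
    E2 3 4 2 ((x.1.1 : ℕ) + 1, (x.1.2.1 : ℕ) + 2, (x.1.2.2 : ℕ) + 0)] x.2
def tVm2 : TIdx 3 4 2 × Fin 4 → ℕ := fun x =>
  ![    E2m 3 4 2 ((x.1.1 : ℕ) + 0, (x.1.2.1 : ℕ) + 0, (x.1.2.2 : ℕ) + 2) ^^^ E2m 3 4 2 ((x.1.1 : ℕ) + 3, (x.1.2.1 : ℕ) + 0, (x.1.2.2 : ℕ) + 0) ^^^ E2m 3 4 2 ((x.1.1 : ℕ) + 0, (x.1.2.1 : ℕ) + 5, (x.1.2.2 : ℕ) + 0) ^^^ E2m 3 4 2 ((x.1.1 : ℕ) + 1, (x.1.2.1 : ℕ) + 2, (x.1.2.2 : ℕ) + 1),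
    E2m 3 4 2 ((x.1.1 : ℕ) + 2, (x.1.2.1 : ℕ) + 0, (x.1.2.2 : ℕ) + 0) ^^^ E2m 3 4 2 ((x.1.1 : ℕ) + 0, (x.1.2.1 : ℕ) + 2, (x.1.2.2 : ℕ) + 1),
    E2m 3 4 2 ((x.1.1 : ℕ) + 0, (x.1.2.1 : ℕ) + 4, (x.1.2.2 : ℕ) + 0),
    E2m 3 4 2 ((x.1.1 : ℕ) + 1, (x.1.2.1 : ℕ) + 2, (x.1.2.2 : ℕ) + 0)] x.2
def twtab2 : List ℕ := [262148, 2097184, 128, 256, 1024, 2048, 16384, 131072, 524288, 1048576, 4194304, 8388608]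
def tWm2 : Fin 12 → ℕ := fun j => twtab2.getD (j : ℕ) 0
def tpiv2 : Fin 12 → TIdx 3 4 2 :=
  ![(2, 0, 0), (2, 1, 0), (1, 2, 0), (2, 2, 0), (1, 3, 0), (2, 3, 0), (2, 0, 1), (2, 1, 1), (1, 2, 1), (2, 2, 1), (1, 3, 1), (2, 3, 1)]
def tcombo2 : Fin 12 → List (TIdx 3 4 2 × Fin 4) :=
  ![[(((0, 0, 0), 1))],
    [(((0, 1, 0), 1))],
    [(((0, 0, 0), 3))],
    [(((1, 0, 0), 3))],
    [(((0, 1, 0), 3))],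
    [(((1, 1, 0), 3))],
    [(((0, 0, 1), 1))],
    [(((0, 1, 1), 1))],
    [(((0, 0, 0), 0))],
    [(((1, 0, 0), 0))],
    [(((0, 1, 0), 0))],
    [(((1, 1, 0), 0))]]
lemma thb2 : ∀ x, tv2 x = vec (tVm2 x) := by
  rintro ⟨t, j⟩
  fin_cases j
  · show E2 3 4 2 (((t.1 : ℕ)) + 0, ((t.2.1 : ℕ)) + 0, ((t.2.2 : ℕ)) + 2)
      + E2 3 4 2 (((t.1 : ℕ)) + 3, ((t.2.1 : ℕ)) + 0, ((t.2.2 : ℕ)) + 0)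
      + E2 3 4 2 (((t.1 : ℕ)) + 0, ((t.2.1 : ℕ)) + 5, ((t.2.2 : ℕ)) + 0)
      + E2 3 4 2 (((t.1 : ℕ)) + 1, ((t.2.1 : ℕ)) + 2, ((t.2.2 : ℕ)) + 1) = _
    rw [E2_eq_vec, E2_eq_vec, E2_eq_vec, E2_eq_vec, vec_add, vec_add, vec_add]
    rfl
  · show E2 3 4 2 (((t.1 : ℕ)) + 2, ((t.2.1 : ℕ)) + 0, ((t.2.2 : ℕ)) + 0)
      + E2 3 4 2 (((t.1 : ℕ)) + 0, ((t.2.1 : ℕ)) + 2, ((t.2.2 : ℕ)) + 1) = _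
    rw [E2_eq_vec, E2_eq_vec, vec_add]
    rfl
  · show E2 3 4 2 (((t.1 : ℕ)) + 0, ((t.2.1 : ℕ)) + 4, ((t.2.2 : ℕ)) + 0) = _
    rw [E2_eq_vec]
    rfl
  · show E2 3 4 2 (((t.1 : ℕ)) + 1, ((t.2.1 : ℕ)) + 2, ((t.2.2 : ℕ)) + 0) = _
    rw [E2_eq_vec]
    rfl
noncomputable def tgv2 (k : Type*) [Field k] : Fin 4 → MvPolynomial (Fin 3) k :=
  ![X 2^2 + X 0^3 + X 1^5 + X 0*X 1^2*X 2, X 0^2 + X 1^2*X 2, X 1^4, X 0*X 1^2]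
lemma thv2 {k : Type*} [Field k] [CharP k 2] :
    ∀ x : TIdx 3 4 2 × Fin 4, Tphi k 3 4 2 (monomial (tf x.1) 1 * tgv2 k x.2) = rhat k (tv2 x) := by
  rintro ⟨t, j⟩
  fin_cases j
  · show Tphi k 3 4 2 (monomial (tf t) 1 * (X 2^2 + X 0^3 + X 1^5 + X 0*X 1^2*X 2 : MvPolynomial (Fin 3) k)) = rhat k (tv2 (t, 0))
    have hg : (X 2^2 + X 0^3 + X 1^5 + X 0*X 1^2*X 2 : MvPolynomial (Fin 3) k) = monomial (sh 0 0 2) 1 + monomial (sh 3 0 0) 1 + monomial (sh 0 5 0) 1 + monomial (sh 1 2 1) 1 := by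
      rw [← X_prod_eq (k := k) 0 0 2, ← X_prod_eq (k := k) 3 0 0, ← X_prod_eq (k := k) 0 5 0, ← X_prod_eq (k := k) 1 2 1]
      ring
    rw [hg, mul_add, mul_add, mul_add, map_add, map_add, map_add, Tphi_shift, Tphi_shift, Tphi_shift, Tphi_shift, rhat_add, rhat_add, rhat_add]
    rfl
  · show Tphi k 3 4 2 (monomial (tf t) 1 * (X 0^2 + X 1^2*X 2 : MvPolynomial (Fin 3) k)) = rhat k (tv2 (t, 1))
    have hg : (X 0^2 + X 1^2*X 2 : MvPolynomial (Fin 3) k) = monomial (sh 2 0 0) 1 + monomial (sh 0 2 1) 1 := by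
      rw [← X_prod_eq (k := k) 2 0 0, ← X_prod_eq (k := k) 0 2 1]
      ring
    rw [hg, mul_add, map_add, Tphi_shift, Tphi_shift, rhat_add]
    rfl
  · show Tphi k 3 4 2 (monomial (tf t) 1 * (X 1^4 : MvPolynomial (Fin 3) k)) = rhat k (tv2 (t, 2))
    have hg : (X 1^4 : MvPolynomial (Fin 3) k) = monomial (sh 0 4 0) 1 := by
      rw [← X_prod_eq (k := k) 0 4 0]
      ring
    rw [hg, Tphi_shift]
    rfl
  · show Tphi k 3 4 2 (monomial (tf t) 1 * (X 0*X 1^2 : MvPolynomial (Fin 3) k)) = rhat k (tv2 (t, 3))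
    have hg : (X 0*X 1^2 : MvPolynomial (Fin 3) k) = monomial (sh 1 2 0) 1 := by
      rw [← X_prod_eq (k := k) 1 2 0]
      ring
    rw [hg, Tphi_shift]
    rfl
def tv3 : TIdx 2 3 2 × Fin 4 → TIdx 2 3 2 → ZMod 2 := fun x =>
  ![    E2 2 3 2 ((x.1.1 : ℕ) + 0, (x.1.2.1 : ℕ) + 0, (x.1.2.2 : ℕ) + 2)
      + E2 2 3 2 ((x.1.1 : ℕ) + 3, (x.1.2.1 : ℕ) + 0, (x.1.2.2 : ℕ) + 0)
      + E2 2 3 2 ((x.1.1 : ℕ) + 0, (x.1.2.1 : ℕ) + 5, (x.1.2.2 : ℕ) + 0)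
      + E2 2 3 2 ((x.1.1 : ℕ) + 0, (x.1.2.1 : ℕ) + 3, (x.1.2.2 : ℕ) + 1),
    E2 2 3 2 ((x.1.1 : ℕ) + 2, (x.1.2.1 : ℕ) + 0, (x.1.2.2 : ℕ) + 0),
    E2 2 3 2 ((x.1.1 : ℕ) + 0, (x.1.2.1 : ℕ) + 4, (x.1.2.2 : ℕ) + 0)
      + E2 2 3 2 ((x.1.1 : ℕ) + 0, (x.1.2.1 : ℕ) + 2, (x.1.2.2 : ℕ) + 1),
    E2 2 3 2 ((x.1.1 : ℕ) + 0, (x.1.2.1 : ℕ) + 3, (x.1.2.2 : ℕ) + 0)] x.2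
def tVm3 : TIdx 2 3 2 × Fin 4 → ℕ := fun x =>
  ![    E2m 2 3 2 ((x.1.1 : ℕ) + 0, (x.1.2.1 : ℕ) + 0, (x.1.2.2 : ℕ) + 2) ^^^ E2m 2 3 2 ((x.1.1 : ℕ) + 3, (x.1.2.1 : ℕ) + 0, (x.1.2.2 : ℕ) + 0) ^^^ E2m 2 3 2 ((x.1.1 : ℕ) + 0, (x.1.2.1 : ℕ) + 5, (x.1.2.2 : ℕ) + 0) ^^^ E2m 2 3 2 ((x.1.1 : ℕ) + 0, (x.1.2.1 : ℕ) + 3, (x.1.2.2 : ℕ) + 1),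
    E2m 2 3 2 ((x.1.1 : ℕ) + 2, (x.1.2.1 : ℕ) + 0, (x.1.2.2 : ℕ) + 0),
    E2m 2 3 2 ((x.1.1 : ℕ) + 0, (x.1.2.1 : ℕ) + 4, (x.1.2.2 : ℕ) + 0) ^^^ E2m 2 3 2 ((x.1.1 : ℕ) + 0, (x.1.2.1 : ℕ) + 2, (x.1.2.2 : ℕ) + 1),
    E2m 2 3 2 ((x.1.1 : ℕ) + 0, (x.1.2.1 : ℕ) + 3, (x.1.2.2 : ℕ) + 0)] x.2
def twtab3 : List ℕ := [1024, 2048]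
def tWm3 : Fin 2 → ℕ := fun j => twtab3.getD (j : ℕ) 0
def tpiv3 : Fin 2 → TIdx 2 3 2 :=
  ![(0, 2, 1), (1, 2, 1)]
def tcombo3 : Fin 2 → List (TIdx 2 3 2 × Fin 4) :=
  ![[(((0, 0, 0), 2))],
    [(((1, 0, 0), 2))]]
lemma thb3 : ∀ x, tv3 x = vec (tVm3 x) := by
  rintro ⟨t, j⟩
  fin_cases j
  · show E2 2 3 2 (((t.1 : ℕ)) + 0, ((t.2.1 : ℕ)) + 0, ((t.2.2 : ℕ)) + 2)
      + E2 2 3 2 (((t.1 : ℕ)) + 3, ((t.2.1 : ℕ)) + 0, ((t.2.2 : ℕ)) + 0)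
      + E2 2 3 2 (((t.1 : ℕ)) + 0, ((t.2.1 : ℕ)) + 5, ((t.2.2 : ℕ)) + 0)
      + E2 2 3 2 (((t.1 : ℕ)) + 0, ((t.2.1 : ℕ)) + 3, ((t.2.2 : ℕ)) + 1) = _
    rw [E2_eq_vec, E2_eq_vec, E2_eq_vec, E2_eq_vec, vec_add, vec_add, vec_add]
    rfl
  · show E2 2 3 2 (((t.1 : ℕ)) + 2, ((t.2.1 : ℕ)) + 0, ((t.2.2 : ℕ)) + 0) = _
    rw [E2_eq_vec]
    rfl
  · show E2 2 3 2 (((t.1 : ℕ)) + 0, ((t.2.1 : ℕ)) + 4, ((t.2.2 : ℕ)) + 0)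
      + E2 2 3 2 (((t.1 : ℕ)) + 0, ((t.2.1 : ℕ)) + 2, ((t.2.2 : ℕ)) + 1) = _
    rw [E2_eq_vec, E2_eq_vec, vec_add]
    rfl
  · show E2 2 3 2 (((t.1 : ℕ)) + 0, ((t.2.1 : ℕ)) + 3, ((t.2.2 : ℕ)) + 0) = _
    rw [E2_eq_vec]
    rfl
noncomputable def tgv3 (k : Type*) [Field k] : Fin 4 → MvPolynomial (Fin 3) k :=
  ![X 2^2 + X 0^3 + X 1^5 + X 1^3*X 2, X 0^2, X 1^4 + X 1^2*X 2, X 1^3]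
lemma thv3 {k : Type*} [Field k] [CharP k 2] :
    ∀ x : TIdx 2 3 2 × Fin 4, Tphi k 2 3 2 (monomial (tf x.1) 1 * tgv3 k x.2) = rhat k (tv3 x) := by
  rintro ⟨t, j⟩
  fin_cases j
  · show Tphi k 2 3 2 (monomial (tf t) 1 * (X 2^2 + X 0^3 + X 1^5 + X 1^3*X 2 : MvPolynomial (Fin 3) k)) = rhat k (tv3 (t, 0))
    have hg : (X 2^2 + X 0^3 + X 1^5 + X 1^3*X 2 : MvPolynomial (Fin 3) k) = monomial (sh 0 0 2) 1 + monomial (sh 3 0 0) 1 + monomial (sh 0 5 0) 1 + monomial (sh 0 3 1) 1 := by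
      rw [← X_prod_eq (k := k) 0 0 2, ← X_prod_eq (k := k) 3 0 0, ← X_prod_eq (k := k) 0 5 0, ← X_prod_eq (k := k) 0 3 1]
      ring
    rw [hg, mul_add, mul_add, mul_add, map_add, map_add, map_add, Tphi_shift, Tphi_shift, Tphi_shift, Tphi_shift, rhat_add, rhat_add, rhat_add]
    rfl
  · show Tphi k 2 3 2 (monomial (tf t) 1 * (X 0^2 : MvPolynomial (Fin 3) k)) = rhat k (tv3 (t, 1))
    have hg : (X 0^2 : MvPolynomial (Fin 3) k) = monomial (sh 2 0 0) 1 := by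
      rw [← X_prod_eq (k := k) 2 0 0]
      ring
    rw [hg, Tphi_shift]
    rfl
  · show Tphi k 2 3 2 (monomial (tf t) 1 * (X 1^4 + X 1^2*X 2 : MvPolynomial (Fin 3) k)) = rhat k (tv3 (t, 2))
    have hg : (X 1^4 + X 1^2*X 2 : MvPolynomial (Fin 3) k) = monomial (sh 0 4 0) 1 + monomial (sh 0 2 1) 1 := by
      rw [← X_prod_eq (k := k) 0 4 0, ← X_prod_eq (k := k) 0 2 1]
      ring
    rw [hg, mul_add, map_add, Tphi_shift, Tphi_shift, rhat_add]
    rfl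
  · show Tphi k 2 3 2 (monomial (tf t) 1 * (X 1^3 : MvPolynomial (Fin 3) k)) = rhat k (tv3 (t, 3))
    have hg : (X 1^3 : MvPolynomial (Fin 3) k) = monomial (sh 0 3 0) 1 := by
      rw [← X_prod_eq (k := k) 0 3 0]
      ring
    rw [hg, Tphi_shift]
    rfl
def tv4 : TIdx 3 5 2 × Fin 4 → TIdx 3 5 2 → ZMod 2 := fun x =>
  ![    E2 3 5 2 ((x.1.1 : ℕ) + 0, (x.1.2.1 : ℕ) + 0, (x.1.2.2 : ℕ) + 2)
      + E2 3 5 2 ((x.1.1 : ℕ) + 3, (x.1.2.1 : ℕ) + 0, (x.1.2.2 : ℕ) + 0)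
      + E2 3 5 2 ((x.1.1 : ℕ) + 0, (x.1.2.1 : ℕ) + 5, (x.1.2.2 : ℕ) + 0)
      + E2 3 5 2 ((x.1.1 : ℕ) + 1, (x.1.2.1 : ℕ) + 1, (x.1.2.2 : ℕ) + 1),
    E2 3 5 2 ((x.1.1 : ℕ) + 2, (x.1.2.1 : ℕ) + 0, (x.1.2.2 : ℕ) + 0)
      + E2 3 5 2 ((x.1.1 : ℕ) + 0, (x.1.2.1 : ℕ) + 1, (x.1.2.2 : ℕ) + 1),
    E2 3 5 2 ((x.1.1 : ℕ) + 0, (x.1.2.1 : ℕ) + 4, (x.1.2.2 : ℕ) + 0)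
      + E2 3 5 2 ((x.1.1 : ℕ) + 1, (x.1.2.1 : ℕ) + 0, (x.1.2.2 : ℕ) + 1),
    E2 3 5 2 ((x.1.1 : ℕ) + 1, (x.1.2.1 : ℕ) + 1, (x.1.2.2 : ℕ) + 0)] x.2
def tVm4 : TIdx 3 5 2 × Fin 4 → ℕ := fun x =>
  ![    E2m 3 5 2 ((x.1.1 : ℕ) + 0, (x.1.2.1 : ℕ) + 0, (x.1.2.2 : ℕ) + 2) ^^^ E2m 3 5 2 ((x.1.1 : ℕ) + 3, (x.1.2.1 : ℕ) + 0, (x.1.2.2 : ℕ) + 0) ^^^ E2m 3 5 2 ((x.1.1 : ℕ) + 0, (x.1.2.1 : ℕ) + 5, (x.1.2.2 : ℕ) + 0) ^^^ E2m 3 5 2 ((x.1.1 : ℕ) + 1, (x.1.2.1 : ℕ) + 1, (x.1.2.2 : ℕ) + 1),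
    E2m 3 5 2 ((x.1.1 : ℕ) + 2, (x.1.2.1 : ℕ) + 0, (x.1.2.2 : ℕ) + 0) ^^^ E2m 3 5 2 ((x.1.1 : ℕ) + 0, (x.1.2.1 : ℕ) + 1, (x.1.2.2 : ℕ) + 1),
    E2m 3 5 2 ((x.1.1 : ℕ) + 0, (x.1.2.1 : ℕ) + 4, (x.1.2.2 : ℕ) + 0) ^^^ E2m 3 5 2 ((x.1.1 : ℕ) + 1, (x.1.2.1 : ℕ) + 0, (x.1.2.2 : ℕ) + 1),
    E2m 3 5 2 ((x.1.1 : ℕ) + 1, (x.1.2.1 : ℕ) + 1, (x.1.2.2 : ℕ) + 0)] x.2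
def twtab4 : List ℕ := [262148, 16, 32, 128, 256, 1024, 2048, 69632, 8192, 16384, 131072, 524288, 1048576, 2097152, 4194304, 8388608, 16777216, 33554432, 67108864, 134217728, 268435456, 536870912]
def tWm4 : Fin 22 → ℕ := fun j => twtab4.getD (j : ℕ) 0
def tpiv4 : Fin 22 → TIdx 3 5 2 :=
  ![(2, 0, 0), (1, 1, 0), (2, 1, 0), (1, 2, 0), (2, 2, 0), (1, 3, 0), (2, 3, 0), (0, 4, 0), (1, 4, 0), (2, 4, 0), (2, 0, 1), (1, 1, 1), (2, 1, 1), (0, 2, 1), (1, 2, 1), (2, 2, 1), (0, 3, 1), (1, 3, 1), (2, 3, 1), (0, 4, 1), (1, 4, 1), (2, 4, 1)]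
def tcombo4 : Fin 22 → List (TIdx 3 5 2 × Fin 4) :=
  ![[(((0, 0, 0), 1))],
    [(((0, 0, 0), 3))],
    [(((1, 0, 0), 3))],
    [(((0, 1, 0), 3))],
    [(((1, 1, 0), 3))],
    [(((0, 2, 0), 3))],
    [(((1, 2, 0), 3))],
    [(((0, 0, 0), 2))],
    [(((0, 3, 0), 3))],
    [(((2, 0, 0), 2))],
    [(((1, 0, 0), 2)), (((0, 3, 0), 3))],
    [(((0, 0, 0), 0))],
    [(((1, 0, 0), 0))],
    [(((1, 0, 0), 3)), (((0, 1, 0), 1))],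
    [(((0, 1, 0), 0))],
    [(((1, 1, 0), 0))],
    [(((1, 1, 0), 3)), (((0, 2, 0), 1))],
    [(((0, 2, 0), 0))],
    [(((1, 2, 0), 0))],
    [(((1, 2, 0), 3)), (((0, 3, 0), 1))],
    [(((0, 3, 0), 0))],
    [(((1, 3, 0), 0))]]
lemma thb4 : ∀ x, tv4 x = vec (tVm4 x) := by
  rintro ⟨t, j⟩
  fin_cases j
  · show E2 3 5 2 (((t.1 : ℕ)) + 0, ((t.2.1 : ℕ)) + 0, ((t.2.2 : ℕ)) + 2)
      + E2 3 5 2 (((t.1 : ℕ)) + 3, ((t.2.1 : ℕ)) + 0, ((t.2.2 : ℕ)) + 0)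
      + E2 3 5 2 (((t.1 : ℕ)) + 0, ((t.2.1 : ℕ)) + 5, ((t.2.2 : ℕ)) + 0)
      + E2 3 5 2 (((t.1 : ℕ)) + 1, ((t.2.1 : ℕ)) + 1, ((t.2.2 : ℕ)) + 1) = _
    rw [E2_eq_vec, E2_eq_vec, E2_eq_vec, E2_eq_vec, vec_add, vec_add, vec_add]
    rfl
  · show E2 3 5 2 (((t.1 : ℕ)) + 2, ((t.2.1 : ℕ)) + 0, ((t.2.2 : ℕ)) + 0)
      + E2 3 5 2 (((t.1 : ℕ)) + 0, ((t.2.1 : ℕ)) + 1, ((t.2.2 : ℕ)) + 1) = _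
    rw [E2_eq_vec, E2_eq_vec, vec_add]
    rfl
  · show E2 3 5 2 (((t.1 : ℕ)) + 0, ((t.2.1 : ℕ)) + 4, ((t.2.2 : ℕ)) + 0)
      + E2 3 5 2 (((t.1 : ℕ)) + 1, ((t.2.1 : ℕ)) + 0, ((t.2.2 : ℕ)) + 1) = _
    rw [E2_eq_vec, E2_eq_vec, vec_add]
    rfl
  · show E2 3 5 2 (((t.1 : ℕ)) + 1, ((t.2.1 : ℕ)) + 1, ((t.2.2 : ℕ)) + 0) = _
    rw [E2_eq_vec]
    rfl
noncomputable def tgv4 (k : Type*) [Field k] : Fin 4 → MvPolynomial (Fin 3) k :=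
  ![X 2^2 + X 0^3 + X 1^5 + X 0*X 1*X 2, X 0^2 + X 1*X 2, X 1^4 + X 0*X 2, X 0*X 1]
lemma thv4 {k : Type*} [Field k] [CharP k 2] :
    ∀ x : TIdx 3 5 2 × Fin 4, Tphi k 3 5 2 (monomial (tf x.1) 1 * tgv4 k x.2) = rhat k (tv4 x) := by
  rintro ⟨t, j⟩
  fin_cases j
  · show Tphi k 3 5 2 (monomial (tf t) 1 * (X 2^2 + X 0^3 + X 1^5 + X 0*X 1*X 2 : MvPolynomial (Fin 3) k)) = rhat k (tv4 (t, 0))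
    have hg : (X 2^2 + X 0^3 + X 1^5 + X 0*X 1*X 2 : MvPolynomial (Fin 3) k) = monomial (sh 0 0 2) 1 + monomial (sh 3 0 0) 1 + monomial (sh 0 5 0) 1 + monomial (sh 1 1 1) 1 := by
      rw [← X_prod_eq (k := k) 0 0 2, ← X_prod_eq (k := k) 3 0 0, ← X_prod_eq (k := k) 0 5 0, ← X_prod_eq (k := k) 1 1 1]
      ring
    rw [hg, mul_add, mul_add, mul_add, map_add, map_add, map_add, Tphi_shift, Tphi_shift, Tphi_shift, Tphi_shift, rhat_add, rhat_add, rhat_add]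
    rfl
  · show Tphi k 3 5 2 (monomial (tf t) 1 * (X 0^2 + X 1*X 2 : MvPolynomial (Fin 3) k)) = rhat k (tv4 (t, 1))
    have hg : (X 0^2 + X 1*X 2 : MvPolynomial (Fin 3) k) = monomial (sh 2 0 0) 1 + monomial (sh 0 1 1) 1 := by
      rw [← X_prod_eq (k := k) 2 0 0, ← X_prod_eq (k := k) 0 1 1]
      ring
    rw [hg, mul_add, map_add, Tphi_shift, Tphi_shift, rhat_add]
    rfl
  · show Tphi k 3 5 2 (monomial (tf t) 1 * (X 1^4 + X 0*X 2 : MvPolynomial (Fin 3) k)) = rhat k (tv4 (t, 2))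
    have hg : (X 1^4 + X 0*X 2 : MvPolynomial (Fin 3) k) = monomial (sh 0 4 0) 1 + monomial (sh 1 0 1) 1 := by
      rw [← X_prod_eq (k := k) 0 4 0, ← X_prod_eq (k := k) 1 0 1]
      ring
    rw [hg, mul_add, map_add, Tphi_shift, Tphi_shift, rhat_add]
    rfl
  · show Tphi k 3 5 2 (monomial (tf t) 1 * (X 0*X 1 : MvPolynomial (Fin 3) k)) = rhat k (tv4 (t, 3))
    have hg : (X 0*X 1 : MvPolynomial (Fin 3) k) = monomial (sh 1 1 0) 1 := by
      rw [← X_prod_eq (k := k) 1 1 0]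
      ring
    rw [hg, Tphi_shift]
    rfl
set_option maxRecDepth 100000 in
set_option maxHeartbeats 1600000 in
theorem tcase0 (k : Type*) [Field k] [CharP k 2] :
    finrank k (MvPolynomial (Fin 3) k ⧸ Ideal.span (Set.range (tgv0 k))) = 16 := by
  have h2R : (2 : MvPolynomial (Fin 3) k) = 0 := by
    have := CharP.cast_eq_zero (MvPolynomial (Fin 3) k) 2
    exact_mod_cast this
  have m0 : tgv0 k 0 ∈ Ideal.span (Set.range (tgv0 k)) := Ideal.subset_span ⟨0, rfl⟩
  have m1 : tgv0 k 1 ∈ Ideal.span (Set.range (tgv0 k)) := Ideal.subset_span ⟨1, rfl⟩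
  have m2 : tgv0 k 2 ∈ Ideal.span (Set.range (tgv0 k)) := Ideal.subset_span ⟨2, rfl⟩
  have m3 : tgv0 k 3 ∈ Ideal.span (Set.range (tgv0 k)) := Ideal.subset_span ⟨3, rfl⟩
  have hx : (X 0 ^ 2 : MvPolynomial (Fin 3) k) ∈ Ideal.span (Set.range (tgv0 k)) := by
    exact Ideal.subset_span ⟨1, rfl⟩
  have hy : (X 1 ^ 4 : MvPolynomial (Fin 3) k) ∈ Ideal.span (Set.range (tgv0 k)) := by
    exact Ideal.subset_span ⟨2, rfl⟩
  have hz : (X 2 ^ 2 : MvPolynomial (Fin 3) k) ∈ Ideal.span (Set.range (tgv0 k)) := by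
    have hc : (X 2 ^ 2 : MvPolynomial (Fin 3) k) = tgv0 k 0 + X 0 * tgv0 k 1 + X 1 * tgv0 k 2 := by
      show (X 2 ^ 2 : MvPolynomial (Fin 3) k) = (X 2^2 + X 0^3 + X 1^5) + X 0 * (X 0^2) + X 1 * (X 1^4)
      linear_combination (-(X 0^3 + X 1^5) : MvPolynomial (Fin 3) k) * h2R
    rw [hc]
    exact add_mem (add_mem (m0) (Ideal.mul_mem_left _ _ m1)) (Ideal.mul_mem_left _ _ m2)
  have h := tjurina_case' (k := k) 2 4 2 0 (by norm_num) (by norm_num) (by norm_num)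
    (tgv0 k) hx hy hz tv0 thv0 tVm0 tWm0 tpiv0 tcombo0 thb0
    (by decide) (by decide) (by decide)
  norm_num at h
  exact h

set_option maxRecDepth 100000 in
set_option maxHeartbeats 1600000 in
theorem tcase1 (k : Type*) [Field k] [CharP k 2] :
    finrank k (MvPolynomial (Fin 3) k ⧸ Ideal.span (Set.range (tgv1 k))) = 14 := by
  have h2R : (2 : MvPolynomial (Fin 3) k) = 0 := by
    have := CharP.cast_eq_zero (MvPolynomial (Fin 3) k) 2
    exact_mod_cast this
  have m0 : tgv1 k 0 ∈ Ideal.span (Set.range (tgv1 k)) := Ideal.subset_span ⟨0, rfl⟩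
  have m1 : tgv1 k 1 ∈ Ideal.span (Set.range (tgv1 k)) := Ideal.subset_span ⟨1, rfl⟩
  have m2 : tgv1 k 2 ∈ Ideal.span (Set.range (tgv1 k)) := Ideal.subset_span ⟨2, rfl⟩
  have m3 : tgv1 k 3 ∈ Ideal.span (Set.range (tgv1 k)) := Ideal.subset_span ⟨3, rfl⟩
  have hx : (X 0 ^ 3 : MvPolynomial (Fin 3) k) ∈ Ideal.span (Set.range (tgv1 k)) := by
    have hc : (X 0 ^ 3 : MvPolynomial (Fin 3) k) = X 0 * tgv1 k 1 + X 2 * tgv1 k 3 := by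
      show (X 0 ^ 3 : MvPolynomial (Fin 3) k) = X 0 * (X 0^2 + X 1^3*X 2) + X 2 * (X 0*X 1^3)
      linear_combination (-(X 0*X 1^3*X 2) : MvPolynomial (Fin 3) k) * h2R
    rw [hc]
    exact add_mem (Ideal.mul_mem_left _ _ m1) (Ideal.mul_mem_left _ _ m3)
  have hy : (X 1 ^ 5 : MvPolynomial (Fin 3) k) ∈ Ideal.span (Set.range (tgv1 k)) := by
    have hc : (X 1 ^ 5 : MvPolynomial (Fin 3) k) = X 1 * tgv1 k 2 + X 2 * tgv1 k 3 := by
      show (X 1 ^ 5 : MvPolynomial (Fin 3) k) = X 1 * (X 1^4 + X 0*X 1^2*X 2) + X 2 * (X 0*X 1^3)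
      linear_combination (-(X 0*X 1^3*X 2) : MvPolynomial (Fin 3) k) * h2R
    rw [hc]
    exact add_mem (Ideal.mul_mem_left _ _ m2) (Ideal.mul_mem_left _ _ m3)
  have hz : (X 2 ^ 2 : MvPolynomial (Fin 3) k) ∈ Ideal.span (Set.range (tgv1 k)) := by
    have hc : (X 2 ^ 2 : MvPolynomial (Fin 3) k) = tgv1 k 0 + X 0 * tgv1 k 1 + X 1 * tgv1 k 2 + X 2 * tgv1 k 3 := by
      show (X 2 ^ 2 : MvPolynomial (Fin 3) k) = (X 2^2 + X 0^3 + X 1^5 + X 0*X 1^3*X 2) + X 0 * (X 0^2 + X 1^3*X 2) + X 1 * (X 1^4 + X 0*X 1^2*X 2) + X 2 * (X 0*X 1^3)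
      linear_combination (-(X 0^3 + X 1^5 + 2*X 0*X 1^3*X 2) : MvPolynomial (Fin 3) k) * h2R
    rw [hc]
    exact add_mem (add_mem (add_mem (m0) (Ideal.mul_mem_left _ _ m1)) (Ideal.mul_mem_left _ _ m2)) (Ideal.mul_mem_left _ _ m3)
  have h := tjurina_case' (k := k) 3 5 2 16 (by norm_num) (by norm_num) (by norm_num)
    (tgv1 k) hx hy hz tv1 thv1 tVm1 tWm1 tpiv1 tcombo1 thb1
    (by decide) (by decide) (by decide)
  norm_num at h
  exact h

set_option maxRecDepth 100000 in
set_option maxHeartbeats 1600000 in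
theorem tcase2 (k : Type*) [Field k] [CharP k 2] :
    finrank k (MvPolynomial (Fin 3) k ⧸ Ideal.span (Set.range (tgv2 k))) = 12 := by
  have h2R : (2 : MvPolynomial (Fin 3) k) = 0 := by
    have := CharP.cast_eq_zero (MvPolynomial (Fin 3) k) 2
    exact_mod_cast this
  have m0 : tgv2 k 0 ∈ Ideal.span (Set.range (tgv2 k)) := Ideal.subset_span ⟨0, rfl⟩
  have m1 : tgv2 k 1 ∈ Ideal.span (Set.range (tgv2 k)) := Ideal.subset_span ⟨1, rfl⟩
  have m2 : tgv2 k 2 ∈ Ideal.span (Set.range (tgv2 k)) := Ideal.subset_span ⟨2, rfl⟩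
  have m3 : tgv2 k 3 ∈ Ideal.span (Set.range (tgv2 k)) := Ideal.subset_span ⟨3, rfl⟩
  have hx : (X 0 ^ 3 : MvPolynomial (Fin 3) k) ∈ Ideal.span (Set.range (tgv2 k)) := by
    have hc : (X 0 ^ 3 : MvPolynomial (Fin 3) k) = X 0 * tgv2 k 1 + X 2 * tgv2 k 3 := by
      show (X 0 ^ 3 : MvPolynomial (Fin 3) k) = X 0 * (X 0^2 + X 1^2*X 2) + X 2 * (X 0*X 1^2)
      linear_combination (-(X 0*X 1^2*X 2) : MvPolynomial (Fin 3) k) * h2R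
    rw [hc]
    exact add_mem (Ideal.mul_mem_left _ _ m1) (Ideal.mul_mem_left _ _ m3)
  have hy : (X 1 ^ 4 : MvPolynomial (Fin 3) k) ∈ Ideal.span (Set.range (tgv2 k)) := by
    exact Ideal.subset_span ⟨2, rfl⟩
  have hz : (X 2 ^ 2 : MvPolynomial (Fin 3) k) ∈ Ideal.span (Set.range (tgv2 k)) := by
    have hc : (X 2 ^ 2 : MvPolynomial (Fin 3) k) = tgv2 k 0 + X 0 * tgv2 k 1 + X 1 * tgv2 k 2 := by
      show (X 2 ^ 2 : MvPolynomial (Fin 3) k) = (X 2^2 + X 0^3 + X 1^5 + X 0*X 1^2*X 2) + X 0 * (X 0^2 + X 1^2*X 2) + X 1 * (X 1^4)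
      linear_combination (-(X 0^3 + X 1^5 + X 0*X 1^2*X 2) : MvPolynomial (Fin 3) k) * h2R
    rw [hc]
    exact add_mem (add_mem (m0) (Ideal.mul_mem_left _ _ m1)) (Ideal.mul_mem_left _ _ m2)
  have h := tjurina_case' (k := k) 3 4 2 12 (by norm_num) (by norm_num) (by norm_num)
    (tgv2 k) hx hy hz tv2 thv2 tVm2 tWm2 tpiv2 tcombo2 thb2
    (by decide) (by decide) (by decide)
  norm_num at h
  exact h

set_option maxRecDepth 100000 in
set_option maxHeartbeats 1600000 in
theorem tcase3 (k : Type*) [Field k] [CharP k 2] :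
    finrank k (MvPolynomial (Fin 3) k ⧸ Ideal.span (Set.range (tgv3 k))) = 10 := by
  have h2R : (2 : MvPolynomial (Fin 3) k) = 0 := by
    have := CharP.cast_eq_zero (MvPolynomial (Fin 3) k) 2
    exact_mod_cast this
  have m0 : tgv3 k 0 ∈ Ideal.span (Set.range (tgv3 k)) := Ideal.subset_span ⟨0, rfl⟩
  have m1 : tgv3 k 1 ∈ Ideal.span (Set.range (tgv3 k)) := Ideal.subset_span ⟨1, rfl⟩
  have m2 : tgv3 k 2 ∈ Ideal.span (Set.range (tgv3 k)) := Ideal.subset_span ⟨2, rfl⟩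
  have m3 : tgv3 k 3 ∈ Ideal.span (Set.range (tgv3 k)) := Ideal.subset_span ⟨3, rfl⟩
  have hx : (X 0 ^ 2 : MvPolynomial (Fin 3) k) ∈ Ideal.span (Set.range (tgv3 k)) := by
    exact Ideal.subset_span ⟨1, rfl⟩
  have hy : (X 1 ^ 3 : MvPolynomial (Fin 3) k) ∈ Ideal.span (Set.range (tgv3 k)) := by
    exact Ideal.subset_span ⟨3, rfl⟩
  have hz : (X 2 ^ 2 : MvPolynomial (Fin 3) k) ∈ Ideal.span (Set.range (tgv3 k)) := by
    have hc : (X 2 ^ 2 : MvPolynomial (Fin 3) k) = tgv3 k 0 + X 0 * tgv3 k 1 + X 1^2 * tgv3 k 3 + X 2 * tgv3 k 3 := by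
      show (X 2 ^ 2 : MvPolynomial (Fin 3) k) = (X 2^2 + X 0^3 + X 1^5 + X 1^3*X 2) + X 0 * (X 0^2) + X 1^2 * (X 1^3) + X 2 * (X 1^3)
      linear_combination (-(X 0^3 + X 1^5 + X 1^3*X 2) : MvPolynomial (Fin 3) k) * h2R
    rw [hc]
    exact add_mem (add_mem (add_mem (m0) (Ideal.mul_mem_left _ _ m1)) (Ideal.mul_mem_left _ _ m3)) (Ideal.mul_mem_left _ _ m3)
  have h := tjurina_case' (k := k) 2 3 2 2 (by norm_num) (by norm_num) (by norm_num)
    (tgv3 k) hx hy hz tv3 thv3 tVm3 tWm3 tpiv3 tcombo3 thb3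
    (by decide) (by decide) (by decide)
  norm_num at h
  exact h

set_option maxRecDepth 100000 in
set_option maxHeartbeats 1600000 in
theorem tcase4 (k : Type*) [Field k] [CharP k 2] :
    finrank k (MvPolynomial (Fin 3) k ⧸ Ideal.span (Set.range (tgv4 k))) = 8 := by
  have h2R : (2 : MvPolynomial (Fin 3) k) = 0 := by
    have := CharP.cast_eq_zero (MvPolynomial (Fin 3) k) 2
    exact_mod_cast this
  have m0 : tgv4 k 0 ∈ Ideal.span (Set.range (tgv4 k)) := Ideal.subset_span ⟨0, rfl⟩
  have m1 : tgv4 k 1 ∈ Ideal.span (Set.range (tgv4 k)) := Ideal.subset_span ⟨1, rfl⟩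
  have m2 : tgv4 k 2 ∈ Ideal.span (Set.range (tgv4 k)) := Ideal.subset_span ⟨2, rfl⟩
  have m3 : tgv4 k 3 ∈ Ideal.span (Set.range (tgv4 k)) := Ideal.subset_span ⟨3, rfl⟩
  have hx : (X 0 ^ 3 : MvPolynomial (Fin 3) k) ∈ Ideal.span (Set.range (tgv4 k)) := by
    have hc : (X 0 ^ 3 : MvPolynomial (Fin 3) k) = X 0 * tgv4 k 1 + X 2 * tgv4 k 3 := by
      show (X 0 ^ 3 : MvPolynomial (Fin 3) k) = X 0 * (X 0^2 + X 1*X 2) + X 2 * (X 0*X 1)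
      linear_combination (-(X 0*X 1*X 2) : MvPolynomial (Fin 3) k) * h2R
    rw [hc]
    exact add_mem (Ideal.mul_mem_left _ _ m1) (Ideal.mul_mem_left _ _ m3)
  have hy : (X 1 ^ 5 : MvPolynomial (Fin 3) k) ∈ Ideal.span (Set.range (tgv4 k)) := by
    have hc : (X 1 ^ 5 : MvPolynomial (Fin 3) k) = X 1 * tgv4 k 2 + X 2 * tgv4 k 3 := by
      show (X 1 ^ 5 : MvPolynomial (Fin 3) k) = X 1 * (X 1^4 + X 0*X 2) + X 2 * (X 0*X 1)
      linear_combination (-(X 0*X 1*X 2) : MvPolynomial (Fin 3) k) * h2R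
    rw [hc]
    exact add_mem (Ideal.mul_mem_left _ _ m2) (Ideal.mul_mem_left _ _ m3)
  have hz : (X 2 ^ 2 : MvPolynomial (Fin 3) k) ∈ Ideal.span (Set.range (tgv4 k)) := by
    have hc : (X 2 ^ 2 : MvPolynomial (Fin 3) k) = tgv4 k 0 + X 0 * tgv4 k 1 + X 1 * tgv4 k 2 + X 2 * tgv4 k 3 := by
      show (X 2 ^ 2 : MvPolynomial (Fin 3) k) = (X 2^2 + X 0^3 + X 1^5 + X 0*X 1*X 2) + X 0 * (X 0^2 + X 1*X 2) + X 1 * (X 1^4 + X 0*X 2) + X 2 * (X 0*X 1)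
      linear_combination (-(X 0^3 + X 1^5 + 2*X 0*X 1*X 2) : MvPolynomial (Fin 3) k) * h2R
    rw [hc]
    exact add_mem (add_mem (add_mem (m0) (Ideal.mul_mem_left _ _ m1)) (Ideal.mul_mem_left _ _ m2)) (Ideal.mul_mem_left _ _ m3)
  have h := tjurina_case' (k := k) 3 5 2 22 (by norm_num) (by norm_num) (by norm_num)
    (tgv4 k) hx hy hz tv4 thv4 tVm4 tWm4 tpiv4 tcombo4 thb4
    (by decide) (by decide) (by decide)
  norm_num at h
  exact h

end

set_option maxHeartbeats 1600000 in
/-- In characteristic 2, the Tjurina algebras of the five `E_8` rational double points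
`E_8^0, ..., E_8^4` have dimensions 16, 14, 12, 10 and 8.
Variables: `X 0 = x`, `X 1 = y`, `X 2 = z`. -/
theorem tjurina_E8_char2 (k : Type*) [Field k] [CharP k 2]
    (f₀ f₁ f₂ f₃ f₄ : MvPolynomial (Fin 3) k)
    (hf₀ : f₀ = X 2 ^ 2 + X 0 ^ 3 + X 1 ^ 5)
    (hf₁ : f₁ = X 2 ^ 2 + X 0 ^ 3 + X 1 ^ 5 + X 0 * X 1 ^ 3 * X 2)
    (hf₂ : f₂ = X 2 ^ 2 + X 0 ^ 3 + X 1 ^ 5 + X 0 * X 1 ^ 2 * X 2)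
    (hf₃ : f₃ = X 2 ^ 2 + X 0 ^ 3 + X 1 ^ 5 + X 1 ^ 3 * X 2)
    (hf₄ : f₄ = X 2 ^ 2 + X 0 ^ 3 + X 1 ^ 5 + X 0 * X 1 * X 2) :
    Module.finrank k
      (MvPolynomial (Fin 3) k ⧸
        (Ideal.span {f₀, pderiv 0 f₀, pderiv 1 f₀, pderiv 2 f₀} :
          Ideal (MvPolynomial (Fin 3) k))) = 16 ∧
    Module.finrank k
      (MvPolynomial (Fin 3) k ⧸
        (Ideal.span {f₁, pderiv 0 f₁, pderiv 1 f₁, pderiv 2 f₁} :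
          Ideal (MvPolynomial (Fin 3) k))) = 14 ∧
    Module.finrank k
      (MvPolynomial (Fin 3) k ⧸
        (Ideal.span {f₂, pderiv 0 f₂, pderiv 1 f₂, pderiv 2 f₂} :
          Ideal (MvPolynomial (Fin 3) k))) = 12 ∧
    Module.finrank k
      (MvPolynomial (Fin 3) k ⧸
        (Ideal.span {f₃, pderiv 0 f₃, pderiv 1 f₃, pderiv 2 f₃} :
          Ideal (MvPolynomial (Fin 3) k))) = 10 ∧
    Module.finrank k
      (MvPolynomial (Fin 3) k ⧸
        (Ideal.span {f₄, pderiv 0 f₄, pderiv 1 f₄, pderiv 2 f₄} :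
          Ideal (MvPolynomial (Fin 3) k))) = 8 := by
  have h2R : (2 : MvPolynomial (Fin 3) k) = 0 := by
    have := CharP.cast_eq_zero (MvPolynomial (Fin 3) k) 2
    exact_mod_cast this
  refine ⟨?_, ?_, ?_, ?_, ?_⟩
  · subst hf₀
    have hd0 : pderiv (0 : Fin 3) (X 2 ^ 2 + X 0 ^ 3 + X 1 ^ 5 : MvPolynomial (Fin 3) k)
        = X 0^2 := by
      simp [pderiv_X_self, pderiv_X_of_ne]
      first
      | rfl
      | linear_combination h2R
      | linear_combination (2 : MvPolynomial (Fin 3) k) * h2R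
      | linear_combination (X 0^2 : MvPolynomial (Fin 3) k) * h2R
      | ring
    have hd1 : pderiv (1 : Fin 3) (X 2 ^ 2 + X 0 ^ 3 + X 1 ^ 5 : MvPolynomial (Fin 3) k)
        = X 1^4 := by
      simp [pderiv_X_self, pderiv_X_of_ne]
      first
      | rfl
      | linear_combination h2R
      | linear_combination (2 : MvPolynomial (Fin 3) k) * h2R
      | linear_combination (2*X 1^4 : MvPolynomial (Fin 3) k) * h2R
      | ring
    have hd2 : pderiv (2 : Fin 3) (X 2 ^ 2 + X 0 ^ 3 + X 1 ^ 5 : MvPolynomial (Fin 3) k)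
        = 0 := by
      simp [pderiv_X_self, pderiv_X_of_ne]
      first
      | rfl
      | linear_combination h2R
      | linear_combination (2 : MvPolynomial (Fin 3) k) * h2R
      | linear_combination (X 2 : MvPolynomial (Fin 3) k) * h2R
      | ring
    rw [hd0, hd1, hd2, ← range_fin4]
    exact tcase0 k
  · subst hf₁
    have hd0 : pderiv (0 : Fin 3) (X 2 ^ 2 + X 0 ^ 3 + X 1 ^ 5 + X 0 * X 1 ^ 3 * X 2 : MvPolynomial (Fin 3) k)
        = X 0^2 + X 1^3*X 2 := by
      simp [pderiv_X_self, pderiv_X_of_ne]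
      first
      | rfl
      | linear_combination h2R
      | linear_combination (2 : MvPolynomial (Fin 3) k) * h2R
      | linear_combination (X 0^2 : MvPolynomial (Fin 3) k) * h2R
      | ring
    have hd1 : pderiv (1 : Fin 3) (X 2 ^ 2 + X 0 ^ 3 + X 1 ^ 5 + X 0 * X 1 ^ 3 * X 2 : MvPolynomial (Fin 3) k)
        = X 1^4 + X 0*X 1^2*X 2 := by
      simp [pderiv_X_self, pderiv_X_of_ne]
      first
      | rfl
      | linear_combination h2R
      | linear_combination (2 : MvPolynomial (Fin 3) k) * h2R
      | linear_combination (2*X 1^4 + X 0*X 1^2*X 2 : MvPolynomial (Fin 3) k) * h2R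
      | ring
    have hd2 : pderiv (2 : Fin 3) (X 2 ^ 2 + X 0 ^ 3 + X 1 ^ 5 + X 0 * X 1 ^ 3 * X 2 : MvPolynomial (Fin 3) k)
        = X 0*X 1^3 := by
      simp [pderiv_X_self, pderiv_X_of_ne]
      first
      | rfl
      | linear_combination h2R
      | linear_combination (2 : MvPolynomial (Fin 3) k) * h2R
      | linear_combination (X 2 : MvPolynomial (Fin 3) k) * h2R
      | ring
    rw [hd0, hd1, hd2, ← range_fin4]
    exact tcase1 k
  · subst hf₂
    have hd0 : pderiv (0 : Fin 3) (X 2 ^ 2 + X 0 ^ 3 + X 1 ^ 5 + X 0 * X 1 ^ 2 * X 2 : MvPolynomial (Fin 3) k)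
        = X 0^2 + X 1^2*X 2 := by
      simp [pderiv_X_self, pderiv_X_of_ne]
      first
      | rfl
      | linear_combination h2R
      | linear_combination (2 : MvPolynomial (Fin 3) k) * h2R
      | linear_combination (X 0^2 : MvPolynomial (Fin 3) k) * h2R
      | ring
    have hd1 : pderiv (1 : Fin 3) (X 2 ^ 2 + X 0 ^ 3 + X 1 ^ 5 + X 0 * X 1 ^ 2 * X 2 : MvPolynomial (Fin 3) k)
        = X 1^4 := by
      simp [pderiv_X_self, pderiv_X_of_ne]
      first
      | rfl
      | linear_combination h2R
      | linear_combination (2 : MvPolynomial (Fin 3) k) * h2R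
      | linear_combination (2*X 1^4 + X 0*X 1*X 2 : MvPolynomial (Fin 3) k) * h2R
      | ring
    have hd2 : pderiv (2 : Fin 3) (X 2 ^ 2 + X 0 ^ 3 + X 1 ^ 5 + X 0 * X 1 ^ 2 * X 2 : MvPolynomial (Fin 3) k)
        = X 0*X 1^2 := by
      simp [pderiv_X_self, pderiv_X_of_ne]
      first
      | rfl
      | linear_combination h2R
      | linear_combination (2 : MvPolynomial (Fin 3) k) * h2R
      | linear_combination (X 2 : MvPolynomial (Fin 3) k) * h2R
      | ring
    rw [hd0, hd1, hd2, ← range_fin4]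
    exact tcase2 k
  · subst hf₃
    have hd0 : pderiv (0 : Fin 3) (X 2 ^ 2 + X 0 ^ 3 + X 1 ^ 5 + X 1 ^ 3 * X 2 : MvPolynomial (Fin 3) k)
        = X 0^2 := by
      simp [pderiv_X_self, pderiv_X_of_ne]
      first
      | rfl
      | linear_combination h2R
      | linear_combination (2 : MvPolynomial (Fin 3) k) * h2R
      | linear_combination (X 0^2 : MvPolynomial (Fin 3) k) * h2R
      | ring
    have hd1 : pderiv (1 : Fin 3) (X 2 ^ 2 + X 0 ^ 3 + X 1 ^ 5 + X 1 ^ 3 * X 2 : MvPolynomial (Fin 3) k)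
        = X 1^4 + X 1^2*X 2 := by
      simp [pderiv_X_self, pderiv_X_of_ne]
      first
      | rfl
      | linear_combination h2R
      | linear_combination (2 : MvPolynomial (Fin 3) k) * h2R
      | linear_combination (2*X 1^4 + X 1^2*X 2 : MvPolynomial (Fin 3) k) * h2R
      | ring
    have hd2 : pderiv (2 : Fin 3) (X 2 ^ 2 + X 0 ^ 3 + X 1 ^ 5 + X 1 ^ 3 * X 2 : MvPolynomial (Fin 3) k)
        = X 1^3 := by
      simp [pderiv_X_self, pderiv_X_of_ne]
      first
      | rfl
      | linear_combination h2R
      | linear_combination (2 : MvPolynomial (Fin 3) k) * h2R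
      | linear_combination (X 2 : MvPolynomial (Fin 3) k) * h2R
      | ring
    rw [hd0, hd1, hd2, ← range_fin4]
    exact tcase3 k
  · subst hf₄
    have hd0 : pderiv (0 : Fin 3) (X 2 ^ 2 + X 0 ^ 3 + X 1 ^ 5 + X 0 * X 1 * X 2 : MvPolynomial (Fin 3) k)
        = X 0^2 + X 1*X 2 := by
      simp [pderiv_X_self, pderiv_X_of_ne]
      first
      | rfl
      | linear_combination h2R
      | linear_combination (2 : MvPolynomial (Fin 3) k) * h2R
      | linear_combination (X 0^2 : MvPolynomial (Fin 3) k) * h2R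
      | ring
    have hd1 : pderiv (1 : Fin 3) (X 2 ^ 2 + X 0 ^ 3 + X 1 ^ 5 + X 0 * X 1 * X 2 : MvPolynomial (Fin 3) k)
        = X 1^4 + X 0*X 2 := by
      simp [pderiv_X_self, pderiv_X_of_ne]
      first
      | rfl
      | linear_combination h2R
      | linear_combination (2 : MvPolynomial (Fin 3) k) * h2R
      | linear_combination (2*X 1^4 : MvPolynomial (Fin 3) k) * h2R
      | ring
    have hd2 : pderiv (2 : Fin 3) (X 2 ^ 2 + X 0 ^ 3 + X 1 ^ 5 + X 0 * X 1 * X 2 : MvPolynomial (Fin 3) k)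
        = X 0*X 1 := by
      simp [pderiv_X_self, pderiv_X_of_ne]
      first
      | rfl
      | linear_combination h2R
      | linear_combination (2 : MvPolynomial (Fin 3) k) * h2R
      | linear_combination (X 2 : MvPolynomial (Fin 3) k) * h2R
      | ring
    rw [hd0, hd1, hd2, ← range_fin4]
    exact tcase4 k
end
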